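/- arXiv:0802.3807 — 5 statements merged into one kernel-verified Lean document; each statement's English description precedes it below -/
import Mathlib

section
/- Let A be a commutative ring, B a commutative A-algebra, and M an A-module that is finite locally free (finitely generated projective). Then there exists a commutative A-algebra Q together with, for every commutative A-algebra A', a bijection between the set of A-algebra homomorphisms Q → A' and the set of (B ⊗_A A')-algebra structures on the A'-module M ⊗_A A', and these bijections are natural in A'. -/
open TensorProduct

/-- A `(B ⊗[A] A')`-algebra structure on the `A'`-module `A' ⊗[A] M`: a commutative ring
structure (given by an `A'`-bilinear multiplication and a unit, so that the induced
`A'`-module structure is the given one) together with an `A'`-algebra homomorphism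
from `A' ⊗[A] B` (given by an `A'`-linear map which is multiplicative and unital). -/
structure BAlgebraStructure (A : Type) [CommRing A] (B : Type) [CommRing B] [Algebra A B]
    (M : Type) [AddCommGroup M] [Module A M]
    (A' : Type) [CommRing A'] [Algebra A A'] where
  mul : (A' ⊗[A] M) →ₗ[A'] (A' ⊗[A] M) →ₗ[A'] (A' ⊗[A] M)
  one : A' ⊗[A] M
  mul_comm : ∀ x y, mul x y = mul y x
  mul_assoc : ∀ x y z, mul (mul x y) z = mul x (mul y z)
  one_mul : ∀ x, mul one x = x
  algMap : (A' ⊗[A] B) →ₗ[A'] (A' ⊗[A] M)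
  algMap_one : algMap 1 = one
  algMap_mul : ∀ b₁ b₂, algMap (b₁ * b₂) = mul (algMap b₁) (algMap b₂)

/-- The canonical map `A' ⊗[A] M → A'' ⊗[A] M` induced by a homomorphism of
`A`-algebras `A' → A''`. -/
noncomputable def baseChangeM (A : Type) [CommRing A] (M : Type) [AddCommGroup M] [Module A M]
    {A' A'' : Type} [CommRing A'] [Algebra A A'] [CommRing A''] [Algebra A A'']
    (f : A' →ₐ[A] A'') : A' ⊗[A] M →ₗ[A] A'' ⊗[A] M :=
  TensorProduct.map f.toLinearMap LinearMap.id

/-- The canonical map `A' ⊗[A] B → A'' ⊗[A] B` induced by a homomorphism of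
`A`-algebras `A' → A''`. -/
noncomputable def baseChangeB (A : Type) [CommRing A] (B : Type) [CommRing B] [Algebra A B]
    {A' A'' : Type} [CommRing A'] [Algebra A A'] [CommRing A''] [Algebra A A'']
    (f : A' →ₐ[A] A'') : A' ⊗[A] B →ₐ[A] A'' ⊗[A] B :=
  Algebra.TensorProduct.map f (AlgHom.id A B)

/-- The data of a commutative `A`-algebra `Q` which corepresents the functor of
`(B ⊗[A] A')`-algebra structures on `M ⊗[A] A'`, naturally in the commutative
`A`-algebra `A'`.  Naturality says that the bijections are compatible with base change:
the algebra structure corresponding to `f ∘ h` is the base change along `f` of the one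
corresponding to `h` (base change being uniquely determined by the displayed formulas,
since `A'' ⊗[A] M` is generated as an `A''`-module by the image of `A' ⊗[A] M`). -/
structure AlgebraStructureRepresentation (A : Type) [CommRing A]
    (B : Type) [CommRing B] [Algebra A B]
    (M : Type) [AddCommGroup M] [Module A M] where
  Q : Type
  [commRingQ : CommRing Q]
  [algebraQ : Algebra A Q]
  equiv : ∀ (A' : Type) [CommRing A'] [Algebra A A'],
    (Q →ₐ[A] A') ≃ BAlgebraStructure A B M A'
  naturality_one : ∀ (A' A'' : Type) [CommRing A'] [Algebra A A'] [CommRing A'']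
    [Algebra A A''] (f : A' →ₐ[A] A'') (h : Q →ₐ[A] A'),
    (equiv A'' (f.comp h)).one = baseChangeM A M f ((equiv A' h).one)
  naturality_mul : ∀ (A' A'' : Type) [CommRing A'] [Algebra A A'] [CommRing A'']
    [Algebra A A''] (f : A' →ₐ[A] A'') (h : Q →ₐ[A] A') (x y : A' ⊗[A] M),
    (equiv A'' (f.comp h)).mul (baseChangeM A M f x) (baseChangeM A M f y) =
      baseChangeM A M f ((equiv A' h).mul x y)
  naturality_algMap : ∀ (A' A'' : Type) [CommRing A'] [Algebra A A'] [CommRing A'']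
    [Algebra A A''] (f : A' →ₐ[A] A'') (h : Q →ₐ[A] A') (b : A' ⊗[A] B),
    (equiv A'' (f.comp h)).algMap (baseChangeB A B f b) =
      baseChangeM A M f ((equiv A' h).algMap b)

attribute [instance] AlgebraStructureRepresentation.commRingQ
  AlgebraStructureRepresentation.algebraQ

namespace AlgStrRep

variable (A : Type) [CommRing A] (B : Type) [CommRing B] [Algebra A B]
    (M : Type) [AddCommGroup M] [Module A M]

/-- The module of generators for the representing algebra. -/
abbrev W := ((M ⊗[A] M) ⊗[A] (M →ₗ[A] A)) × ((M →ₗ[A] A) × (B ⊗[A] (M →ₗ[A] A)))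

noncomputable def ι₁ : ((M ⊗[A] M) ⊗[A] (M →ₗ[A] A)) →ₗ[A] W A B M :=
  LinearMap.inl A _ _
noncomputable def ι₂ : (M →ₗ[A] A) →ₗ[A] W A B M :=
  (LinearMap.inr A _ _) ∘ₗ (LinearMap.inl A _ _)
noncomputable def ι₃ : (B ⊗[A] (M →ₗ[A] A)) →ₗ[A] W A B M :=
  (LinearMap.inr A _ _) ∘ₗ (LinearMap.inr A _ _)

variable {A B M}
variable {A' : Type} [CommRing A'] [Algebra A A']

noncomputable def gmL (g : W A B M →ₗ[A] A') (x y : M) : (M →ₗ[A] A) →ₗ[A] A' :=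
  g ∘ₗ ι₁ A B M ∘ₗ TensorProduct.mk A _ _ (x ⊗ₜ y)
noncomputable def goL (g : W A B M →ₗ[A] A') : (M →ₗ[A] A) →ₗ[A] A' :=
  g ∘ₗ ι₂ A B M
noncomputable def gaL (g : W A B M →ₗ[A] A') (b : B) : (M →ₗ[A] A) →ₗ[A] A' :=
  g ∘ₗ ι₃ A B M ∘ₗ TensorProduct.mk A _ _ b

lemma gmL_def (g : W A B M →ₗ[A] A') (x y : M) (d : M →ₗ[A] A) :
    gmL g x y d = g (ι₁ A B M ((x ⊗ₜ y) ⊗ₜ d)) := rfl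
lemma goL_def (g : W A B M →ₗ[A] A') (d : M →ₗ[A] A) :
    goL g d = g (ι₂ A B M d) := rfl
lemma gaL_def (g : W A B M →ₗ[A] A') (b : B) (d : M →ₗ[A] A) :
    gaL g b d = g (ι₃ A B M (b ⊗ₜ d)) := rfl

/-- Pairing a dual element against `A' ⊗[A] M`. -/
noncomputable def dApply (d : M →ₗ[A] A) : (A' ⊗[A] M) →ₗ[A'] A' :=
  LinearMap.liftBaseChange A' ((Algebra.linearMap A A') ∘ₗ d)

@[simp] lemma dApply_tmul (d : M →ₗ[A] A) (a : A') (m : M) :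
    dApply d (a ⊗ₜ m) = a * algebraMap A A' (d m) := by
  simp [dApply, Algebra.smul_def]

/-- Extensionality from values on `1 ⊗ₜ m`. -/
lemma ext_oneTmul {N P : Type} [AddCommGroup N] [Module A N] [AddCommMonoid P] [Module A' P]
    {f g : (A' ⊗[A] N) →ₗ[A'] P} (h : ∀ m : N, f (1 ⊗ₜ m) = g (1 ⊗ₜ m)) : f = g := by
  ext t
  induction t using TensorProduct.induction_on with
  | zero => simp
  | tmul a m =>
      have : a ⊗ₜ[A] m = a • ((1:A') ⊗ₜ[A] m) := by
        rw [smul_tmul', smul_eq_mul, mul_one]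
      rw [this, map_smul, map_smul, h]
  | add u v hu hv => rw [map_add, map_add, hu, hv]

section DualBasis

variable {n : ℕ} (e : Fin n → M) (ε : Fin n → (M →ₗ[A] A))

section htot
variable (htot : ∀ m : M, ∑ i, ε i m • e i = m)
include htot

lemma db2 (t : A' ⊗[A] M) : ∑ i, dApply (ε i) t ⊗ₜ[A] e i = t := by
  induction t using TensorProduct.induction_on with
  | zero => simp
  | tmul a m =>
      calc ∑ i, dApply (ε i) (a ⊗ₜ[A] m) ⊗ₜ[A] e i
          = ∑ i, a ⊗ₜ[A] (ε i m • e i) := by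
            refine Finset.sum_congr rfl fun i _ => ?_
            rw [dApply_tmul, tmul_smul, smul_tmul', Algebra.smul_def, mul_comm]
        _ = a ⊗ₜ[A] m := by rw [← tmul_sum, htot]
  | add u v hu hv =>
      simp only [map_add, add_tmul, Finset.sum_add_distrib, hu, hv]

lemma db3 (d : M →ₗ[A] A) : ∑ i, d (e i) • ε i = d := by
  ext m
  simp only [LinearMap.sum_apply, LinearMap.smul_apply, smul_eq_mul]
  calc ∑ i, d (e i) * ε i m = d (∑ i, ε i m • e i) := by
        rw [map_sum]; exact Finset.sum_congr rfl fun i _ => by rw [map_smul, smul_eq_mul, mul_comm]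
    _ = d m := by rw [htot]

lemma sum_dApply_mul (H : (A' ⊗[A] M) →ₗ[A'] A') (t : A' ⊗[A] M) :
    ∑ i, dApply (ε i) t * H (1 ⊗ₜ e i) = H t := by
  calc ∑ i, dApply (ε i) t * H (1 ⊗ₜ e i) = ∑ i, H (dApply (ε i) t ⊗ₜ e i) := by
        refine Finset.sum_congr rfl fun i _ => ?_
        rw [← smul_eq_mul, ← map_smul, smul_tmul', smul_eq_mul, mul_one]
    _ = H t := by rw [← map_sum, db2 e ε htot]

end htot

/-- The tensor-level multiplication associated to `g`. -/
noncomputable def sTens (g : W A B M →ₗ[A] A') : (M ⊗[A] M) →ₗ[A] (A' ⊗[A] M) :=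
  ∑ i, ((TensorProduct.mk A A' M).flip (e i)) ∘ₗ
    (g ∘ₗ ι₁ A B M ∘ₗ (TensorProduct.mk A (M ⊗[A] M) (M →ₗ[A] A)).flip (ε i))

@[simp] lemma sTens_tmul (g : W A B M →ₗ[A] A') (x y : M) :
    sTens e ε g (x ⊗ₜ y) = ∑ i, (gmL g x y (ε i)) ⊗ₜ[A] e i := by
  simp [sTens, gmL]

noncomputable def mulAux (g : W A B M →ₗ[A] A') :
    (A' ⊗[A] M) →ₗ[A'] (A' ⊗[A] M) →ₗ[A'] (A' ⊗[A] M) :=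
  LinearMap.liftBaseChange A'
    (((LinearMap.liftBaseChangeEquiv A').toLinearMap.restrictScalars A) ∘ₗ
      (TensorProduct.curry (sTens e ε g)))

lemma mulAux_tmul (g : W A B M →ₗ[A] A') (a a' : A') (x y : M) :
    mulAux e ε g (a ⊗ₜ x) (a' ⊗ₜ y) = (a * a') • ∑ i, (gmL g x y (ε i)) ⊗ₜ[A] e i := by
  simp [mulAux, mul_smul]

lemma mulAux_one_one (g : W A B M →ₗ[A] A') (x y : M) :
    mulAux e ε g (1 ⊗ₜ x) (1 ⊗ₜ y) = ∑ i, (gmL g x y (ε i)) ⊗ₜ[A] e i := by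
  rw [mulAux_tmul, one_mul, one_smul]

noncomputable def oneAux (g : W A B M →ₗ[A] A') : A' ⊗[A] M :=
  ∑ i, (goL g (ε i)) ⊗ₜ[A] e i

noncomputable def aT (g : W A B M →ₗ[A] A') : B →ₗ[A] (A' ⊗[A] M) :=
  ∑ i, ((TensorProduct.mk A A' M).flip (e i)) ∘ₗ
    (g ∘ₗ ι₃ A B M ∘ₗ (TensorProduct.mk A B (M →ₗ[A] A)).flip (ε i))

noncomputable def algAux (g : W A B M →ₗ[A] A') : (A' ⊗[A] B) →ₗ[A'] (A' ⊗[A] M) :=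
  LinearMap.liftBaseChange A' (aT e ε g)

lemma algAux_tmul (g : W A B M →ₗ[A] A') (a : A') (b : B) :
    algAux e ε g (a ⊗ₜ b) = a • ∑ i, (gaL g b (ε i)) ⊗ₜ[A] e i := by
  simp [algAux, aT, gaL, Finset.smul_sum, smul_tmul']

lemma algAux_one_tmul (g : W A B M →ₗ[A] A') (b : B) :
    algAux e ε g (1 ⊗ₜ b) = ∑ i, (gaL g b (ε i)) ⊗ₜ[A] e i := by
  rw [algAux_tmul, one_smul]

end DualBasis

end AlgStrRep

namespace AlgStrRep

variable {A : Type} [CommRing A] {B : Type} [CommRing B] [Algebra A B]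
    {M : Type} [AddCommGroup M] [Module A M]
variable {A' : Type} [CommRing A'] [Algebra A A']
variable {n : ℕ} (e : Fin n → M) (ε : Fin n → (M →ₗ[A] A))

/-- The conditions on a linear map `g : W → A'` expressing that the associated data
is a `B`-algebra structure. -/
structure Cond (g : W A B M →ₗ[A] A') : Prop where
  comm : ∀ x y : M, ∀ d, gmL g x y d = gmL g y x d
  assoc : ∀ x y z : M, ∀ d, ∑ i, gmL g x y (ε i) * gmL g (e i) z d
    = ∑ i, gmL g y z (ε i) * gmL g x (e i) d
  one : ∀ m : M, ∀ d, ∑ i, goL g (ε i) * gmL g (e i) m d = algebraMap A A' (d m)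
  algone : ∀ d, gaL g 1 d = goL g d
  algmul : ∀ b b' : B, ∀ d, gaL g (b * b') d
    = ∑ i, ∑ j, gaL g b (ε i) * gaL g b' (ε j) * gmL g (e i) (e j) d

lemma mulAux_sum_left (g : W A B M →ₗ[A] A') (c : Fin n → A') (m : M) :
    mulAux e ε g (∑ i, c i ⊗ₜ e i) (1 ⊗ₜ m)
      = ∑ j, (∑ i, c i * gmL g (e i) m (ε j)) ⊗ₜ[A] e j := by
  rw [map_sum, LinearMap.sum_apply]
  calc ∑ i, mulAux e ε g (c i ⊗ₜ e i) (1 ⊗ₜ m)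
      = ∑ i, ∑ j, (c i * gmL g (e i) m (ε j)) ⊗ₜ[A] e j := by
        refine Finset.sum_congr rfl fun i _ => ?_
        rw [mulAux_tmul, mul_one, Finset.smul_sum]
        exact Finset.sum_congr rfl fun j _ => by rw [smul_tmul', smul_eq_mul]
    _ = ∑ j, (∑ i, c i * gmL g (e i) m (ε j)) ⊗ₜ[A] e j := by
        rw [Finset.sum_comm]
        exact Finset.sum_congr rfl fun j _ => by rw [sum_tmul]

lemma mulAux_sum_right (g : W A B M →ₗ[A] A') (c : Fin n → A') (m : M) :
    mulAux e ε g (1 ⊗ₜ m) (∑ i, c i ⊗ₜ e i)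
      = ∑ j, (∑ i, c i * gmL g m (e i) (ε j)) ⊗ₜ[A] e j := by
  rw [map_sum]
  calc ∑ i, mulAux e ε g (1 ⊗ₜ m) (c i ⊗ₜ e i)
      = ∑ i, ∑ j, (c i * gmL g m (e i) (ε j)) ⊗ₜ[A] e j := by
        refine Finset.sum_congr rfl fun i _ => ?_
        rw [mulAux_tmul, one_mul, Finset.smul_sum]
        exact Finset.sum_congr rfl fun j _ => by rw [smul_tmul', smul_eq_mul]
    _ = _ := by
        rw [Finset.sum_comm]
        exact Finset.sum_congr rfl fun j _ => by rw [sum_tmul]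

lemma mulAux_sum_sum (g : W A B M →ₗ[A] A') (c c' : Fin n → A') :
    mulAux e ε g (∑ i, c i ⊗ₜ e i) (∑ j, c' j ⊗ₜ e j)
      = ∑ k, (∑ i, ∑ j, c i * c' j * gmL g (e i) (e j) (ε k)) ⊗ₜ[A] e k := by
  calc mulAux e ε g (∑ i, c i ⊗ₜ e i) (∑ j, c' j ⊗ₜ e j)
      = ∑ j, ∑ i, ∑ k, (c i * c' j * gmL g (e i) (e j) (ε k)) ⊗ₜ[A] e k := by
        rw [map_sum]
        refine Finset.sum_congr rfl fun j _ => ?_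
        rw [map_sum, LinearMap.sum_apply]
        refine Finset.sum_congr rfl fun i _ => ?_
        rw [mulAux_tmul, Finset.smul_sum]
        exact Finset.sum_congr rfl fun k _ => by rw [smul_tmul', smul_eq_mul]
    _ = ∑ i, ∑ k, ∑ j, (c i * c' j * gmL g (e i) (e j) (ε k)) ⊗ₜ[A] e k := by
        rw [Finset.sum_comm]
        exact Finset.sum_congr rfl fun i _ => Finset.sum_comm
    _ = ∑ k, ∑ i, ∑ j, (c i * c' j * gmL g (e i) (e j) (ε k)) ⊗ₜ[A] e k :=
        Finset.sum_comm
    _ = _ := by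
        refine Finset.sum_congr rfl fun k _ => ?_
        rw [sum_tmul]
        exact Finset.sum_congr rfl fun i _ => by rw [sum_tmul]

end AlgStrRep

namespace AlgStrRep

variable {A : Type} [CommRing A] {B : Type} [CommRing B] [Algebra A B]
    {M : Type} [AddCommGroup M] [Module A M]
variable {A' : Type} [CommRing A'] [Algebra A A']
variable {n : ℕ} (e : Fin n → M) (ε : Fin n → (M →ₗ[A] A))
  (htot : ∀ m : M, ∑ i, ε i m • e i = m)

/-- The auxiliary trilinear map for associativity. -/
noncomputable def rAssoc (F : (A' ⊗[A] M) →ₗ[A'] (A' ⊗[A] M) →ₗ[A'] (A' ⊗[A] M)) :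
    (A' ⊗[A] M) →ₗ[A'] (A' ⊗[A] M) →ₗ[A'] ((A' ⊗[A] M) →ₗ[A'] (A' ⊗[A] M)) where
  toFun x := F.compr₂ (F x)
  map_add' x x' := by ext y z; simp
  map_smul' a x := by ext y z; simp

@[simp] lemma rAssoc_apply (F : (A' ⊗[A] M) →ₗ[A'] (A' ⊗[A] M) →ₗ[A'] (A' ⊗[A] M))
    (x y z : A' ⊗[A] M) : rAssoc F x y z = F x (F y z) := rfl

include htot in
/-- From a linear map satisfying the conditions, a `B`-algebra structure. -/
noncomputable def structOf (g : W A B M →ₗ[A] A') (hg : Cond e ε g) :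
    BAlgebraStructure A B M A' where
  mul := mulAux e ε g
  one := oneAux e ε g
  algMap := algAux e ε g
  mul_comm := by
    have h : mulAux e ε g = (mulAux e ε g).flip := by
      refine ext_oneTmul fun x => ?_
      refine ext_oneTmul fun y => ?_
      rw [LinearMap.flip_apply, mulAux_one_one, mulAux_one_one]
      exact Finset.sum_congr rfl fun i _ => by rw [hg.comm]
    intro x y
    conv_lhs => rw [h]
    rw [LinearMap.flip_apply]
  mul_assoc := by
    have h : (mulAux e ε g).compr₂ (mulAux e ε g) = rAssoc (mulAux e ε g) := by
      refine ext_oneTmul (P := (A' ⊗[A] M) →ₗ[A'] ((A' ⊗[A] M) →ₗ[A'] (A' ⊗[A] M)))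
        fun x => ?_
      refine ext_oneTmul (P := (A' ⊗[A] M) →ₗ[A'] (A' ⊗[A] M)) fun y => ?_
      refine ext_oneTmul fun z => ?_
      simp only [LinearMap.compr₂_apply, rAssoc_apply]
      rw [mulAux_one_one e ε g x y, mulAux_one_one e ε g y z,
        mulAux_sum_left, mulAux_sum_right]
      refine Finset.sum_congr rfl fun j _ => ?_
      congr 1
      exact hg.assoc x y z (ε j)
    intro x y z
    have := LinearMap.congr_fun (LinearMap.congr_fun (LinearMap.congr_fun h x) y) z
    simpa using this
  one_mul := by
    have h : mulAux e ε g (oneAux e ε g) = LinearMap.id := by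
      refine ext_oneTmul fun m => ?_
      rw [oneAux, mulAux_sum_left]
      have : ∀ j, (∑ i, goL g (ε i) * gmL g (e i) m (ε j)) = dApply (ε j) ((1:A') ⊗ₜ[A] m) := by
        intro j
        rw [hg.one m (ε j), dApply_tmul, one_mul]
      simp only [this]
      rw [db2 e ε htot ((1:A') ⊗ₜ[A] m)]
      rfl
    intro x
    rw [h]
    rfl
  algMap_one := by
    rw [show (1 : A' ⊗[A] B) = (1:A') ⊗ₜ[A] (1:B) from rfl, algAux_one_tmul, oneAux]
    exact Finset.sum_congr rfl fun i _ => by rw [hg.algone]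
  algMap_mul := by
    have h : (LinearMap.mul A' (A' ⊗[A] B)).compr₂ (algAux e ε g)
        = ((mulAux e ε g) ∘ₗ (algAux e ε g)).compl₂ (algAux e ε g) := by
      refine ext_oneTmul fun b => ?_
      refine ext_oneTmul fun b' => ?_
      rw [LinearMap.compr₂_apply, LinearMap.compl₂_apply, LinearMap.comp_apply]
      rw [LinearMap.mul_apply']
      rw [Algebra.TensorProduct.tmul_mul_tmul, one_mul]
      rw [algAux_one_tmul, algAux_one_tmul, algAux_one_tmul, mulAux_sum_sum]
      refine Finset.sum_congr rfl fun k _ => ?_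
      congr 1
      exact hg.algmul b b' (ε k)
    intro u v
    have := LinearMap.congr_fun (LinearMap.congr_fun h u) v
    simpa using this

@[simp] lemma structOf_mul (g : W A B M →ₗ[A] A') (hg : Cond e ε g) :
    (structOf e ε htot g hg).mul = mulAux e ε g := rfl
@[simp] lemma structOf_one (g : W A B M →ₗ[A] A') (hg : Cond e ε g) :
    (structOf e ε htot g hg).one = oneAux e ε g := rfl
@[simp] lemma structOf_algMap (g : W A B M →ₗ[A] A') (hg : Cond e ε g) :
    (structOf e ε htot g hg).algMap = algAux e ε g := rfl

end AlgStrRep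

namespace AlgStrRep

variable {A : Type} [CommRing A] {B : Type} [CommRing B] [Algebra A B]
    {M : Type} [AddCommGroup M] [Module A M]
variable {A' : Type} [CommRing A'] [Algebra A A']

lemma dApply_add (d d' : M →ₗ[A] A) :
    (dApply (d + d') : (A' ⊗[A] M) →ₗ[A'] A') = dApply d + dApply d' := by
  refine ext_oneTmul fun m => ?_
  simp [map_add]

lemma dApply_smul (a : A) (d : M →ₗ[A] A) :
    (dApply (a • d) : (A' ⊗[A] M) →ₗ[A'] A') = a • dApply d := by
  refine ext_oneTmul fun m => ?_
  simp [Algebra.smul_def]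

/-- `dApply` bundled, with values in `A`-linear maps. -/
noncomputable def uMap : (A' ⊗[A] M) →ₗ[A] ((M →ₗ[A] A) →ₗ[A] A') :=
  LinearMap.flip
    { toFun := fun d => (dApply d).restrictScalars A
      map_add' := fun d d' => by rw [dApply_add]; rfl
      map_smul' := fun a d => by rw [dApply_smul]; rfl }

@[simp] lemma uMap_apply (t : A' ⊗[A] M) (d : M →ₗ[A] A) :
    uMap t d = dApply d t := rfl

variable (S : BAlgebraStructure A B M A')

/-- The bilinear map `(x, y) ↦ S.mul (1 ⊗ x) (1 ⊗ y)`. -/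
noncomputable def bilS : M →ₗ[A] M →ₗ[A] (A' ⊗[A] M) :=
  LinearMap.mk₂ A (fun x y => S.mul (1 ⊗ₜ x) (1 ⊗ₜ y))
    (fun x x' y => by rw [tmul_add, map_add, LinearMap.add_apply])
    (fun a x y => by rw [tmul_smul, LinearMap.map_smul_of_tower, LinearMap.smul_apply])
    (fun x y y' => by rw [tmul_add, map_add])
    (fun a x y => by rw [tmul_smul, LinearMap.map_smul_of_tower])

end AlgStrRep

namespace AlgStrRep

variable {A : Type} [CommRing A] {B : Type} [CommRing B] [Algebra A B]
    {M : Type} [AddCommGroup M] [Module A M]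
variable {A' : Type} [CommRing A'] [Algebra A A']
variable (S : BAlgebraStructure A B M A')

@[simp] lemma dApply_zero :
    (dApply (0 : M →ₗ[A] A) : (A' ⊗[A] M) →ₗ[A'] A') = 0 := by
  refine ext_oneTmul fun m => ?_
  simp

/-- The linear map on `W` extracted from a `B`-algebra structure. -/
noncomputable def gOf : W A B M →ₗ[A] A' :=
  (TensorProduct.lift (TensorProduct.lift ((bilS S).compr₂ uMap))).coprod
    ((uMap S.one).coprod
      (TensorProduct.lift (uMap ∘ₗ (S.algMap.restrictScalars A) ∘ₗ
        ((TensorProduct.mk A A' B) 1))))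

@[simp] lemma gmL_gOf (x y : M) (d : M →ₗ[A] A) :
    gmL (gOf S) x y d = dApply d (S.mul (1 ⊗ₜ x) (1 ⊗ₜ y)) := by
  simp [gOf, gmL_def, ι₁, ι₂, ι₃, bilS]

@[simp] lemma goL_gOf (d : M →ₗ[A] A) :
    goL (gOf S) d = dApply d S.one := by
  simp [gOf, goL_def, ι₁, ι₂, ι₃]

@[simp] lemma gaL_gOf (b : B) (d : M →ₗ[A] A) :
    gaL (gOf S) b d = dApply d (S.algMap (1 ⊗ₜ b)) := by
  simp [gOf, gaL_def, ι₁, ι₂, ι₃]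

variable {n : ℕ} (e : Fin n → M) (ε : Fin n → (M →ₗ[A] A))
  (htot : ∀ m : M, ∑ i, ε i m • e i = m)

include htot in
lemma cond_gOf : Cond e ε (gOf S) where
  comm x y d := by rw [gmL_gOf, gmL_gOf, S.mul_comm]
  assoc x y z d := by
    simp only [gmL_gOf]
    have h1 := sum_dApply_mul e ε htot
      ((dApply d) ∘ₗ (S.mul.flip ((1:A') ⊗ₜ[A] z))) (S.mul (1 ⊗ₜ x) (1 ⊗ₜ y))
    have h2 := sum_dApply_mul e ε htot
      ((dApply d) ∘ₗ (S.mul ((1:A') ⊗ₜ[A] x))) (S.mul (1 ⊗ₜ y) (1 ⊗ₜ z))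
    simp only [LinearMap.comp_apply, LinearMap.flip_apply] at h1 h2
    rw [h1, h2, S.mul_assoc]
  one m d := by
    simp only [gmL_gOf, goL_gOf]
    have h := sum_dApply_mul e ε htot
      ((dApply d) ∘ₗ (S.mul.flip ((1:A') ⊗ₜ[A] m))) S.one
    simp only [LinearMap.comp_apply, LinearMap.flip_apply] at h
    rw [h, S.one_mul, dApply_tmul, one_mul]
  algone d := by
    rw [gaL_gOf, goL_gOf, show ((1:A') ⊗ₜ[A] (1:B)) = (1 : A' ⊗[A] B) from rfl, S.algMap_one]
  algmul b b' d := by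
    simp only [gmL_gOf, gaL_gOf]
    have key : (1:A') ⊗ₜ[A] (b * b') = ((1:A') ⊗ₜ[A] b) * ((1:A') ⊗ₜ[A] b') := by
      rw [Algebra.TensorProduct.tmul_mul_tmul, one_mul]
    rw [key, S.algMap_mul]
    have step1 : ∀ i, ∑ j, dApply (ε i) (S.algMap (1 ⊗ₜ b)) * dApply (ε j) (S.algMap (1 ⊗ₜ b'))
        * dApply d (S.mul (1 ⊗ₜ[A] e i) (1 ⊗ₜ[A] e j))
        = dApply (ε i) (S.algMap (1 ⊗ₜ b)) * dApply d (S.mul ((1:A') ⊗ₜ[A] e i) (S.algMap (1 ⊗ₜ b'))) := by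
      intro i
      simp only [mul_assoc]
      rw [← Finset.mul_sum]
      congr 1
      have := sum_dApply_mul e ε htot
        ((dApply d) ∘ₗ (S.mul ((1:A') ⊗ₜ[A] e i))) (S.algMap (1 ⊗ₜ b'))
      simpa using this
    simp only [step1]
    have h2 := sum_dApply_mul e ε htot
      ((dApply d) ∘ₗ (S.mul.flip (S.algMap (1 ⊗ₜ b')))) (S.algMap (1 ⊗ₜ b))
    simp only [LinearMap.comp_apply, LinearMap.flip_apply] at h2
    exact h2.symm

end AlgStrRep

namespace AlgStrRep

variable {A : Type} [CommRing A] {B : Type} [CommRing B] [Algebra A B]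
    {M : Type} [AddCommGroup M] [Module A M]
variable {A' : Type} [CommRing A'] [Algebra A A']

lemma balg_ext {S T : BAlgebraStructure A B M A'} (h1 : S.mul = T.mul)
    (h2 : S.one = T.one) (h3 : S.algMap = T.algMap) : S = T := by
  cases S; cases T
  subst h1 h2 h3
  rfl

lemma w_ext {g g' : W A B M →ₗ[A] A'}
    (h1 : ∀ (x y : M) (d : M →ₗ[A] A), gmL g x y d = gmL g' x y d)
    (h2 : ∀ d, goL g d = goL g' d)
    (h3 : ∀ (b : B) (d : M →ₗ[A] A), gaL g b d = gaL g' b d) : g = g' := by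
  have e1 : ∀ t, g (ι₁ A B M t) = g' (ι₁ A B M t) := by
    intro t
    induction t using TensorProduct.induction_on with
    | zero => simp
    | tmul p d =>
        induction p using TensorProduct.induction_on with
        | zero => rw [zero_tmul, map_zero, map_zero, map_zero]
        | tmul x y => exact h1 x y d
        | add p q hp hq => rw [add_tmul, map_add, map_add, map_add, hp, hq]
    | add u v hu hv => rw [map_add, map_add, map_add, hu, hv]
  have e3 : ∀ u, g (ι₃ A B M u) = g' (ι₃ A B M u) := by
    intro u
    induction u using TensorProduct.induction_on with
    | zero => simp
    | tmul b d => exact h3 b d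
    | add u v hu hv => rw [map_add, map_add, map_add, hu, hv]
  refine LinearMap.ext fun w => ?_
  obtain ⟨t, d, u⟩ := w
  have hsplit : ((t, d, u) : W A B M)
      = ι₁ A B M t + ι₂ A B M d + ι₃ A B M u := by
    simp [ι₁, ι₂, ι₃, Prod.ext_iff]
  have h2' : g ((ι₂ A B M) d) = g' ((ι₂ A B M) d) := h2 d
  rw [hsplit, map_add, map_add, map_add, map_add, e1, e3, h2']

variable {n : ℕ} (e : Fin n → M) (ε : Fin n → (M →ₗ[A] A))
  (htot : ∀ m : M, ∑ i, ε i m • e i = m)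

include htot in
omit htot in
lemma dApply_sum_basis (c : Fin n → A') (d : M →ₗ[A] A) :
    dApply d (∑ i, c i ⊗ₜ[A] e i) = ∑ i, d (e i) • c i := by
  rw [map_sum]
  refine Finset.sum_congr rfl fun i _ => ?_
  rw [dApply_tmul, Algebra.smul_def, mul_comm]

include htot in
lemma structOf_gOf (S : BAlgebraStructure A B M A') :
    structOf e ε htot (gOf S) (cond_gOf S e ε htot) = S := by
  refine balg_ext ?_ ?_ ?_
  · rw [structOf_mul]
    refine ext_oneTmul (P := (A' ⊗[A] M) →ₗ[A'] (A' ⊗[A] M)) fun x => ?_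
    refine ext_oneTmul fun y => ?_
    rw [mulAux_one_one]
    simp only [gmL_gOf]
    exact db2 e ε htot _
  · rw [structOf_one, oneAux]
    simp only [goL_gOf]
    exact db2 e ε htot _
  · rw [structOf_algMap]
    refine ext_oneTmul fun b => ?_
    rw [algAux_one_tmul]
    simp only [gaL_gOf]
    exact db2 e ε htot _

include htot in
lemma gOf_structOf (g : W A B M →ₗ[A] A') (hg : Cond e ε g) :
    gOf (structOf e ε htot g hg) = g := by
  refine w_ext ?_ ?_ ?_
  · intro x y d
    rw [gmL_gOf, structOf_mul, mulAux_one_one, dApply_sum_basis (e := e)]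
    calc ∑ i, d (e i) • gmL g x y (ε i) = gmL g x y (∑ i, d (e i) • ε i) := by
          rw [map_sum]
          exact Finset.sum_congr rfl fun i _ => by rw [map_smul]
      _ = gmL g x y d := by rw [db3 e ε htot]
  · intro d
    rw [goL_gOf, structOf_one, oneAux, dApply_sum_basis (e := e)]
    calc ∑ i, d (e i) • goL g (ε i) = goL g (∑ i, d (e i) • ε i) := by
          rw [map_sum]
          exact Finset.sum_congr rfl fun i _ => by rw [map_smul]
      _ = goL g d := by rw [db3 e ε htot]
  · intro b d
    rw [gaL_gOf, structOf_algMap, algAux_one_tmul, dApply_sum_basis (e := e)]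
    calc ∑ i, d (e i) • gaL g b (ε i) = gaL g b (∑ i, d (e i) • ε i) := by
          rw [map_sum]
          exact Finset.sum_congr rfl fun i _ => by rw [map_smul]
      _ = gaL g b d := by rw [db3 e ε htot]

end AlgStrRep

namespace AlgStrRep

open MvPolynomial in
/-- The set of relations defining the representing algebra. -/
def Rset (A : Type) [CommRing A] (B : Type) [CommRing B] [Algebra A B]
    (M : Type) [AddCommGroup M] [Module A M]
    {n : ℕ} (e : Fin n → M) (ε : Fin n → (M →ₗ[A] A)) :
    Set (MvPolynomial (W A B M) A) :=
  { p | (∃ w w' : W A B M, p = X (w + w') - X w - X w')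
      ∨ (∃ (a : A) (w : W A B M), p = X (a • w) - C a * X w)
      ∨ (∃ x y d, p = X (ι₁ A B M ((x ⊗ₜ y) ⊗ₜ d)) - X (ι₁ A B M ((y ⊗ₜ x) ⊗ₜ d)))
      ∨ (∃ x y z d, p = (∑ i, X (ι₁ A B M ((x ⊗ₜ y) ⊗ₜ ε i)) * X (ι₁ A B M ((e i ⊗ₜ z) ⊗ₜ d)))
            - ∑ i, X (ι₁ A B M ((y ⊗ₜ z) ⊗ₜ ε i)) * X (ι₁ A B M ((x ⊗ₜ e i) ⊗ₜ d)))
      ∨ (∃ m d, p = (∑ i, X (ι₂ A B M (ε i)) * X (ι₁ A B M ((e i ⊗ₜ m) ⊗ₜ d))) - C (d m))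
      ∨ (∃ d, p = X (ι₃ A B M ((1:B) ⊗ₜ d)) - X (ι₂ A B M d))
      ∨ (∃ b b' d, p = X (ι₃ A B M ((b * b') ⊗ₜ d))
            - ∑ i, ∑ j, X (ι₃ A B M (b ⊗ₜ ε i)) * X (ι₃ A B M (b' ⊗ₜ ε j))
              * X (ι₁ A B M ((e i ⊗ₜ e j) ⊗ₜ d))) }

variable {A : Type} [CommRing A] {B : Type} [CommRing B] [Algebra A B]
    {M : Type} [AddCommGroup M] [Module A M]
variable {A' : Type} [CommRing A'] [Algebra A A']
variable {n : ℕ} (e : Fin n → M) (ε : Fin n → (M →ₗ[A] A))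

open MvPolynomial

/-- From an algebra hom out of the polynomial ring killing the relations,
a linear map on `W`. -/
noncomputable def linOfHom (h : MvPolynomial (W A B M) A →ₐ[A] A')
    (hk : ∀ p ∈ Rset A B M e ε, h p = 0) : W A B M →ₗ[A] A' where
  toFun w := h (X w)
  map_add' w w' := by
    have h0 := hk _ (Or.inl ⟨w, w', rfl⟩)
    rw [map_sub, map_sub, sub_sub, sub_eq_zero] at h0
    exact h0
  map_smul' a w := by
    have h0 := hk _ (Or.inr (Or.inl ⟨a, w, rfl⟩))
    rw [map_sub, sub_eq_zero] at h0
    rw [h0, map_mul, algHom_C, ← Algebra.smul_def]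
    rfl

@[simp] lemma linOfHom_apply (h : MvPolynomial (W A B M) A →ₐ[A] A')
    (hk : ∀ p ∈ Rset A B M e ε, h p = 0) (w : W A B M) :
    linOfHom e ε h hk w = h (X w) := rfl

lemma cond_linOfHom (h : MvPolynomial (W A B M) A →ₐ[A] A')
    (hk : ∀ p ∈ Rset A B M e ε, h p = 0) : Cond e ε (linOfHom e ε h hk) where
  comm x y d := by
    have h0 := hk _ (Or.inr (Or.inr (Or.inl ⟨x, y, d, rfl⟩)))
    rw [map_sub, sub_eq_zero] at h0
    simpa only [gmL_def, linOfHom_apply] using h0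
  assoc x y z d := by
    have h0 := hk _ (Or.inr (Or.inr (Or.inr (Or.inl ⟨x, y, z, d, rfl⟩))))
    rw [map_sub, sub_eq_zero, map_sum, map_sum] at h0
    simp only [map_mul] at h0
    simpa only [gmL_def, linOfHom_apply] using h0
  one m d := by
    have h0 := hk _ (Or.inr (Or.inr (Or.inr (Or.inr (Or.inl ⟨m, d, rfl⟩)))))
    rw [map_sub, sub_eq_zero, map_sum] at h0
    simp only [map_mul, algHom_C] at h0
    simpa only [gmL_def, goL_def, linOfHom_apply] using h0
  algone d := by
    have h0 := hk _ (Or.inr (Or.inr (Or.inr (Or.inr (Or.inr (Or.inl ⟨d, rfl⟩))))))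
    rw [map_sub, sub_eq_zero] at h0
    simpa only [gaL_def, goL_def, linOfHom_apply] using h0
  algmul b b' d := by
    have h0 := hk _ (Or.inr (Or.inr (Or.inr (Or.inr (Or.inr (Or.inr ⟨b, b', d, rfl⟩))))))
    rw [map_sub, sub_eq_zero, map_sum] at h0
    simp only [map_sum, map_mul] at h0
    simpa only [gmL_def, gaL_def, linOfHom_apply] using h0

/-- From a linear map on `W`, an algebra hom out of the polynomial ring. -/
noncomputable def homOfLin (g : W A B M →ₗ[A] A') : MvPolynomial (W A B M) A →ₐ[A] A' :=
  aeval (fun w => g w)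

lemma homOfLin_kills (g : W A B M →ₗ[A] A') (hg : Cond e ε g) :
    ∀ p ∈ Rset A B M e ε, homOfLin g p = 0 := by
  rintro p (⟨w, w', rfl⟩ | ⟨a, w, rfl⟩ | ⟨x, y, d, rfl⟩ | ⟨x, y, z, d, rfl⟩ |
    ⟨m, d, rfl⟩ | ⟨d, rfl⟩ | ⟨b, b', d, rfl⟩)
  · simp [homOfLin, sub_sub, sub_eq_zero]
  · simp [homOfLin, sub_eq_zero, Algebra.smul_def]
  · rw [map_sub, sub_eq_zero]
    have := hg.comm x y d
    simpa only [gmL_def, homOfLin, aeval_X] using this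
  · rw [map_sub, sub_eq_zero, map_sum, map_sum]
    simp only [map_mul]
    have := hg.assoc x y z d
    simpa only [gmL_def, homOfLin, aeval_X] using this
  · rw [map_sub, sub_eq_zero, map_sum]
    simp only [map_mul]
    have := hg.one m d
    simpa only [gmL_def, goL_def, homOfLin, aeval_X, aeval_C] using this
  · rw [map_sub, sub_eq_zero]
    have := hg.algone d
    simpa only [gaL_def, goL_def, homOfLin, aeval_X] using this
  · rw [map_sub, sub_eq_zero, map_sum]
    simp only [map_sum, map_mul]
    have := hg.algmul b b' d
    simpa only [gmL_def, gaL_def, homOfLin, aeval_X] using this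

lemma linOfHom_homOfLin (g : W A B M →ₗ[A] A') (hg : Cond e ε g) :
    linOfHom e ε (homOfLin g) (homOfLin_kills e ε g hg) = g := by
  refine LinearMap.ext fun w => ?_
  simp [homOfLin]

lemma homOfLin_linOfHom (h : MvPolynomial (W A B M) A →ₐ[A] A')
    (hk : ∀ p ∈ Rset A B M e ε, h p = 0) :
    homOfLin (linOfHom e ε h hk) = h := by
  refine MvPolynomial.algHom_ext fun w => ?_
  simp [homOfLin]

end AlgStrRep

namespace AlgStrRep

variable (A : Type) [CommRing A] (B : Type) [CommRing B] [Algebra A B]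
    (M : Type) [AddCommGroup M] [Module A M]
variable {n : ℕ} (e : Fin n → M) (ε : Fin n → (M →ₗ[A] A))

open MvPolynomial

/-- The representing algebra. -/
def Qalg := MvPolynomial (W A B M) A ⧸ Ideal.span (Rset A B M e ε)

noncomputable instance : CommRing (Qalg A B M e ε) :=
  inferInstanceAs (CommRing (MvPolynomial (W A B M) A ⧸ Ideal.span (Rset A B M e ε)))
noncomputable instance : Algebra A (Qalg A B M e ε) :=
  inferInstanceAs (Algebra A (MvPolynomial (W A B M) A ⧸ Ideal.span (Rset A B M e ε)))

variable {A B M}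
variable {A' : Type} [CommRing A'] [Algebra A A']
variable {A'' : Type} [CommRing A''] [Algebra A A'']

lemma comp_mkₐ_kills (φ : Qalg A B M e ε →ₐ[A] A') :
    ∀ p ∈ Rset A B M e ε,
      (φ.comp (Ideal.Quotient.mkₐ A (Ideal.span (Rset A B M e ε)))) p = 0 := by
  intro p hp
  have h0 : (Ideal.Quotient.mkₐ A (Ideal.span (Rset A B M e ε))) p = 0 := by
    rw [Ideal.Quotient.mkₐ_eq_mk, Ideal.Quotient.eq_zero_iff_mem]
    exact Ideal.subset_span hp
  have := congrArg φ h0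
  exact this.trans (map_zero φ)

/-- The canonical linear map on `W` associated with a hom out of `Qalg`. -/
noncomputable def glin (φ : Qalg A B M e ε →ₐ[A] A') : W A B M →ₗ[A] A' :=
  linOfHom e ε (φ.comp (Ideal.Quotient.mkₐ A _)) (comp_mkₐ_kills e ε φ)

lemma glin_comp (f : A' →ₐ[A] A'') (φ : Qalg A B M e ε →ₐ[A] A') :
    glin e ε (f.comp φ) = f.toLinearMap ∘ₗ glin e ε φ :=
  LinearMap.ext fun _ => rfl

lemma cond_glin (φ : Qalg A B M e ε →ₐ[A] A') : Cond e ε (glin e ε φ) :=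
  cond_linOfHom e ε _ _

/-- Homs out of `Qalg` correspond to linear maps on `W` satisfying the conditions. -/
noncomputable def homLinEquiv :
    (Qalg A B M e ε →ₐ[A] A') ≃ {g : W A B M →ₗ[A] A' // Cond e ε g} where
  toFun φ := ⟨glin e ε φ, cond_glin e ε φ⟩
  invFun g := Ideal.Quotient.liftₐ _ (homOfLin g.1) (by
    intro a ha
    have hle : Ideal.span (Rset A B M e ε) ≤ RingHom.ker (homOfLin (A':=A') g.1) :=
      Ideal.span_le.mpr (fun p hp => homOfLin_kills e ε g.1 g.2 p hp)
    exact hle ha)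
  left_inv φ := by
    refine AlgHom.ext fun q => ?_
    obtain ⟨p, rfl⟩ := Ideal.Quotient.mkₐ_surjective A _ q
    have h1 : homOfLin (A' := A') (glin e ε φ)
        = φ.comp (Ideal.Quotient.mkₐ A (Ideal.span (Rset A B M e ε))) :=
      homOfLin_linOfHom e ε _ (comp_mkₐ_kills e ε φ)
    have h2 := AlgHom.congr_fun (Ideal.Quotient.liftₐ_comp
      (Ideal.span (Rset A B M e ε)) (homOfLin (glin e ε φ))
      (fun a ha => (Ideal.span_le.mpr (fun p hp =>
        homOfLin_kills e ε _ (cond_glin e ε φ) p hp) : Ideal.span (Rset A B M e ε)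
          ≤ RingHom.ker (homOfLin (A' := A') (glin e ε φ))) ha)) p
    rw [AlgHom.comp_apply] at h2
    conv at h2 => rhs; rw [h1]
    exact h2
  right_inv g := by
    refine Subtype.ext (LinearMap.ext fun w => ?_)
    have h1 := AlgHom.congr_fun (Ideal.Quotient.liftₐ_comp
      (Ideal.span (Rset A B M e ε)) (homOfLin (A' := A') g.1)
      (fun a ha => (Ideal.span_le.mpr (fun p hp =>
        homOfLin_kills e ε g.1 g.2 p hp) : Ideal.span (Rset A B M e ε)
          ≤ RingHom.ker (homOfLin (A' := A') g.1)) ha)) (X w)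
    rw [AlgHom.comp_apply] at h1
    exact h1.trans (by simp [homOfLin])

variable (htot : ∀ m : M, ∑ i, ε i m • e i = m)

/-- The main equivalence. -/
noncomputable def bigEquiv :
    (Qalg A B M e ε →ₐ[A] A') ≃ BAlgebraStructure A B M A' :=
  (homLinEquiv e ε).trans
    { toFun := fun g => structOf e ε htot g.1 g.2
      invFun := fun S => ⟨gOf S, cond_gOf S e ε htot⟩
      left_inv := fun g => Subtype.ext (gOf_structOf e ε htot g.1 g.2)
      right_inv := fun S => structOf_gOf e ε htot S }

lemma bigEquiv_mul (φ : Qalg A B M e ε →ₐ[A] A') :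
    (bigEquiv e ε htot φ).mul = mulAux e ε (glin e ε φ) := rfl
lemma bigEquiv_one (φ : Qalg A B M e ε →ₐ[A] A') :
    (bigEquiv e ε htot φ).one = oneAux e ε (glin e ε φ) := rfl
lemma bigEquiv_algMap (φ : Qalg A B M e ε →ₐ[A] A') :
    (bigEquiv e ε htot φ).algMap = algAux e ε (glin e ε φ) := rfl

-- naturality lemmas
lemma gmL_comp (f : A' →ₐ[A] A'') (g : W A B M →ₗ[A] A') (x y : M) (d : M →ₗ[A] A) :
    gmL (f.toLinearMap ∘ₗ g) x y d = f (gmL g x y d) := rfl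
lemma goL_comp (f : A' →ₐ[A] A'') (g : W A B M →ₗ[A] A') (d : M →ₗ[A] A) :
    goL (f.toLinearMap ∘ₗ g) d = f (goL g d) := rfl
lemma gaL_comp (f : A' →ₐ[A] A'') (g : W A B M →ₗ[A] A') (b : B) (d : M →ₗ[A] A) :
    gaL (f.toLinearMap ∘ₗ g) b d = f (gaL g b d) := rfl

lemma baseChangeM_tmul (f : A' →ₐ[A] A'') (a : A') (m : M) :
    baseChangeM A M f (a ⊗ₜ m) = f a ⊗ₜ m := rfl
lemma baseChangeB_tmul (f : A' →ₐ[A] A'') (a : A') (b : B) :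
    baseChangeB A B f (a ⊗ₜ b) = f a ⊗ₜ b := rfl

lemma oneAux_natural (f : A' →ₐ[A] A'') (g : W A B M →ₗ[A] A') :
    oneAux e ε (f.toLinearMap ∘ₗ g) = baseChangeM A M f (oneAux e ε g) := by
  rw [oneAux, oneAux, map_sum]
  exact Finset.sum_congr rfl fun i _ => by rw [goL_comp, baseChangeM_tmul]

lemma mulAux_natural (f : A' →ₐ[A] A'') (g : W A B M →ₗ[A] A') (x y : A' ⊗[A] M) :
    mulAux e ε (f.toLinearMap ∘ₗ g) (baseChangeM A M f x) (baseChangeM A M f y)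
      = baseChangeM A M f (mulAux e ε g x y) := by
  induction x using TensorProduct.induction_on with
  | zero => simp
  | add u v hu hv => simp only [map_add, LinearMap.add_apply, hu, hv]
  | tmul a m =>
      induction y using TensorProduct.induction_on with
      | zero => simp
      | add u v hu hv => simp only [map_add, hu, hv]
      | tmul a' m' =>
          rw [baseChangeM_tmul, baseChangeM_tmul, mulAux_tmul, mulAux_tmul]
          rw [Finset.smul_sum, Finset.smul_sum, map_sum]
          refine Finset.sum_congr rfl fun i _ => ?_
          rw [smul_tmul', smul_tmul', smul_eq_mul, smul_eq_mul, baseChangeM_tmul,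
            gmL_comp, map_mul, map_mul]

lemma algAux_natural (f : A' →ₐ[A] A'') (g : W A B M →ₗ[A] A') (u : A' ⊗[A] B) :
    algAux e ε (f.toLinearMap ∘ₗ g) (baseChangeB A B f u)
      = baseChangeM A M f (algAux e ε g u) := by
  induction u using TensorProduct.induction_on with
  | zero => simp
  | add u v hu hv => simp only [map_add, hu, hv]
  | tmul a b =>
      rw [baseChangeB_tmul, algAux_tmul, algAux_tmul]
      rw [Finset.smul_sum, Finset.smul_sum, map_sum]
      refine Finset.sum_congr rfl fun i _ => ?_
      rw [smul_tmul', smul_tmul', smul_eq_mul, smul_eq_mul, baseChangeM_tmul,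
        gaL_comp, map_mul]

end AlgStrRep


/-- **Lemma (existence of the algebra of algebra structures).**
Let `A` be a commutative ring, `B` a commutative `A`-algebra, and `M` a finite locally free
(i.e. finitely generated projective) `A`-module.  Then there is a commutative `A`-algebra `Q`
which represents `B`-algebra structures on `M`: for every commutative `A`-algebra `A'` there
is a bijection, natural in `A'`, between `A`-algebra homomorphisms `Q → A'` and
`(B ⊗[A] A')`-algebra structures on the `A'`-module `M ⊗[A] A'`. -/
theorem exists_algebra_structure_representation
    (A : Type) [CommRing A] (B : Type) [CommRing B] [Algebra A B]
    (M : Type) [AddCommGroup M] [Module A M]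
    [Module.Finite A M] [Module.Projective A M] :
    Nonempty (AlgebraStructureRepresentation A B M) := by
  obtain ⟨n, e, ε, htot⟩ : ∃ (n : ℕ) (e : Fin n → M) (ε : Fin n → (M →ₗ[A] A)),
      ∀ m : M, ∑ i, ε i m • e i = m := by
    obtain ⟨n, f, hf⟩ := Module.Finite.exists_fin' A M
    obtain ⟨s, hs⟩ := Module.projective_lifting_property f LinearMap.id hf
    refine ⟨n, fun i => f (Pi.single i 1), fun i => (LinearMap.proj i) ∘ₗ s, fun m => ?_⟩
    have h1 : ∀ i, s m i • f (Pi.single i 1) = f (Pi.single i (s m i)) := by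
      intro i
      rw [← map_smul]
      congr 1
      ext j
      by_cases h : j = i <;> simp [Pi.single_apply, h]
    simp only [LinearMap.comp_apply, LinearMap.proj_apply, h1]
    rw [← map_sum]
    have h2 : ∑ i, Pi.single i (s m i) = s m := by
      ext j; simp [Pi.single_apply]
    rw [h2]
    exact LinearMap.congr_fun hs m
  refine ⟨{
    Q := AlgStrRep.Qalg A B M e ε
    equiv := fun A' _ _ => AlgStrRep.bigEquiv e ε htot
    naturality_one := fun A' A'' _ _ _ _ f h => by
      rw [AlgStrRep.bigEquiv_one, AlgStrRep.bigEquiv_one, AlgStrRep.glin_comp,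
        AlgStrRep.oneAux_natural]
    naturality_mul := fun A' A'' _ _ _ _ f h x y => by
      rw [AlgStrRep.bigEquiv_mul, AlgStrRep.bigEquiv_mul, AlgStrRep.glin_comp,
        AlgStrRep.mulAux_natural]
    naturality_algMap := fun A' A'' _ _ _ _ f h b => by
      rw [AlgStrRep.bigEquiv_algMap, AlgStrRep.bigEquiv_algMap, AlgStrRep.glin_comp,
        AlgStrRep.algAux_natural] }⟩
end

section
/- Let A be a commutative ring, B a commutative A-algebra of finite type, and M an A-module that is finite locally free (finitely generated projective). Then there exists a commutative A-algebra Q of finite type over A together with bijections, natural in the commutative A-algebra A', between the set of A-algebra homomorphisms Q → A' and the set of (B ⊗_A A')-algebra structures on the A'-module M ⊗_A A'. -/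
open TensorProduct

namespace AlgRep

set_option maxHeartbeats 1000000

section Core

variable {A : Type} [CommRing A]
variable {M : Type} [AddCommGroup M] [Module A M]

/-- contraction of a functional against the right factor. -/
noncomputable def contr {W : Type} [AddCommGroup W] [Module A W]
    (A' : Type) [CommRing A'] [Algebra A A'] (lam : W →ₗ[A] A) :
    (A' ⊗[A] W) →ₗ[A'] A' :=
  LinearMap.liftBaseChange A' ((Algebra.linearMap A A').comp lam)

@[simp] lemma contr_tmul {W : Type} [AddCommGroup W] [Module A W]
    (A' : Type) [CommRing A'] [Algebra A A'] (lam : W →ₗ[A] A) (a : A') (w : W) :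
    contr A' lam (a ⊗ₜ w) = lam w • a := by
  simp [contr, Algebra.smul_def, mul_comm]

/-- base change along a homomorphism of `A`-algebras. -/
noncomputable def tmap {W : Type} [AddCommGroup W] [Module A W]
    {A' A'' : Type} [CommRing A'] [Algebra A A'] [CommRing A''] [Algebra A A'']
    (φ : A' →ₐ[A] A'') : A' ⊗[A] W →ₗ[A] A'' ⊗[A] W :=
  TensorProduct.map φ.toLinearMap LinearMap.id

@[simp] lemma tmap_tmul {W : Type} [AddCommGroup W] [Module A W]
    {A' A'' : Type} [CommRing A'] [Algebra A A'] [CommRing A''] [Algebra A A'']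
    (φ : A' →ₐ[A] A'') (a : A') (w : W) :
    tmap φ (a ⊗ₜ w) = φ a ⊗ₜ w := rfl

lemma tmap_smul {W : Type} [AddCommGroup W] [Module A W]
    {A' A'' : Type} [CommRing A'] [Algebra A A'] [CommRing A''] [Algebra A A'']
    (φ : A' →ₐ[A] A'') (a : A') (z : A' ⊗[A] W) :
    tmap φ (a • z) = φ a • tmap φ z := by
  induction z using TensorProduct.induction_on with
  | zero => simp
  | tmul x w => simp [smul_tmul', map_mul]
  | add x y hx hy => simp [smul_add, hx, hy]

lemma contr_tmap {W : Type} [AddCommGroup W] [Module A W]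
    {A' A'' : Type} [CommRing A'] [Algebra A A'] [CommRing A''] [Algebra A A'']
    (φ : A' →ₐ[A] A'') (lam : W →ₗ[A] A) (z : A' ⊗[A] W) :
    φ (contr A' lam z) = contr A'' lam (tmap φ z) := by
  induction z using TensorProduct.induction_on with
  | zero => simp
  | tmul x w => simp [map_smul]
  | add x y hx hy => simp [hx, hy]

variable {N' : Type} [AddCommGroup N'] [Module A N']

/-- `n ↦ (m ↦ lam m • n)` as a linear map. -/
noncomputable def lmap (lam : M →ₗ[A] A) : N' →ₗ[A] (M →ₗ[A] N') where
  toFun n := lam.smulRight n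
  map_add' x y := by ext m; simp
  map_smul' a x := by
    ext m
    simp only [LinearMap.smulRight_apply, LinearMap.smul_apply, RingHom.id_apply]
    exact smul_comm _ _ _

/-- box : insert a functional. -/
noncomputable def box (A' : Type) [CommRing A'] [Algebra A A'] (lam : M →ₗ[A] A) :
    (A' ⊗[A] N') →ₗ[A'] (A' ⊗[A] (M →ₗ[A] N')) :=
  (lmap lam).baseChange A'

@[simp] lemma box_tmul (A' : Type) [CommRing A'] [Algebra A A'] (lam : M →ₗ[A] A)
    (a : A') (x : N') : box A' lam (a ⊗ₜ x) = a ⊗ₜ (lam.smulRight x) := rfl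

/-- the canonical map `A' ⊗ Hom(M,N') → Hom(A'⊗M, A'⊗N')`. -/
noncomputable def c1 (A' : Type) [CommRing A'] [Algebra A A'] :
    (A' ⊗[A] (M →ₗ[A] N')) →ₗ[A'] ((A' ⊗[A] M) →ₗ[A'] (A' ⊗[A] N')) :=
  LinearMap.liftBaseChange A' (LinearMap.baseChangeHom A A' M N')

@[simp] lemma c1_tmul (A' : Type) [CommRing A'] [Algebra A A']
    (a b : A') (f : M →ₗ[A] N') (m : M) :
    c1 A' (a ⊗ₜ f) (b ⊗ₜ m) = (a * b) ⊗ₜ f m := by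
  simp only [c1, LinearMap.liftBaseChange_tmul, LinearMap.smul_apply,
    LinearMap.baseChangeHom_apply, LinearMap.baseChange_tmul, smul_tmul', smul_eq_mul]

lemma c1_box (A' : Type) [CommRing A'] [Algebra A A'] (lam : M →ₗ[A] A)
    (z : A' ⊗[A] N') (x : A' ⊗[A] M) :
    c1 A' (box A' lam z) x = contr A' lam x • z := by
  induction z using TensorProduct.induction_on with
  | zero => simp
  | tmul a w =>
    induction x using TensorProduct.induction_on with
    | zero => simp
    | tmul b m => simp [smul_tmul', smul_smul, mul_comm, Algebra.smul_def, mul_assoc,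
        mul_left_comm]
    | add u v hu hv =>
      simp only [box_tmul] at hu hv ⊢
      simp [map_add, add_smul, hu, hv]
  | add u v hu hv => simp [map_add, smul_add, hu, hv]

lemma tmap_c1 {A' A'' : Type} [CommRing A'] [Algebra A A'] [CommRing A''] [Algebra A A'']
    (φ : A' →ₐ[A] A'') (z : A' ⊗[A] (M →ₗ[A] N')) (x : A' ⊗[A] M) :
    tmap φ (c1 A' z x) = c1 A'' (tmap φ z) (tmap φ x) := by
  induction z using TensorProduct.induction_on with
  | zero => simp
  | tmul a f =>
    induction x using TensorProduct.induction_on with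
    | zero => simp
    | tmul b m => simp [map_mul]
    | add u v hu hv => simp only [map_add, hu, hv]
  | add u v hu hv => simp only [map_add, LinearMap.add_apply, hu, hv]

lemma tmap_box {A' A'' : Type} [CommRing A'] [Algebra A A'] [CommRing A''] [Algebra A A'']
    (φ : A' →ₐ[A] A'') (lam : M →ₗ[A] A) (z : A' ⊗[A] N') :
    tmap φ (box A' lam z) = box A'' lam (tmap φ z) := by
  induction z using TensorProduct.induction_on with
  | zero => simp
  | tmul a w => simp
  | add u v hu hv => simp only [map_add, hu, hv]

end Core

section DualBasis

variable {A : Type} [CommRing A]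
variable {M : Type} [AddCommGroup M] [Module A M]
variable {k : ℕ}

/-- the spanning elements of `A' ⊗ M`. -/
noncomputable def em (e_ : Fin k → M) (A' : Type) [CommRing A'] [Algebra A A'] (i : Fin k) :
    A' ⊗[A] M := (1 : A') ⊗ₜ e_ i

lemma tmap_em (e_ : Fin k → M) {A' A'' : Type} [CommRing A'] [Algebra A A']
    [CommRing A''] [Algebra A A''] (φ : A' →ₐ[A] A'') (i : Fin k) :
    tmap φ (em e_ A' i) = em e_ A'' i := by
  simp [em]

lemma db (e_ : Fin k → M) (lam_ : Fin k → (M →ₗ[A] A))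
    (hdb : ∀ m : M, ∑ i, lam_ i m • e_ i = m)
    (A' : Type) [CommRing A'] [Algebra A A'] (x : A' ⊗[A] M) :
    ∑ i, contr A' (lam_ i) x • em e_ A' i = x := by
  induction x using TensorProduct.induction_on with
  | zero => simp
  | tmul a m =>
    have h1 : ∀ i : Fin k, (lam_ i m • a) • em e_ A' i = a ⊗ₜ[A] (lam_ i m • e_ i) := by
      intro i
      rw [em, smul_tmul', smul_eq_mul, mul_one, smul_tmul]
    simp only [contr_tmul, h1, ← TensorProduct.tmul_sum]
    rw [hdb]
  | add x y hx hy =>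
    simp only [map_add, add_smul, Finset.sum_add_distrib, hx, hy]

lemma ext_em (e_ : Fin k → M) (lam_ : Fin k → (M →ₗ[A] A))
    (hdb : ∀ m : M, ∑ i, lam_ i m • e_ i = m)
    (A' : Type) [CommRing A'] [Algebra A A'] {Z : Type} [AddCommMonoid Z] [Module A' Z]
    {f g : (A' ⊗[A] M) →ₗ[A'] Z} (h : ∀ i, f (em e_ A' i) = g (em e_ A' i)) : f = g := by
  apply LinearMap.ext; intro x
  rw [← db e_ lam_ hdb A' x]
  simp only [map_sum, map_smul, h]

lemma recon {N' : Type} [AddCommGroup N'] [Module A N'] (e_ : Fin k → M)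
    (lam_ : Fin k → (M →ₗ[A] A)) (hdb : ∀ m : M, ∑ i, lam_ i m • e_ i = m)
    (A' : Type) [CommRing A'] [Algebra A A'] (f : (A' ⊗[A] M) →ₗ[A'] (A' ⊗[A] N')) :
    c1 A' (∑ i, box A' (lam_ i) (f (em e_ A' i))) = f := by
  apply LinearMap.ext; intro x
  rw [map_sum, LinearMap.sum_apply]
  simp only [c1_box]
  simp only [← map_smul]
  rw [← map_sum, db e_ lam_ hdb A' x]

end DualBasis

section Mul

variable {A : Type} [CommRing A]
variable {M : Type} [AddCommGroup M] [Module A M]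
variable (A' : Type) [CommRing A'] [Algebra A A']

/-- the bilinear multiplication attached to `μ : A' ⊗ T`. -/
noncomputable def mulMap (μ : A' ⊗[A] (M →ₗ[A] (M →ₗ[A] M))) :
    (A' ⊗[A] M) →ₗ[A'] (A' ⊗[A] M) →ₗ[A'] (A' ⊗[A] M) :=
  (c1 A').comp ((c1 A') μ)

lemma tmap_mulMap {A'' : Type} [CommRing A''] [Algebra A A''] (φ : A' →ₐ[A] A'')
    (μ : A' ⊗[A] (M →ₗ[A] (M →ₗ[A] M))) (x z : A' ⊗[A] M) :
    tmap φ (mulMap A' μ x z) = mulMap A'' (tmap φ μ) (tmap φ x) (tmap φ z) := by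
  simp only [mulMap, LinearMap.comp_apply, tmap_c1]

lemma mulMap_recon {k : ℕ} (e_ : Fin k → M) (lam_ : Fin k → (M →ₗ[A] A))
    (hdb : ∀ m : M, ∑ i, lam_ i m • e_ i = m)
    (f : (A' ⊗[A] M) →ₗ[A'] (A' ⊗[A] M) →ₗ[A'] (A' ⊗[A] M)) :
    mulMap A' (∑ i, box A' (lam_ i) (∑ j, box A' (lam_ j) (f (em e_ A' i) (em e_ A' j)))) = f := by
  apply LinearMap.ext; intro x
  rw [mulMap, LinearMap.comp_apply, map_sum, LinearMap.sum_apply]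
  simp only [c1_box]
  rw [map_sum]
  simp only [map_smul, recon e_ lam_ hdb A']
  simp only [← map_smul]
  rw [← map_sum, db e_ lam_ hdb A' x]

end Mul


section Points

variable {A : Type} [CommRing A]
variable {M : Type} [AddCommGroup M] [Module A M]
variable {k : ℕ} {ιB : Type}

/-- index type for the polynomial variables -/
abbrev Idx (k : ℕ) (ιB : Type) : Type :=
  (Fin k × Fin k × Fin k) ⊕ (Fin k ⊕ (ιB × Fin k))

variable (e_ : Fin k → M) (lam_ : Fin k → (M →ₗ[A] A))
variable (A' : Type) [CommRing A'] [Algebra A A']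

/-- components of the universal multiplication -/
noncomputable def vmu (y : Idx k ιB → A') (i j : Fin k) : A' ⊗[A] M :=
  ∑ l, y (Sum.inl (i, j, l)) • em e_ A' l

/-- the universal `μ` -/
noncomputable def muP (y : Idx k ιB → A') : A' ⊗[A] (M →ₗ[A] (M →ₗ[A] M)) :=
  ∑ i, box A' (lam_ i) (∑ j, box A' (lam_ j) (vmu e_ A' y i j))

/-- the multiplication at the point `y` -/
noncomputable def mulP (y : Idx k ιB → A') :
    (A' ⊗[A] M) →ₗ[A'] (A' ⊗[A] M) →ₗ[A'] (A' ⊗[A] M) :=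
  mulMap A' (muP e_ lam_ A' y)

/-- the unit at the point `y` -/
noncomputable def oneP (y : Idx k ιB → A') : A' ⊗[A] M :=
  ∑ l, y (Sum.inr (Sum.inl l)) • em e_ A' l

/-- the generator images at the point `y` -/
noncomputable def gP (y : Idx k ιB → A') (i : ιB) : A' ⊗[A] M :=
  ∑ l, y (Sum.inr (Sum.inr (i, l))) • em e_ A' l

/-- left-bracketed evaluation of a monomial -/
noncomputable def lfold (y : Idx k ιB → A') (d : ιB →₀ ℕ) : A' ⊗[A] M :=
  (d.toMultiset.toList).foldl
    (fun acc i => mulP e_ lam_ A' y acc (gP e_ A' y i)) (oneP e_ A' y)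

/-- linear extension: evaluation of polynomials -/
noncomputable def Ep (y : Idx k ιB → A') : MvPolynomial ιB A →ₗ[A] A' ⊗[A] M :=
  (MvPolynomial.basisMonomials ιB A).constr A (fun d => lfold e_ lam_ A' y d)

lemma Ep_monomial (y : Idx k ιB → A') (d : ιB →₀ ℕ) (a : A) :
    Ep e_ lam_ A' y (MvPolynomial.monomial d a) = a • lfold e_ lam_ A' y d := by
  have h1 : (MvPolynomial.monomial d a : MvPolynomial ιB A)
      = a • (MvPolynomial.basisMonomials ιB A) d := by
    rw [MvPolynomial.coe_basisMonomials]
    rw [MvPolynomial.smul_monomial, smul_eq_mul, mul_one]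
  rw [Ep, h1, map_smul, Module.Basis.constr_basis]

lemma Ep_one (y : Idx k ιB → A') : Ep e_ lam_ A' y 1 = oneP e_ A' y := by
  have h1 : (1 : MvPolynomial ιB A) = MvPolynomial.monomial 0 1 := by
    simp [MvPolynomial.monomial_zero']
  rw [h1, Ep_monomial, one_smul, lfold]
  simp

variable {A'' : Type} [CommRing A''] [Algebra A A''] (φ : A' →ₐ[A] A'')

lemma tmap_sumsmul (y : Fin k → A') :
    tmap φ (∑ l, y l • em e_ A' l) = ∑ l, φ (y l) • em e_ A'' l := by
  rw [map_sum]
  simp only [tmap_smul, tmap_em]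

lemma tmap_oneP (y : Idx k ιB → A') :
    tmap φ (oneP e_ A' y) = oneP e_ A'' (φ ∘ y) := by
  rw [oneP, tmap_sumsmul]; rfl

lemma tmap_gP (y : Idx k ιB → A') (i : ιB) :
    tmap φ (gP e_ A' y i) = gP e_ A'' (φ ∘ y) i := by
  rw [gP, tmap_sumsmul]; rfl

lemma tmap_vmu (y : Idx k ιB → A') (i j : Fin k) :
    tmap φ (vmu e_ A' y i j) = vmu e_ A'' (φ ∘ y) i j := by
  rw [vmu, tmap_sumsmul]; rfl

lemma tmap_muP (y : Idx k ιB → A') :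
    tmap φ (muP e_ lam_ A' y) = muP e_ lam_ A'' (φ ∘ y) := by
  rw [muP, map_sum, muP]
  congr 1; funext i
  rw [tmap_box]
  congr 1
  rw [map_sum]
  congr 1; funext j
  rw [tmap_box, tmap_vmu]

lemma tmap_mulP (y : Idx k ιB → A') (x z : A' ⊗[A] M) :
    tmap φ (mulP e_ lam_ A' y x z) = mulP e_ lam_ A'' (φ ∘ y) (tmap φ x) (tmap φ z) := by
  rw [mulP, tmap_mulMap, tmap_muP, mulP]

lemma tmap_lfold (y : Idx k ιB → A') (d : ιB →₀ ℕ) :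
    tmap φ (lfold e_ lam_ A' y d) = lfold e_ lam_ A'' (φ ∘ y) d := by
  have aux : ∀ (L : List ιB) (acc : A' ⊗[A] M),
      tmap φ (L.foldl (fun acc i => mulP e_ lam_ A' y acc (gP e_ A' y i)) acc)
      = L.foldl (fun acc i => mulP e_ lam_ A'' (⇑φ ∘ y) acc (gP e_ A'' (⇑φ ∘ y) i))
        (tmap φ acc) := by
    intro L
    induction L with
    | nil => intro acc; rfl
    | cons a L ih =>
      intro acc
      rw [List.foldl_cons, List.foldl_cons, ih, tmap_mulP, tmap_gP]
  rw [lfold, lfold, aux, tmap_oneP]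

lemma tmap_Ep (y : Idx k ιB → A') (p : MvPolynomial ιB A) :
    tmap φ (Ep e_ lam_ A' y p) = Ep e_ lam_ A'' (φ ∘ y) p := by
  induction p using MvPolynomial.induction_on' with
  | monomial d a => rw [Ep_monomial, map_smul, tmap_lfold, Ep_monomial]
  | add p q hp hq => rw [map_add, map_add, hp, hq, map_add]

end Points

section Ring

variable {A : Type} [CommRing A]
variable {B : Type} [CommRing B] [Algebra A B]
variable {M : Type} [AddCommGroup M] [Module A M]
variable {k : ℕ} {ιB : Type}
variable (e_ : Fin k → M) (lam_ : Fin k → (M →ₗ[A] A))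
variable (A' : Type) [CommRing A'] [Algebra A A']

/-- the commutative ring structure on `A' ⊗ M` attached to a good point `y`. -/
@[reducible]
noncomputable def ringY (y : Idx k ιB → A')
    (h1 : ∀ x z, mulP e_ lam_ A' y x z = mulP e_ lam_ A' y z x)
    (h2 : ∀ x z w, mulP e_ lam_ A' y (mulP e_ lam_ A' y x z) w
      = mulP e_ lam_ A' y x (mulP e_ lam_ A' y z w))
    (h3 : ∀ x, mulP e_ lam_ A' y (oneP e_ A' y) x = x) :
    CommRing (A' ⊗[A] M) :=
  { (inferInstance : AddCommGroup (A' ⊗[A] M)) with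
    mul := fun x z => mulP e_ lam_ A' y x z
    one := oneP e_ A' y
    left_distrib := fun a b c => map_add _ _ _
    right_distrib := fun a b c => by
      show mulP e_ lam_ A' y (a + b) c = _
      rw [map_add]; rfl
    zero_mul := fun a => by
      show mulP e_ lam_ A' y 0 a = 0
      rw [map_zero]; rfl
    mul_zero := fun a => map_zero _
    mul_assoc := h2
    one_mul := h3
    mul_one := fun x => by
      show mulP e_ lam_ A' y x (oneP e_ A' y) = x
      rw [← h1]; exact h3 x
    mul_comm := h1 }

/-- the `A`-algebra structure. -/
@[reducible]
noncomputable def algY (y : Idx k ιB → A')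
    (h1 : ∀ x z, mulP e_ lam_ A' y x z = mulP e_ lam_ A' y z x)
    (h2 : ∀ x z w, mulP e_ lam_ A' y (mulP e_ lam_ A' y x z) w
      = mulP e_ lam_ A' y x (mulP e_ lam_ A' y z w))
    (h3 : ∀ x, mulP e_ lam_ A' y (oneP e_ A' y) x = x) :
    letI := ringY e_ lam_ A' y h1 h2 h3
    Algebra A (A' ⊗[A] M) := by
  letI := ringY e_ lam_ A' y h1 h2 h3
  letI : Module A (A' ⊗[A] M) := TensorProduct.leftModule
  refine Algebra.ofModule ?_ ?_
  · intro r x z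
    show mulP e_ lam_ A' y (r • x) z = r • mulP e_ lam_ A' y x z
    rw [← algebraMap_smul A' r x, map_smul, LinearMap.smul_apply, algebraMap_smul]
  · intro r x z
    show mulP e_ lam_ A' y x (r • z) = r • mulP e_ lam_ A' y x z
    rw [← algebraMap_smul A' r z, map_smul, algebraMap_smul]

lemma lfold_prod (y : Idx k ιB → A')
    (h1 : ∀ x z, mulP e_ lam_ A' y x z = mulP e_ lam_ A' y z x)
    (h2 : ∀ x z w, mulP e_ lam_ A' y (mulP e_ lam_ A' y x z) w
      = mulP e_ lam_ A' y x (mulP e_ lam_ A' y z w))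
    (h3 : ∀ x, mulP e_ lam_ A' y (oneP e_ A' y) x = x)
    (d : ιB →₀ ℕ) :
    lfold e_ lam_ A' y d =
      (letI := ringY e_ lam_ A' y h1 h2 h3
       d.prod fun i kk => gP e_ A' y i ^ kk) := by
  letI := ringY e_ lam_ A' y h1 h2 h3
  have hfold : ∀ (L : List ιB) (z : A' ⊗[A] M),
      L.foldl (fun acc i => mulP e_ lam_ A' y acc (gP e_ A' y i)) z
        = z * (L.map (gP e_ A' y)).prod := by
    intro L
    induction L with
    | nil => intro z; show z = z * 1; rw [mul_one]
    | cons a L ih =>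
      intro z
      rw [List.foldl_cons, ih, List.map_cons, List.prod_cons]
      show mulP e_ lam_ A' y z (gP e_ A' y a) * (List.map (gP e_ A' y) L).prod = _
      show z * gP e_ A' y a * (List.map (gP e_ A' y) L).prod = _
      rw [mul_assoc]
  rw [lfold, hfold]
  show (1 : A' ⊗[A] M) * _ = _
  rw [one_mul]
  have h5 : (d.toMultiset.map (gP e_ A' y))
      = ((d.toMultiset.toList.map (gP e_ A' y) : List (A' ⊗[A] M)) : Multiset (A' ⊗[A] M)) := by
    conv_lhs => rw [← Multiset.coe_toList d.toMultiset]
    rw [Multiset.map_coe]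
  have h4 : ((d.toMultiset.toList.map (gP e_ A' y) : List (A' ⊗[A] M))).prod
      = ((d.toMultiset.map (gP e_ A' y) : Multiset (A' ⊗[A] M))).prod := by
    rw [h5, Multiset.prod_coe (d.toMultiset.toList.map (gP e_ A' y))]
  rw [h4, Finsupp.toMultiset_map, Finsupp.prod_toMultiset,
    Finsupp.prod_mapDomain_index (fun b => pow_zero _) (fun b m1 m2 => pow_add _ _ _)]

lemma Ep_eq_aeval (y : Idx k ιB → A')
    (h1 : ∀ x z, mulP e_ lam_ A' y x z = mulP e_ lam_ A' y z x)
    (h2 : ∀ x z w, mulP e_ lam_ A' y (mulP e_ lam_ A' y x z) w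
      = mulP e_ lam_ A' y x (mulP e_ lam_ A' y z w))
    (h3 : ∀ x, mulP e_ lam_ A' y (oneP e_ A' y) x = x)
    (p : MvPolynomial ιB A) :
    Ep e_ lam_ A' y p =
      (letI := ringY e_ lam_ A' y h1 h2 h3
       letI := algY e_ lam_ A' y h1 h2 h3
       MvPolynomial.aeval (gP e_ A' y) p) := by
  letI := ringY e_ lam_ A' y h1 h2 h3
  letI := algY e_ lam_ A' y h1 h2 h3
  induction p using MvPolynomial.induction_on' with
  | monomial d a =>
    rw [Ep_monomial, MvPolynomial.aeval_monomial,
      lfold_prod e_ lam_ A' y h1 h2 h3 d, ← Algebra.smul_def]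
  | add p q hp hq => rw [map_add, map_add, hp, hq]

end Ring

section RingB

variable {A : Type} [CommRing A]
variable {B : Type} [CommRing B] [Algebra A B]
variable {M : Type} [AddCommGroup M] [Module A M]
variable {k : ℕ} {ιB : Type}
variable (e_ : Fin k → M) (lam_ : Fin k → (M →ₗ[A] A))
variable (π : MvPolynomial ιB A →ₐ[A] B)
variable (A' : Type) [CommRing A'] [Algebra A A']

/-- conditions for a point to define an algebra structure -/
structure Good (y : Idx k ιB → A') : Prop where
  comm : ∀ x z, mulP e_ lam_ A' y x z = mulP e_ lam_ A' y z x
  assoc : ∀ x z w, mulP e_ lam_ A' y (mulP e_ lam_ A' y x z) w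
    = mulP e_ lam_ A' y x (mulP e_ lam_ A' y z w)
  unit : ∀ x, mulP e_ lam_ A' y (oneP e_ A' y) x = x
  ker : ∀ p ∈ RingHom.ker π, Ep e_ lam_ A' y p = 0

lemma Ep_mul (y : Idx k ιB → A') (hg : Good e_ lam_ π A' y) (p q : MvPolynomial ιB A) :
    Ep e_ lam_ A' y (p * q)
      = mulP e_ lam_ A' y (Ep e_ lam_ A' y p) (Ep e_ lam_ A' y q) := by
  letI := ringY e_ lam_ A' y hg.comm hg.assoc hg.unit
  letI := algY e_ lam_ A' y hg.comm hg.assoc hg.unit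
  rw [Ep_eq_aeval e_ lam_ A' y hg.comm hg.assoc hg.unit,
    Ep_eq_aeval e_ lam_ A' y hg.comm hg.assoc hg.unit,
    Ep_eq_aeval e_ lam_ A' y hg.comm hg.assoc hg.unit, map_mul]
  rfl

lemma exists_psi (hπ : Function.Surjective π) (y : Idx k ιB → A')
    (hg : Good e_ lam_ π A' y) :
    ∃ ψ : B →ₗ[A] A' ⊗[A] M, ∀ p, ψ (π p) = Ep e_ lam_ A' y p := by
  letI := ringY e_ lam_ A' y hg.comm hg.assoc hg.unit
  letI := algY e_ lam_ A' y hg.comm hg.assoc hg.unit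
  have hf0 : ∀ p ∈ RingHom.ker π, MvPolynomial.aeval (gP e_ A' y) p = (0 : A' ⊗[A] M) := by
    intro p hp
    rw [← Ep_eq_aeval e_ lam_ A' y hg.comm hg.assoc hg.unit]
    exact hg.ker p hp
  let e := Ideal.quotientKerAlgEquivOfSurjective (f := π) hπ
  let ψa : B →ₐ[A] A' ⊗[A] M :=
    (Ideal.Quotient.liftₐ (RingHom.ker π) (MvPolynomial.aeval (gP e_ A' y)) hf0).comp
      e.symm.toAlgHom
  refine ⟨ψa.toLinearMap, fun p => ?_⟩
  have h1 : e.symm (π p) = Ideal.Quotient.mk (RingHom.ker π) p := by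
    rw [AlgEquiv.symm_apply_eq]
    exact (Ideal.quotientKerAlgEquivOfSurjective_mk hπ p).symm
  show ψa (π p) = _
  rw [AlgHom.comp_apply]
  rw [show (e.symm.toAlgHom (π p)) = Ideal.Quotient.mk (RingHom.ker π) p from h1]
  rw [Ideal.Quotient.liftₐ_apply]
  exact (Ep_eq_aeval e_ lam_ A' y hg.comm hg.assoc hg.unit p).symm

lemma Ep_struct (s : BAlgebraStructure A B M A') (y : Idx k ιB → A')
    (hmul : mulP e_ lam_ A' y = s.mul) (hone : oneP e_ A' y = s.one)
    (hgen : ∀ i, gP e_ A' y i = s.algMap (1 ⊗ₜ π (MvPolynomial.X i)))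
    (p : MvPolynomial ιB A) :
    Ep e_ lam_ A' y p = s.algMap (1 ⊗ₜ π p) := by
  have h1 : ∀ x z, mulP e_ lam_ A' y x z = mulP e_ lam_ A' y z x := by
    intro x z; rw [hmul]; exact s.mul_comm x z
  have h2 : ∀ x z w, mulP e_ lam_ A' y (mulP e_ lam_ A' y x z) w
      = mulP e_ lam_ A' y x (mulP e_ lam_ A' y z w) := by
    intro x z w; rw [hmul]; exact s.mul_assoc x z w
  have h3 : ∀ x, mulP e_ lam_ A' y (oneP e_ A' y) x = x := by
    intro x; rw [hmul, hone]; exact s.one_mul x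
  letI := ringY e_ lam_ A' y h1 h2 h3
  letI := algY e_ lam_ A' y h1 h2 h3
  let χ : MvPolynomial ιB A →ₐ[A] A' ⊗[A] M :=
    { toFun := fun p => s.algMap (1 ⊗ₜ π p)
      map_one' := by
        show s.algMap (1 ⊗ₜ π 1) = oneP e_ A' y
        rw [map_one π, ← Algebra.TensorProduct.one_def, s.algMap_one, ← hone]
      map_mul' := by
        intro p q
        show s.algMap (1 ⊗ₜ π (p * q)) = mulP e_ lam_ A' y _ _
        rw [map_mul π, show ((1 : A') ⊗ₜ[A] (π p * π q))
            = ((1 : A') ⊗ₜ[A] π p) * ((1 : A') ⊗ₜ[A] π q) by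
          rw [Algebra.TensorProduct.tmul_mul_tmul, one_mul], s.algMap_mul, hmul]
      map_zero' := by
        show s.algMap (1 ⊗ₜ π 0) = 0
        rw [map_zero π, TensorProduct.tmul_zero, map_zero]
      map_add' := by
        intro p q
        show s.algMap (1 ⊗ₜ π (p + q)) = s.algMap (1 ⊗ₜ π p) + s.algMap (1 ⊗ₜ π q)
        rw [map_add π, TensorProduct.tmul_add, map_add]
      commutes' := by
        intro r
        show s.algMap (1 ⊗ₜ π (algebraMap A (MvPolynomial ιB A) r)) = _
        rw [AlgHom.commutes]
        have hr : (1 : A') ⊗ₜ[A] (algebraMap A B r) = r • (1 : A' ⊗[A] B) := by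
          rw [Algebra.TensorProduct.one_def, ← TensorProduct.tmul_smul,
            Algebra.algebraMap_eq_smul_one]
        rw [hr, ← algebraMap_smul A' r (1 : A' ⊗[A] B), map_smul,
          algebraMap_smul, s.algMap_one, ← hone]
        rw [Algebra.algebraMap_eq_smul_one]
        rfl }
  have hχ : χ = MvPolynomial.aeval (gP e_ A' y) := by
    apply MvPolynomial.algHom_ext
    intro i
    show s.algMap (1 ⊗ₜ π (MvPolynomial.X i)) = _
    rw [← hgen i, MvPolynomial.aeval_X]
  rw [Ep_eq_aeval e_ lam_ A' y h1 h2 h3]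
  exact (AlgHom.congr_fun hχ p).symm

/-- the linear map `B → A' ⊗ M` attached to a good point. -/
noncomputable def psi (hπ : Function.Surjective π) (y : Idx k ιB → A')
    (hg : Good e_ lam_ π A' y) : B →ₗ[A] A' ⊗[A] M :=
  Classical.choose (exists_psi e_ lam_ π A' hπ y hg)

lemma psi_spec (hπ : Function.Surjective π) (y : Idx k ιB → A')
    (hg : Good e_ lam_ π A' y) (p : MvPolynomial ιB A) :
    psi e_ lam_ π A' hπ y hg (π p) = Ep e_ lam_ A' y p :=
  Classical.choose_spec (exists_psi e_ lam_ π A' hπ y hg) p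

/-- the algebra structure attached to a good point. -/
noncomputable def build (hπ : Function.Surjective π) (y : Idx k ιB → A')
    (hg : Good e_ lam_ π A' y) : BAlgebraStructure A B M A' where
  mul := mulP e_ lam_ A' y
  one := oneP e_ A' y
  mul_comm := hg.comm
  mul_assoc := hg.assoc
  one_mul := hg.unit
  algMap := LinearMap.liftBaseChange A' (psi e_ lam_ π A' hπ y hg)
  algMap_one := by
    rw [Algebra.TensorProduct.one_def, LinearMap.liftBaseChange_tmul, one_smul]
    rw [show (1 : B) = π 1 from (map_one π).symm, psi_spec, Ep_one]
  algMap_mul := by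
    intro b₁ b₂
    induction b₁ using TensorProduct.induction_on with
    | zero => simp
    | tmul a b =>
      induction b₂ using TensorProduct.induction_on with
      | zero => simp
      | tmul a' b' =>
        obtain ⟨p, rfl⟩ := hπ b
        obtain ⟨q, rfl⟩ := hπ b'
        rw [Algebra.TensorProduct.tmul_mul_tmul, LinearMap.liftBaseChange_tmul,
          LinearMap.liftBaseChange_tmul, LinearMap.liftBaseChange_tmul,
          ← map_mul π, psi_spec, psi_spec, psi_spec,
          Ep_mul e_ lam_ π A' y hg p q, map_smul, map_smul,
          LinearMap.smul_apply, mul_comm a a', mul_smul]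
      | add u v hu hv =>
        simp only [mul_add, map_add, hu, hv]
    | add u v hu hv =>
      simp only [add_mul, map_add, hu, hv, LinearMap.add_apply]

end RingB

section Univ

variable {A : Type} [CommRing A]
variable {B : Type} [CommRing B] [Algebra A B]
variable {M : Type} [AddCommGroup M] [Module A M]
variable {k : ℕ} {ιB : Type}
variable (e_ : Fin k → M) (lam_ : Fin k → (M →ₗ[A] A))
variable (π : MvPolynomial ιB A →ₐ[A] B)

/-- the polynomial algebra -/
abbrev Pk (A : Type) [CommRing A] (k : ℕ) (ιB : Type) : Type := MvPolynomial (Idx k ιB) A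

/-- the universal coordinates -/
noncomputable def uX : Idx k ιB → MvPolynomial (Idx k ιB) A := MvPolynomial.X

/-- expressions for the coordinate relations -/
noncomputable def exprA : Idx k ιB → MvPolynomial (Idx k ιB) A := fun v =>
  match v with
  | .inl (i, j, l) => contr (Pk A k ιB) (lam_ l)
      (mulP e_ lam_ (Pk A k ιB) uX (em e_ (Pk A k ιB) i) (em e_ (Pk A k ιB) j))
  | .inr (.inl l) => contr (Pk A k ιB) (lam_ l) (oneP e_ (Pk A k ιB) uX)
  | .inr (.inr (i, l)) => contr (Pk A k ιB) (lam_ l) (gP e_ (Pk A k ιB) uX i)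

/-- the generators of the universal ideal -/
noncomputable def gens : Set (MvPolynomial (Idx k ιB) A) :=
  (Set.range fun v => uX v - exprA e_ lam_ v) ∪
  {q | ∃ i j l, q = contr (Pk A k ιB) (lam_ l)
    (mulP e_ lam_ (Pk A k ιB) uX (em e_ (Pk A k ιB) i) (em e_ (Pk A k ιB) j)
      - mulP e_ lam_ (Pk A k ιB) uX (em e_ (Pk A k ιB) j) (em e_ (Pk A k ιB) i))} ∪
  {q | ∃ i j r l, q = contr (Pk A k ιB) (lam_ l)
    (mulP e_ lam_ (Pk A k ιB) uX (mulP e_ lam_ (Pk A k ιB) uX (em e_ (Pk A k ιB) i) (em e_ (Pk A k ιB) j)) (em e_ (Pk A k ιB) r)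
      - mulP e_ lam_ (Pk A k ιB) uX (em e_ (Pk A k ιB) i) (mulP e_ lam_ (Pk A k ιB) uX (em e_ (Pk A k ιB) j) (em e_ (Pk A k ιB) r)))} ∪
  {q | ∃ i l, q = contr (Pk A k ιB) (lam_ l)
    (mulP e_ lam_ (Pk A k ιB) uX (oneP e_ (Pk A k ιB) uX) (em e_ (Pk A k ιB) i) - em e_ (Pk A k ιB) i)} ∪
  {q | ∃ p ∈ RingHom.ker π, ∃ l, q = contr (Pk A k ιB) (lam_ l) (Ep e_ lam_ (Pk A k ιB) uX p)}

/-- the universal ideal -/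
noncomputable def JJ : Ideal (MvPolynomial (Idx k ιB) A) :=
  Ideal.span (gens e_ lam_ π)

variable (hdb : ∀ m : M, ∑ i, lam_ i m • e_ i = m)
variable (A' : Type) [CommRing A'] [Algebra A A']

include e_ hdb in
lemma coordZero (z : A' ⊗[A] M) (h : ∀ l, contr A' (lam_ l) z = 0) : z = 0 := by
  rw [← db e_ lam_ hdb A' z]
  simp [h]

include e_ hdb in
lemma tmap_zero_of_kills (H : MvPolynomial (Idx k ιB) A →ₐ[A] A')
    (z : MvPolynomial (Idx k ιB) A ⊗[A] M)
    (h : ∀ l, H (contr (Pk A k ιB) (lam_ l) z) = 0) : tmap H z = 0 := by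
  apply coordZero e_ lam_ hdb
  intro l
  rw [← contr_tmap]
  exact h l

include hdb in
lemma good_of_kills (H : MvPolynomial (Idx k ιB) A →ₐ[A] A')
    (hk : ∀ q ∈ gens e_ lam_ π, H q = 0) : Good e_ lam_ π A' (⇑H ∘ uX) := by
  have hpair : ∀ i j, mulP e_ lam_ A' (⇑H ∘ uX) (em e_ A' i) (em e_ A' j)
      = mulP e_ lam_ A' (⇑H ∘ uX) (em e_ A' j) (em e_ A' i) := by
    intro i j
    have h0 : tmap H (mulP e_ lam_ (Pk A k ιB) uX (em e_ (Pk A k ιB) i) (em e_ (Pk A k ιB) j)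
        - mulP e_ lam_ (Pk A k ιB) uX (em e_ (Pk A k ιB) j) (em e_ (Pk A k ιB) i)) = 0 := by
      apply tmap_zero_of_kills e_ lam_ hdb
      intro l
      exact hk _ (Or.inl (Or.inl (Or.inl (Or.inr ⟨i, j, l, rfl⟩))))
    simp only [map_sub, tmap_mulP, tmap_em] at h0
    rw [sub_eq_zero] at h0
    exact h0
  have hcomm : mulP e_ lam_ A' (⇑H ∘ uX) = (mulP e_ lam_ A' (⇑H ∘ uX)).flip := by
    apply ext_em e_ lam_ hdb
    intro i
    apply ext_em e_ lam_ hdb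
    intro j
    rw [LinearMap.flip_apply]
    exact hpair i j
  have htriple : ∀ i j r, mulP e_ lam_ A' (⇑H ∘ uX)
        (mulP e_ lam_ A' (⇑H ∘ uX) (em e_ A' i) (em e_ A' j)) (em e_ A' r)
      = mulP e_ lam_ A' (⇑H ∘ uX) (em e_ A' i)
        (mulP e_ lam_ A' (⇑H ∘ uX) (em e_ A' j) (em e_ A' r)) := by
    intro i j r
    have h0 : tmap H (mulP e_ lam_ (Pk A k ιB) uX (mulP e_ lam_ (Pk A k ιB) uX (em e_ (Pk A k ιB) i) (em e_ (Pk A k ιB) j)) (em e_ (Pk A k ιB) r)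
        - mulP e_ lam_ (Pk A k ιB) uX (em e_ (Pk A k ιB) i) (mulP e_ lam_ (Pk A k ιB) uX (em e_ (Pk A k ιB) j) (em e_ (Pk A k ιB) r))) = 0 := by
      apply tmap_zero_of_kills e_ lam_ hdb
      intro l
      exact hk _ (Or.inl (Or.inl (Or.inr ⟨i, j, r, l, rfl⟩)))
    simp only [map_sub, tmap_mulP, tmap_em] at h0
    rw [sub_eq_zero] at h0
    exact h0
  have hunit : ∀ i, mulP e_ lam_ A' (⇑H ∘ uX) (oneP e_ A' (⇑H ∘ uX)) (em e_ A' i)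
      = em e_ A' i := by
    intro i
    have h0 : tmap H (mulP e_ lam_ (Pk A k ιB) uX (oneP e_ (Pk A k ιB) uX) (em e_ (Pk A k ιB) i) - em e_ (Pk A k ιB) i) = 0 := by
      apply tmap_zero_of_kills e_ lam_ hdb
      intro l
      exact hk _ (Or.inl (Or.inr ⟨i, l, rfl⟩))
    simp only [map_sub, tmap_mulP, tmap_oneP, tmap_em] at h0
    rw [sub_eq_zero] at h0
    exact h0
  constructor
  · intro x z
    exact LinearMap.congr_fun (LinearMap.congr_fun hcomm x) z
  · -- associativity
    have hEq : (mulP e_ lam_ A' (⇑H ∘ uX)).compr₂ (mulP e_ lam_ A' (⇑H ∘ uX))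
        = (((LinearMap.llcomp A' (A' ⊗[A] M) (A' ⊗[A] M) (A' ⊗[A] M)).comp
            (mulP e_ lam_ A' (⇑H ∘ uX))).compl₂ (mulP e_ lam_ A' (⇑H ∘ uX))) := by
      refine ext_em e_ lam_ hdb A'
        (Z := (A' ⊗[A] M) →ₗ[A'] ((A' ⊗[A] M) →ₗ[A'] (A' ⊗[A] M))) ?_
      intro i
      refine ext_em e_ lam_ hdb A'
        (Z := (A' ⊗[A] M) →ₗ[A'] (A' ⊗[A] M)) ?_
      intro j
      refine ext_em e_ lam_ hdb A' (Z := A' ⊗[A] M) ?_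
      intro r
      simp only [LinearMap.compr₂_apply, LinearMap.compl₂_apply, LinearMap.comp_apply,
        LinearMap.llcomp_apply]
      exact htriple i j r
    intro x z w
    have := LinearMap.congr_fun (LinearMap.congr_fun (LinearMap.congr_fun hEq x) z) w
    simpa only [LinearMap.compr₂_apply, LinearMap.compl₂_apply, LinearMap.comp_apply,
      LinearMap.llcomp_apply] using this
  · intro x
    have hEq : mulP e_ lam_ A' (⇑H ∘ uX) (oneP e_ A' (⇑H ∘ uX)) = LinearMap.id := by
      apply ext_em e_ lam_ hdb
      intro i
      rw [LinearMap.id_coe, id_eq]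
      exact hunit i
    exact LinearMap.congr_fun hEq x
  · intro p hp
    have h0 : tmap H (Ep e_ lam_ (Pk A k ιB) uX p) = 0 := by
      apply tmap_zero_of_kills e_ lam_ hdb
      intro l
      exact hk _ (Or.inr ⟨p, hp, l, rfl⟩)
    rw [tmap_Ep] at h0
    exact h0

end Univ

section Main

variable {A : Type} [CommRing A]
variable {B : Type} [CommRing B] [Algebra A B]
variable {M : Type} [AddCommGroup M] [Module A M]
variable {k : ℕ} {ιB : Type}
variable (e_ : Fin k → M) (lam_ : Fin k → (M →ₗ[A] A))
variable (π : MvPolynomial ιB A →ₐ[A] B)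
variable (hdb : ∀ m : M, ∑ i, lam_ i m • e_ i = m)
variable (hπ : Function.Surjective π)
variable (A' : Type) [CommRing A'] [Algebra A A']

/-- the coordinates attached to an algebra structure -/
noncomputable def ys (s : BAlgebraStructure A B M A') : Idx k ιB → A' := fun v =>
  match v with
  | .inl (i, j, l) => contr A' (lam_ l) (s.mul (em e_ A' i) (em e_ A' j))
  | .inr (.inl l) => contr A' (lam_ l) s.one
  | .inr (.inr (i, l)) => contr A' (lam_ l) (s.algMap (1 ⊗ₜ π (MvPolynomial.X i)))

include hdb in
lemma vmu_ys (s : BAlgebraStructure A B M A') (i j : Fin k) :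
    vmu e_ A' (ys e_ lam_ π A' s) i j = s.mul (em e_ A' i) (em e_ A' j) := by
  rw [vmu]
  exact db e_ lam_ hdb A' _

include hdb in
lemma oneP_ys (s : BAlgebraStructure A B M A') :
    oneP e_ A' (ys e_ lam_ π A' s) = s.one := by
  rw [oneP]
  exact db e_ lam_ hdb A' _

include hdb in
lemma gP_ys (s : BAlgebraStructure A B M A') (i : ιB) :
    gP e_ A' (ys e_ lam_ π A' s) i = s.algMap (1 ⊗ₜ π (MvPolynomial.X i)) := by
  rw [gP]
  exact db e_ lam_ hdb A' _

include hdb in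
lemma mulP_ys (s : BAlgebraStructure A B M A') :
    mulP e_ lam_ A' (ys e_ lam_ π A' s) = s.mul := by
  rw [mulP, muP]
  simp only [vmu_ys e_ lam_ π hdb A' s]
  exact mulMap_recon A' e_ lam_ hdb s.mul

include hdb in
lemma aeval_gens (s : BAlgebraStructure A B M A') :
    ∀ q ∈ gens e_ lam_ π, MvPolynomial.aeval (ys e_ lam_ π A' s) q = 0 := by
  set Hs := (MvPolynomial.aeval (ys e_ lam_ π A' s) : MvPolynomial (Idx k ιB) A →ₐ[A] A')
    with hHs
  have hys : ⇑Hs ∘ uX = ys e_ lam_ π A' s := by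
    funext v
    simp [hHs, uX]
  rintro q ((((⟨v, rfl⟩ | ⟨i, j, l, rfl⟩) | ⟨i, j, r, l, rfl⟩) | ⟨i, l, rfl⟩) | ⟨p, hp, l, rfl⟩)
  · rw [map_sub]
    have h1 : Hs (uX v) = ys e_ lam_ π A' s v := by simp [hHs, uX]
    have h2 : Hs (exprA e_ lam_ v) = ys e_ lam_ π A' s v := by
      match v with
      | .inl (i, j, l) =>
        show Hs (contr _ (lam_ l) (mulP e_ lam_ _ uX (em e_ _ i) (em e_ _ j))) = _
        rw [contr_tmap, tmap_mulP, tmap_em, tmap_em, hys, mulP_ys e_ lam_ π hdb A' s]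
        rfl
      | .inr (.inl l) =>
        show Hs (contr _ (lam_ l) (oneP e_ _ uX)) = _
        rw [contr_tmap, tmap_oneP, hys, oneP_ys e_ lam_ π hdb A' s]
        rfl
      | .inr (.inr (i, l)) =>
        show Hs (contr _ (lam_ l) (gP e_ _ uX i)) = _
        rw [contr_tmap, tmap_gP, hys, gP_ys e_ lam_ π hdb A' s]
        rfl
    rw [h1, h2, sub_self]
  · rw [contr_tmap, map_sub]
    simp only [tmap_mulP, tmap_em, hys, mulP_ys e_ lam_ π hdb A' s]
    rw [s.mul_comm (em e_ A' i) (em e_ A' j), sub_self, map_zero]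
  · rw [contr_tmap, map_sub]
    simp only [tmap_mulP, tmap_em, hys, mulP_ys e_ lam_ π hdb A' s]
    rw [s.mul_assoc (em e_ A' i) (em e_ A' j) (em e_ A' r), sub_self, map_zero]
  · rw [contr_tmap, map_sub]
    simp only [tmap_mulP, tmap_oneP, tmap_em, hys, mulP_ys e_ lam_ π hdb A' s,
      oneP_ys e_ lam_ π hdb A' s]
    rw [s.one_mul (em e_ A' i), sub_self, map_zero]
  · rw [contr_tmap, tmap_Ep, hys]
    rw [Ep_struct e_ lam_ π A' s _ (mulP_ys e_ lam_ π hdb A' s) (oneP_ys e_ lam_ π hdb A' s)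
      (fun i => gP_ys e_ lam_ π hdb A' s i) p]
    rw [RingHom.mem_ker] at hp
    rw [hp, TensorProduct.tmul_zero, map_zero, map_zero]

lemma balg_ext {s t : BAlgebraStructure A B M A'} (h1 : s.mul = t.mul)
    (h2 : s.one = t.one) (h3 : s.algMap = t.algMap) : s = t := by
  cases s; cases t
  dsimp only at h1 h2 h3
  subst h1; subst h2; subst h3
  rfl

lemma kills_of_hom (h : (MvPolynomial (Idx k ιB) A ⧸ JJ e_ lam_ π) →ₐ[A] A') :
    ∀ q ∈ gens e_ lam_ π, (h.comp (Ideal.Quotient.mkₐ A (JJ e_ lam_ π))) q = 0 := by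
  intro q hq
  have h0 : (Ideal.Quotient.mkₐ A (JJ e_ lam_ π)) q = 0 := by
    rw [Ideal.Quotient.mkₐ_eq_mk, Ideal.Quotient.eq_zero_iff_mem]
    exact Ideal.subset_span hq
  rw [AlgHom.comp_apply, h0, map_zero]

/-- the forward map of the equivalence -/
noncomputable def toFunQ (h : (MvPolynomial (Idx k ιB) A ⧸ JJ e_ lam_ π) →ₐ[A] A') :
    BAlgebraStructure A B M A' :=
  build e_ lam_ π A' hπ (⇑(h.comp (Ideal.Quotient.mkₐ A (JJ e_ lam_ π))) ∘ uX)
    (good_of_kills e_ lam_ π hdb A' _ (kills_of_hom e_ lam_ π A' h))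

/-- the inverse map of the equivalence -/
noncomputable def invFunQ (s : BAlgebraStructure A B M A') :
    (MvPolynomial (Idx k ιB) A ⧸ JJ e_ lam_ π) →ₐ[A] A' :=
  Ideal.Quotient.liftₐ (JJ e_ lam_ π) (MvPolynomial.aeval (ys e_ lam_ π A' s))
    (fun a ha => by
      have hle : JJ e_ lam_ π ≤
          RingHom.ker ((MvPolynomial.aeval (ys e_ lam_ π A' s) :
            MvPolynomial (Idx k ιB) A →ₐ[A] A') : MvPolynomial (Idx k ιB) A →+* A') := by
        apply Ideal.span_le.mpr
        intro q hq
        exact aeval_gens e_ lam_ π hdb A' s q hq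
      exact RingHom.mem_ker.mp (hle ha))

lemma invFunQ_mk (s : BAlgebraStructure A B M A') (p : MvPolynomial (Idx k ιB) A) :
    invFunQ e_ lam_ π hdb A' s (Ideal.Quotient.mk (JJ e_ lam_ π) p)
      = MvPolynomial.aeval (ys e_ lam_ π A' s) p := by
  rw [invFunQ, Ideal.Quotient.liftₐ_apply]
  rfl

end Main

section Final

variable {A : Type} [CommRing A]
variable {B : Type} [CommRing B] [Algebra A B]
variable {M : Type} [AddCommGroup M] [Module A M]
variable {k : ℕ} {ιB : Type}
variable (e_ : Fin k → M) (lam_ : Fin k → (M →ₗ[A] A))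
variable (π : MvPolynomial ιB A →ₐ[A] B)
variable (hdb : ∀ m : M, ∑ i, lam_ i m • e_ i = m)
variable (hπ : Function.Surjective π)
variable (A' : Type) [CommRing A'] [Algebra A A']

lemma Ep_X (y : Idx k ιB → A') (hg : Good e_ lam_ π A' y) (i : ιB) :
    Ep e_ lam_ A' y (MvPolynomial.X i) = gP e_ A' y i := by
  letI := ringY e_ lam_ A' y hg.comm hg.assoc hg.unit
  letI := algY e_ lam_ A' y hg.comm hg.assoc hg.unit
  rw [Ep_eq_aeval e_ lam_ A' y hg.comm hg.assoc hg.unit, MvPolynomial.aeval_X]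

lemma build_algMap_tmul (y : Idx k ιB → A') (hg : Good e_ lam_ π A' y) (a : A')
    (p : MvPolynomial ιB A) :
    (build e_ lam_ π A' hπ y hg).algMap (a ⊗ₜ π p) = a • Ep e_ lam_ A' y p := by
  show LinearMap.liftBaseChange A' (psi e_ lam_ π A' hπ y hg) (a ⊗ₜ π p) = _
  rw [LinearMap.liftBaseChange_tmul, psi_spec]

lemma toFunQ_one (h : (MvPolynomial (Idx k ιB) A ⧸ JJ e_ lam_ π) →ₐ[A] A') :
    (toFunQ e_ lam_ π hdb hπ A' h).one
      = oneP e_ A' (⇑(h.comp (Ideal.Quotient.mkₐ A (JJ e_ lam_ π))) ∘ uX) := rfl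

lemma toFunQ_mul (h : (MvPolynomial (Idx k ιB) A ⧸ JJ e_ lam_ π) →ₐ[A] A') :
    (toFunQ e_ lam_ π hdb hπ A' h).mul
      = mulP e_ lam_ A' (⇑(h.comp (Ideal.Quotient.mkₐ A (JJ e_ lam_ π))) ∘ uX) := rfl

lemma toFunQ_algMap_tmul (h : (MvPolynomial (Idx k ιB) A ⧸ JJ e_ lam_ π) →ₐ[A] A')
    (a : A') (p : MvPolynomial ιB A) :
    (toFunQ e_ lam_ π hdb hπ A' h).algMap (a ⊗ₜ π p)
      = a • Ep e_ lam_ A' (⇑(h.comp (Ideal.Quotient.mkₐ A (JJ e_ lam_ π))) ∘ uX) p :=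
  build_algMap_tmul e_ lam_ π hπ A' _ _ a p

lemma left_inv_aux (h : (MvPolynomial (Idx k ιB) A ⧸ JJ e_ lam_ π) →ₐ[A] A') :
    invFunQ e_ lam_ π hdb A' (toFunQ e_ lam_ π hdb hπ A' h) = h := by
  set H := h.comp (Ideal.Quotient.mkₐ A (JJ e_ lam_ π)) with hH
  have hgood := good_of_kills e_ lam_ π hdb A' H (kills_of_hom e_ lam_ π A' h)
  have hcomp : (invFunQ e_ lam_ π hdb A' (toFunQ e_ lam_ π hdb hπ A' h)).comp
      (Ideal.Quotient.mkₐ A (JJ e_ lam_ π)) = H := by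
    apply MvPolynomial.algHom_ext
    intro v
    rw [AlgHom.comp_apply, Ideal.Quotient.mkₐ_eq_mk, invFunQ_mk, MvPolynomial.aeval_X]
    -- goal : ys (toFunQ h) v = H (X v)
    have hkill : H (uX v - exprA e_ lam_ v) = 0 :=
      kills_of_hom e_ lam_ π A' h _ (Or.inl (Or.inl (Or.inl (Or.inl ⟨v, rfl⟩))))
    rw [map_sub, sub_eq_zero] at hkill
    have hgoal : ys e_ lam_ π A' (toFunQ e_ lam_ π hdb hπ A' h) v
        = H (exprA e_ lam_ v) := by
      match v with
      | .inl (i, j, l) =>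
        show contr A' (lam_ l) ((toFunQ e_ lam_ π hdb hπ A' h).mul
            (em e_ A' i) (em e_ A' j)) = _
        rw [toFunQ_mul]
        show _ = H (contr _ (lam_ l) (mulP e_ lam_ _ uX (em e_ _ i) (em e_ _ j)))
        rw [contr_tmap, tmap_mulP, tmap_em, tmap_em]
      | .inr (.inl l) =>
        show contr A' (lam_ l) (toFunQ e_ lam_ π hdb hπ A' h).one = _
        rw [toFunQ_one]
        show _ = H (contr _ (lam_ l) (oneP e_ _ uX))
        rw [contr_tmap, tmap_oneP]
      | .inr (.inr (i, l)) =>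
        show contr A' (lam_ l)
            ((toFunQ e_ lam_ π hdb hπ A' h).algMap (1 ⊗ₜ π (MvPolynomial.X i))) = _
        rw [show ((toFunQ e_ lam_ π hdb hπ A' h).algMap (1 ⊗ₜ π (MvPolynomial.X i)))
            = (1 : A') • Ep e_ lam_ A' (⇑H ∘ uX) (MvPolynomial.X i) from
          build_algMap_tmul e_ lam_ π hπ A' _ hgood 1 (MvPolynomial.X i)]
        rw [one_smul, Ep_X e_ lam_ π A' _ hgood i]
        show _ = H (contr _ (lam_ l) (gP e_ (Pk A k ιB) uX i))
        rw [contr_tmap, tmap_gP]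
    rw [hgoal, ← hkill]
    rfl
  apply AlgHom.ext
  intro x
  obtain ⟨p, rfl⟩ := Ideal.Quotient.mkₐ_surjective A _ x
  exact AlgHom.congr_fun hcomp p

lemma right_inv_aux (s : BAlgebraStructure A B M A') :
    toFunQ e_ lam_ π hdb hπ A' (invFunQ e_ lam_ π hdb A' s) = s := by
  have hy' : ⇑((invFunQ e_ lam_ π hdb A' s).comp (Ideal.Quotient.mkₐ A (JJ e_ lam_ π))) ∘ uX
      = ys e_ lam_ π A' s := by
    funext v
    show invFunQ e_ lam_ π hdb A' s (Ideal.Quotient.mkₐ A (JJ e_ lam_ π) (uX v)) = _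
    rw [Ideal.Quotient.mkₐ_eq_mk, invFunQ_mk]
    simp only [uX]
    rw [MvPolynomial.aeval_X]
  apply balg_ext
  · rw [toFunQ_mul, hy', mulP_ys e_ lam_ π hdb A' s]
  · rw [toFunQ_one, hy', oneP_ys e_ lam_ π hdb A' s]
  · apply LinearMap.ext
    intro b
    induction b using TensorProduct.induction_on with
    | zero => rw [map_zero, map_zero]
    | tmul a b0 =>
      obtain ⟨p, rfl⟩ := hπ b0
      rw [toFunQ_algMap_tmul e_ lam_ π hdb hπ A' _ a p, hy',
        Ep_struct e_ lam_ π A' s _ (mulP_ys e_ lam_ π hdb A' s) (oneP_ys e_ lam_ π hdb A' s)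
          (fun i => gP_ys e_ lam_ π hdb A' s i) p]
      have hsm : a ⊗ₜ[A] π p = a • ((1 : A') ⊗ₜ[A] π p) := by
        rw [smul_tmul', smul_eq_mul, mul_one]
      rw [hsm, map_smul]
    | add u v hu hv => rw [map_add, map_add, hu, hv]

/-- the representing object -/
noncomputable def rep : AlgebraStructureRepresentation A B M where
  Q := MvPolynomial (Idx k ιB) A ⧸ JJ e_ lam_ π
  commRingQ := inferInstance
  algebraQ := inferInstance
  equiv A' _ _ :=
    { toFun := toFunQ e_ lam_ π hdb hπ A'
      invFun := invFunQ e_ lam_ π hdb A'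
      left_inv := left_inv_aux e_ lam_ π hdb hπ A'
      right_inv := right_inv_aux e_ lam_ π hdb hπ A' }
  naturality_one := by
    intro A' A'' _ _ _ _ f h
    show (toFunQ e_ lam_ π hdb hπ A'' (f.comp h)).one
      = baseChangeM A M f ((toFunQ e_ lam_ π hdb hπ A' h).one)
    rw [toFunQ_one, toFunQ_one]
    have hyy : ⇑((f.comp h).comp (Ideal.Quotient.mkₐ A (JJ e_ lam_ π))) ∘ uX
        = ⇑f ∘ (⇑(h.comp (Ideal.Quotient.mkₐ A (JJ e_ lam_ π))) ∘ uX) := rfl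
    rw [hyy]
    exact (tmap_oneP e_ A' f _).symm
  naturality_mul := by
    intro A' A'' _ _ _ _ f h x z
    show (toFunQ e_ lam_ π hdb hπ A'' (f.comp h)).mul (baseChangeM A M f x)
        (baseChangeM A M f z)
      = baseChangeM A M f ((toFunQ e_ lam_ π hdb hπ A' h).mul x z)
    rw [toFunQ_mul, toFunQ_mul]
    have hyy : ⇑((f.comp h).comp (Ideal.Quotient.mkₐ A (JJ e_ lam_ π))) ∘ uX
        = ⇑f ∘ (⇑(h.comp (Ideal.Quotient.mkₐ A (JJ e_ lam_ π))) ∘ uX) := rfl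
    rw [hyy]
    exact (tmap_mulP e_ lam_ A' f _ x z).symm
  naturality_algMap := by
    intro A' A'' _ _ _ _ f h b
    have hgood' := good_of_kills e_ lam_ π hdb A'
      (h.comp (Ideal.Quotient.mkₐ A (JJ e_ lam_ π))) (kills_of_hom e_ lam_ π A' h)
    have hgood'' := good_of_kills e_ lam_ π hdb A''
      ((f.comp h).comp (Ideal.Quotient.mkₐ A (JJ e_ lam_ π)))
      (kills_of_hom e_ lam_ π A'' (f.comp h))
    show (toFunQ e_ lam_ π hdb hπ A'' (f.comp h)).algMap (baseChangeB A B f b)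
      = baseChangeM A M f ((toFunQ e_ lam_ π hdb hπ A' h).algMap b)
    induction b using TensorProduct.induction_on with
    | zero => rw [map_zero, map_zero, map_zero, map_zero]
    | tmul a b0 =>
      obtain ⟨p, rfl⟩ := hπ b0
      have h1 : baseChangeB A B f (a ⊗ₜ π p) = f a ⊗ₜ π p := by
        rw [baseChangeB, Algebra.TensorProduct.map_tmul, AlgHom.coe_id, id_eq]
      rw [h1, toFunQ_algMap_tmul e_ lam_ π hdb hπ A'' _ (f a) p,
        toFunQ_algMap_tmul e_ lam_ π hdb hπ A' _ a p]
      show _ = tmap f (a • Ep e_ lam_ A' (⇑(h.comp (Ideal.Quotient.mkₐ A (JJ e_ lam_ π))) ∘ uX) p)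
      rw [tmap_smul, tmap_Ep]
      rfl
    | add u v hu hv => rw [map_add, map_add, hu, hv, map_add, map_add]

end Final

end AlgRep

open AlgRep in
/-- **Lemma (finite type case).**
Let `A` be a commutative ring, `B` a commutative `A`-algebra of finite type, and `M` a finite
locally free (finitely generated projective) `A`-module.  Then there is a commutative
`A`-algebra `Q` of finite type over `A` together with bijections, natural in the commutative
`A`-algebra `A'`, between `A`-algebra homomorphisms `Q → A'` and `(B ⊗[A] A')`-algebra
structures on the `A'`-module `M ⊗[A] A'`. -/
theorem exists_algebra_structure_representation_finiteType
    (A : Type) [CommRing A] (B : Type) [CommRing B] [Algebra A B]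
    (M : Type) [AddCommGroup M] [Module A M]
    [Module.Finite A M] [Module.Projective A M] [Algebra.FiniteType A B] :
    ∃ r : AlgebraStructureRepresentation A B M, Algebra.FiniteType A r.Q := by
  classical
  obtain ⟨k, ρ, hρ⟩ := Module.Finite.exists_fin' A M
  obtain ⟨σf, hσ⟩ := Module.projective_lifting_property ρ LinearMap.id hρ
  obtain ⟨ιB, hfin, π, hπ⟩ :=
    Algebra.FiniteType.iff_quotient_mvPolynomial'.mp (inferInstance : Algebra.FiniteType A B)
  let e_ : Fin k → M := fun i => ρ (Pi.single i 1)
  let lam_ : Fin k → M →ₗ[A] A := fun i => (LinearMap.proj i).comp σf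
  have hdb : ∀ m : M, ∑ i, lam_ i m • e_ i = m := by
    intro m
    have h1 : ∀ i : Fin k, lam_ i m • e_ i = ρ (Pi.single i (σf m i)) := by
      intro i
      show σf m i • ρ (Pi.single i 1) = _
      rw [← map_smul, ← Pi.single_smul, smul_eq_mul, mul_one]
    rw [Finset.sum_congr rfl (fun i _ => h1 i), ← map_sum, Finset.univ_sum_single (σf m)]
    exact LinearMap.ext_iff.mp hσ m
  haveI : Fintype ιB := hfin
  refine ⟨rep e_ lam_ π hdb hπ, ?_⟩
  show Algebra.FiniteType A (MvPolynomial (Idx k ιB) A ⧸ JJ e_ lam_ π)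
  exact Algebra.FiniteType.of_surjective
    (Ideal.Quotient.mkₐ A _) (Ideal.Quotient.mkₐ_surjective A _)
end

section
/- Let A be a commutative ring, B a commutative A-algebra of finite presentation, and M an A-module that is finite locally free (finitely generated projective). Then there exists a commutative A-algebra Q of finite presentation over A together with bijections, natural in the commutative A-algebra A', between the set of A-algebra homomorphisms Q → A' and the set of (B ⊗_A A')-algebra structures on the A'-module M ⊗_A A'. -/
open TensorProduct

section Basics
variable (A : Type) [CommRing A] (M : Type) [AddCommGroup M] [Module A M]
variable {k : ℕ} (m : Fin k → M) (s : M →ₗ[A] (Fin k → A))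
variable (A' : Type) [CommRing A'] [Algebra A A']

noncomputable def sig (p : Fin k) : (A' ⊗[A] M) →ₗ[A'] A' :=
  (Algebra.TensorProduct.rid A A' A').toLinearMap ∘ₗ
    LinearMap.baseChange A' ((LinearMap.proj p) ∘ₗ s)

@[simp] lemma sig_tmul (p : Fin k) (a : A') (x : M) :
    sig A M s A' p (a ⊗ₜ x) = s x p • a := by
  simp [sig, Algebra.TensorProduct.rid_tmul]

noncomputable def el (w : Fin k → A') : A' ⊗[A] M :=
  ∑ p, w p • ((1 : A') ⊗ₜ[A] m p)

lemma el_add (w w' : Fin k → A') :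
    el A M m A' (w + w') = el A M m A' w + el A M m A' w' := by
  simp [el, add_smul, Finset.sum_add_distrib]

lemma el_smul (a : A') (w : Fin k → A') :
    el A M m A' (a • w) = a • el A M m A' w := by
  simp [el, Finset.smul_sum, mul_smul]

variable (hs : ∀ x : M, ∑ p, s x p • m p = x)
include hs

lemma repr_eq (x : A' ⊗[A] M) : el A M m A' (fun p => sig A M s A' p x) = x := by
  induction x using TensorProduct.induction_on with
  | zero => simp [el]
  | tmul a y =>
      simp only [el, sig_tmul]
      have h1 : ∀ p : Fin k, (s y p • a) • ((1:A') ⊗ₜ[A] m p) = a • ((1:A') ⊗ₜ[A] (s y p • m p)) := by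
        intro p
        rw [smul_assoc, smul_comm, tmul_smul]
      rw [Finset.sum_congr rfl (fun p _ => h1 p), ← Finset.smul_sum]
      rw [← tmul_sum, hs y, smul_tmul', smul_eq_mul, mul_one]
  | add x y hx hy =>
      have : (fun p => sig A M s A' p (x + y))
          = (fun p => sig A M s A' p x) + (fun p => sig A M s A' p y) := by
        funext p; simp
      rw [this, el_add, hx, hy]

lemma span_top : Submodule.span A' (Set.range fun p => ((1:A') ⊗ₜ[A] m p)) = ⊤ := by
  rw [eq_top_iff]
  rintro x -
  rw [← repr_eq A M m s A' hs x]
  exact Submodule.sum_mem _ fun p _ => Submodule.smul_mem _ _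
    (Submodule.subset_span (Set.mem_range_self p))

omit hs in
lemma sig_el (w : Fin k → A') (p : Fin k) :
    sig A M s A' p (el A M m A' w) = ∑ q, s (m q) p • w q := by
  simp [el]

lemma el_eq_el (x y : A' ⊗[A] M) (h : ∀ p, sig A M s A' p x = sig A M s A' p y) : x = y := by
  rw [← repr_eq A M m s A' hs x, ← repr_eq A M m s A' hs y]
  congr 1; funext p; exact h p

end Basics

section Points
variable (A : Type) [CommRing A] (M : Type) [AddCommGroup M] [Module A M]
variable {k : ℕ} (m : Fin k → M) (s : M →ₗ[A] (Fin k → A))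
variable (ι₀ : Type)
variable (A' : Type) [CommRing A'] [Algebra A A']

/-- index type for the data -/
abbrev Jdx (k : ℕ) (ι₀ : Type) : Type := (Fin k × Fin k) ⊕ (Unit ⊕ ι₀)

/-- a "point": coordinates for all the data -/
abbrev Pt (k : ℕ) (ι₀ : Type) (A' : Type) : Type := Jdx k ι₀ → Fin k → A'

variable (v : Pt k ι₀ A')

noncomputable def Cv (i j : Fin k) : A' ⊗[A] M := el A M m A' (v (Sum.inl (i, j)))
noncomputable def Onev : A' ⊗[A] M := el A M m A' (v (Sum.inr (Sum.inl ())))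
noncomputable def tv (r : ι₀) : A' ⊗[A] M := el A M m A' (v (Sum.inr (Sum.inr r)))

noncomputable def Mulv : (A' ⊗[A] M) →ₗ[A'] (A' ⊗[A] M) →ₗ[A'] (A' ⊗[A] M) :=
  LinearMap.mk₂ A'
    (fun x y => ∑ i, ∑ j, (sig A M s A' i x * sig A M s A' j y) • Cv A M m ι₀ A' v i j)
    (by intro x x' y; simp [add_mul, add_smul, Finset.sum_add_distrib])
    (by intro a x y; simp [Finset.smul_sum, mul_assoc, mul_smul])
    (by intro x y y'; simp [mul_add, add_smul, Finset.sum_add_distrib])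
    (by
      intro a x y
      simp only [map_smul, smul_eq_mul, Finset.smul_sum]
      congr 1; funext i; congr 1; funext j
      rw [mul_left_comm, mul_smul])

lemma Mulv_apply (x y : A' ⊗[A] M) :
    Mulv A M m s ι₀ A' v x y
      = ∑ i, ∑ j, (sig A M s A' i x * sig A M s A' j y) • Cv A M m ι₀ A' v i j := rfl

noncomputable def eb (i : Fin k) : A' ⊗[A] M := (1 : A') ⊗ₜ[A] m i

variable (hs : ∀ x : M, ∑ p, s x p • m p = x)

include hs in
/-- expansion of a bilinear map through the generators -/
lemma expand_bilinear (f : (A' ⊗[A] M) →ₗ[A'] (A' ⊗[A] M) →ₗ[A'] (A' ⊗[A] M))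
    (x y : A' ⊗[A] M) :
    f x y = ∑ i, ∑ j, (sig A M s A' i x * sig A M s A' j y) •
      f (eb A M m A' i) (eb A M m A' j) := by
  conv_lhs => rw [← repr_eq A M m s A' hs x, ← repr_eq A M m s A' hs y]
  rw [show el A M m A' (fun p => sig A M s A' p x) = ∑ i, sig A M s A' i x • eb A M m A' i from rfl]
  rw [show el A M m A' (fun p => sig A M s A' p y) = ∑ j, sig A M s A' j y • eb A M m A' j from rfl]
  simp only [map_sum, LinearMap.sum_apply, map_smul, LinearMap.smul_apply, Finset.smul_sum,
    smul_smul]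
  rw [Finset.sum_comm]
  exact Finset.sum_congr rfl fun i _ => Finset.sum_congr rfl fun j _ => by rw [mul_comm]

include hs in
lemma expand_linear (f : (A' ⊗[A] M) →ₗ[A'] (A' ⊗[A] M)) (x : A' ⊗[A] M) :
    f x = ∑ i, sig A M s A' i x • f (eb A M m A' i) := by
  conv_lhs => rw [← repr_eq A M m s A' hs x]
  rw [show el A M m A' (fun p => sig A M s A' p x) = ∑ i, sig A M s A' i x • eb A M m A' i from rfl]
  rw [map_sum]
  congr 1; funext i
  rw [map_smul]

/-- first batch of conditions on a point -/
structure Conds1 : Prop where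
  hN : ∀ j p, v j p = sig A M s A' p (el A M m A' (v j))
  hC1 : ∀ i j, Mulv A M m s ι₀ A' v (eb A M m A' i) (eb A M m A' j)
      = Mulv A M m s ι₀ A' v (eb A M m A' j) (eb A M m A' i)
  hC2 : ∀ i j l, Mulv A M m s ι₀ A' v (Mulv A M m s ι₀ A' v (eb A M m A' i) (eb A M m A' j)) (eb A M m A' l)
      = Mulv A M m s ι₀ A' v (eb A M m A' i) (Mulv A M m s ι₀ A' v (eb A M m A' j) (eb A M m A' l))
  hC3 : ∀ j, Mulv A M m s ι₀ A' v (Onev A M m ι₀ A' v) (eb A M m A' j) = eb A M m A' j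
  hC4 : ∀ i j, Mulv A M m s ι₀ A' v (eb A M m A' i) (eb A M m A' j) = Cv A M m ι₀ A' v i j

variable {A M m s ι₀ A' v}

include hs in
lemma mulv_comm (h : Conds1 A M m s ι₀ A' v) (x y : A' ⊗[A] M) :
    Mulv A M m s ι₀ A' v x y = Mulv A M m s ι₀ A' v y x := by
  rw [expand_bilinear A M m s A' hs _ x y, expand_bilinear A M m s A' hs _ y x,
    Finset.sum_comm]
  refine Finset.sum_congr rfl fun i _ => Finset.sum_congr rfl fun j _ => ?_
  rw [h.hC1 i j, mul_comm]

include hs in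
lemma mulv_assoc (h : Conds1 A M m s ι₀ A' v) (x y z : A' ⊗[A] M) :
    Mulv A M m s ι₀ A' v (Mulv A M m s ι₀ A' v x y) z
      = Mulv A M m s ι₀ A' v x (Mulv A M m s ι₀ A' v y z) := by
  set Mu := Mulv A M m s ι₀ A' v with hMu
  have hspan := span_top A M m s A' hs
  have T12 : Mu.compr₂ Mu
      = (LinearMap.llcomp A' (A' ⊗[A] M) (A' ⊗[A] M) (A' ⊗[A] M)).compl₁₂ Mu Mu := by
    apply LinearMap.ext_on hspan
    rintro _ ⟨i, rfl⟩
    apply LinearMap.ext_on hspan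
    rintro _ ⟨j, rfl⟩
    apply LinearMap.ext_on hspan
    rintro _ ⟨l, rfl⟩
    exact h.hC2 i j l
  exact LinearMap.congr_fun (LinearMap.congr_fun (LinearMap.congr_fun T12 x) y) z

include hs in
lemma mulv_one_mul (h : Conds1 A M m s ι₀ A' v) (x : A' ⊗[A] M) :
    Mulv A M m s ι₀ A' v (Onev A M m ι₀ A' v) x = x := by
  have hspan := span_top A M m s A' hs
  have : Mulv A M m s ι₀ A' v (Onev A M m ι₀ A' v) = LinearMap.id := by
    apply LinearMap.ext_on hspan
    rintro _ ⟨j, rfl⟩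
    exact h.hC3 j
  exact LinearMap.congr_fun this x

end Points

section Nat
variable (A : Type) [CommRing A] (M : Type) [AddCommGroup M] [Module A M]
variable {k : ℕ} (m : Fin k → M) (s : M →ₗ[A] (Fin k → A))
variable (ι₀ : Type)
variable {A' A'' : Type} [CommRing A'] [Algebra A A'] [CommRing A''] [Algebra A A'']
variable (φ : A' →ₐ[A] A'')

/-- push forward a point along an algebra homomorphism -/
def pushPt (v : Pt k ι₀ A') : Pt k ι₀ A'' := fun j p => φ (v j p)

lemma pushPt_def (v : Pt k ι₀ A') (j) (p) : pushPt A ι₀ φ v j p = φ (v j p) := rfl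

lemma nat_smul (a : A') (x : A' ⊗[A] M) :
    baseChangeM A M φ (a • x) = φ a • baseChangeM A M φ x := by
  induction x using TensorProduct.induction_on with
  | zero => simp
  | tmul c y =>
      rw [smul_tmul', smul_eq_mul]
      simp only [baseChangeM, TensorProduct.map_tmul, LinearMap.id_coe, id_eq, AlgHom.toLinearMap_apply,
        map_mul]
      rw [smul_tmul', smul_eq_mul]
  | add x y hx hy => simp only [smul_add, map_add, hx, hy]

lemma nat_sig (p : Fin k) (x : A' ⊗[A] M) :
    sig A M s A'' p (baseChangeM A M φ x) = φ (sig A M s A' p x) := by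
  induction x using TensorProduct.induction_on with
  | zero => simp
  | tmul a y =>
      simp only [baseChangeM, TensorProduct.map_tmul, LinearMap.id_coe, id_eq,
        AlgHom.toLinearMap_apply, sig_tmul]
      rw [Algebra.smul_def, Algebra.smul_def, _root_.map_mul, AlgHom.commutes]
  | add x y hx hy => simp only [map_add, hx, hy]

lemma nat_el (w : Fin k → A') :
    baseChangeM A M φ (el A M m A' w) = el A M m A'' (fun p => φ (w p)) := by
  simp only [el, map_sum]
  congr 1; funext p
  rw [nat_smul]
  congr 1
  simp [baseChangeM]

lemma nat_eb (i : Fin k) : baseChangeM A M φ (eb A M m A' i) = eb A M m A'' i := by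
  simp [baseChangeM, eb]

lemma nat_Mul (v : Pt k ι₀ A') (x y : A' ⊗[A] M) :
    baseChangeM A M φ (Mulv A M m s ι₀ A' v x y)
      = Mulv A M m s ι₀ A'' (pushPt A ι₀ φ v) (baseChangeM A M φ x) (baseChangeM A M φ y) := by
  rw [Mulv_apply, Mulv_apply, map_sum]
  congr 1; funext i
  rw [map_sum]
  congr 1; funext j
  rw [nat_smul, map_mul, nat_sig, nat_sig]
  congr 1
  exact nat_el A M m φ _

lemma nat_One (v : Pt k ι₀ A') :
    baseChangeM A M φ (Onev A M m ι₀ A' v) = Onev A M m ι₀ A'' (pushPt A ι₀ φ v) :=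
  nat_el A M m φ _

lemma nat_tv (v : Pt k ι₀ A') (r : ι₀) :
    baseChangeM A M φ (tv A M m ι₀ A' v r) = tv A M m ι₀ A'' (pushPt A ι₀ φ v) r :=
  nat_el A M m φ _

lemma nat_conds1 (v : Pt k ι₀ A') (h : Conds1 A M m s ι₀ A' v) :
    Conds1 A M m s ι₀ A'' (pushPt A ι₀ φ v) := by
  constructor
  · intro j p
    rw [pushPt_def, h.hN j p, ← nat_sig A M s φ,
      nat_el A M m φ]
    rfl
  · intro i j
    rw [← nat_eb A M m φ i, ← nat_eb A M m φ j, ← nat_Mul, ← nat_Mul, h.hC1]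
  · intro i j l
    rw [← nat_eb A M m φ i, ← nat_eb A M m φ j, ← nat_eb A M m φ l, ← nat_Mul, ← nat_Mul,
      ← nat_Mul, ← nat_Mul, h.hC2]
  · intro j
    rw [← nat_eb A M m φ j, ← nat_One A M m ι₀ φ v, ← nat_Mul, h.hC3]
  · intro i j
    rw [← nat_eb A M m φ i, ← nat_eb A M m φ j, ← nat_Mul, h.hC4]
    exact nat_el A M m φ _

end Nat

section RingSect
variable (A : Type) [CommRing A] (M : Type) [AddCommGroup M] [Module A M]
variable (B : Type) [CommRing B] [Algebra A B]
variable {k : ℕ} (m : Fin k → M) (s : M →ₗ[A] (Fin k → A))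
variable (ι₀ : Type) (A' : Type) [CommRing A'] [Algebra A A']
variable (F : MvPolynomial ι₀ A →ₐ[A] B)
variable (v : Pt k ι₀ A') (hs : ∀ x : M, ∑ p, s x p • m p = x)
variable (h : Conds1 A M m s ι₀ A' v)

/-- the commutative ring structure on `A' ⊗ M` induced by a point satisfying conditions. -/
@[reducible]
noncomputable def ringOf : CommRing (A' ⊗[A] M) :=
  { (inferInstance : AddCommGroup (A' ⊗[A] M)) with
    mul := fun x y => Mulv A M m s ι₀ A' v x y
    one := Onev A M m ι₀ A' v
    mul_assoc := mulv_assoc hs h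
    one_mul := mulv_one_mul hs h
    mul_one := fun x => (mulv_comm hs h x _).trans (mulv_one_mul hs h x)
    left_distrib := fun a b c => map_add (Mulv A M m s ι₀ A' v a) b c
    right_distrib := fun a b c => by
      change Mulv A M m s ι₀ A' v (a + b) c = _
      rw [map_add]; rfl
    zero_mul := fun x => by
      change Mulv A M m s ι₀ A' v 0 x = 0
      rw [map_zero]; rfl
    mul_zero := fun x => map_zero (Mulv A M m s ι₀ A' v x)
    mul_comm := mulv_comm hs h }

/-- the `A`-algebra structure -/
noncomputable def algebraOf :
    letI := ringOf A M m s ι₀ A' v hs h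
    Algebra A (A' ⊗[A] M) := by
  letI := ringOf A M m s ι₀ A' v hs h
  refine Algebra.ofModule (fun a x y => ?_) (fun a x y => ?_)
  · change Mulv A M m s ι₀ A' v (a • x) y = a • Mulv A M m s ι₀ A' v x y
    rw [← algebraMap_smul A' a x, ← algebraMap_smul A' a (Mulv A M m s ι₀ A' v x y),
      map_smul, LinearMap.smul_apply]
  · change Mulv A M m s ι₀ A' v x (a • y) = a • Mulv A M m s ι₀ A' v x y
    rw [← algebraMap_smul A' a y, ← algebraMap_smul A' a (Mulv A M m s ι₀ A' v x y),
      map_smul]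

/-- evaluation of a polynomial in the ring structure attached to a point -/
noncomputable def aevalT : MvPolynomial ι₀ A → A' ⊗[A] M := by
  letI := ringOf A M m s ι₀ A' v hs h
  letI := algebraOf A M m s ι₀ A' v hs h
  exact fun x => MvPolynomial.aeval (tv A M m ι₀ A' v) x

/-- the remaining conditions: the relations of `B` are killed -/
noncomputable def CondB (rels : Finset (MvPolynomial ι₀ A)) : Prop :=
  ∀ g ∈ rels, aevalT A M m s ι₀ A' v hs h g = 0

variable (hF : Function.Surjective F) (rels : Finset (MvPolynomial ι₀ A))
  (hker : RingHom.ker F = Ideal.span (rels : Set (MvPolynomial ι₀ A)))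
  (hB : CondB A M m s ι₀ A' v hs h rels)

/-- the algebra map `B → A' ⊗ M`, as an `A`-linear map -/
noncomputable def gB : B →ₗ[A] (A' ⊗[A] M) :=
  letI := ringOf A M m s ι₀ A' v hs h
  letI := algebraOf A M m s ι₀ A' v hs h
  (AlgHom.comp
    (Ideal.Quotient.liftₐ (RingHom.ker F) (MvPolynomial.aeval (tv A M m ι₀ A' v))
      (by
        intro a ha
        rw [hker] at ha
        have hle : Ideal.span (rels : Set (MvPolynomial ι₀ A))
            ≤ RingHom.ker (MvPolynomial.aeval (tv A M m ι₀ A' v) :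
                MvPolynomial ι₀ A →ₐ[A] _) := by
          rw [Ideal.span_le]
          intro g hg
          exact RingHom.mem_ker.mpr (hB g hg)
        exact RingHom.mem_ker.mp (hle ha)))
    (Ideal.quotientKerAlgEquivOfSurjective hF).symm.toAlgHom).toLinearMap

lemma gB_one : gB A M B m s ι₀ A' F v hs h hF rels hker hB 1 = Onev A M m ι₀ A' v := by
  letI := ringOf A M m s ι₀ A' v hs h
  letI := algebraOf A M m s ι₀ A' v hs h
  unfold gB
  erw [AlgHom.toLinearMap_apply, map_one]
  rfl

lemma gB_mul (b₁ b₂ : B) : gB A M B m s ι₀ A' F v hs h hF rels hker hB (b₁ * b₂)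
    = Mulv A M m s ι₀ A' v (gB A M B m s ι₀ A' F v hs h hF rels hker hB b₁)
      (gB A M B m s ι₀ A' F v hs h hF rels hker hB b₂) := by
  letI := ringOf A M m s ι₀ A' v hs h
  letI := algebraOf A M m s ι₀ A' v hs h
  unfold gB
  erw [AlgHom.toLinearMap_apply, map_mul]
  rfl

lemma gB_F (x : MvPolynomial ι₀ A) : gB A M B m s ι₀ A' F v hs h hF rels hker hB (F x)
    = aevalT A M m s ι₀ A' v hs h x := by
  letI := ringOf A M m s ι₀ A' v hs h
  letI := algebraOf A M m s ι₀ A' v hs h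
  have h1 : (Ideal.quotientKerAlgEquivOfSurjective hF).symm (F x)
      = Ideal.Quotient.mk _ x := by
    apply (Ideal.quotientKerAlgEquivOfSurjective hF).injective
    rw [AlgEquiv.apply_symm_apply]
    rfl
  unfold gB
  erw [AlgHom.toLinearMap_apply, AlgHom.comp_apply]
  rw [show ((Ideal.quotientKerAlgEquivOfSurjective hF).symm.toAlgHom (F x))
      = (Ideal.quotientKerAlgEquivOfSurjective hF).symm (F x) from rfl, h1,
    Ideal.Quotient.liftₐ_apply]
  rfl

lemma gB_FX (r : ι₀) : gB A M B m s ι₀ A' F v hs h hF rels hker hB (F (MvPolynomial.X r))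
    = tv A M m ι₀ A' v r := by
  letI := ringOf A M m s ι₀ A' v hs h
  letI := algebraOf A M m s ι₀ A' v hs h
  have h1 : (Ideal.quotientKerAlgEquivOfSurjective hF).symm (F (MvPolynomial.X r))
      = Ideal.Quotient.mk _ (MvPolynomial.X r) := by
    apply (Ideal.quotientKerAlgEquivOfSurjective hF).injective
    rw [AlgEquiv.apply_symm_apply]
    rfl
  unfold gB
  erw [AlgHom.toLinearMap_apply, AlgHom.comp_apply]
  rw [show ((Ideal.quotientKerAlgEquivOfSurjective hF).symm.toAlgHom (F (MvPolynomial.X r)))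
      = (Ideal.quotientKerAlgEquivOfSurjective hF).symm (F (MvPolynomial.X r)) from rfl, h1,
    Ideal.Quotient.liftₐ_apply]
  exact MvPolynomial.aeval_X _ r

end RingSect

section AlgMapSect
variable (A : Type) [CommRing A] (M : Type) [AddCommGroup M] [Module A M]
variable (B : Type) [CommRing B] [Algebra A B]
variable {k : ℕ} (m : Fin k → M) (s : M →ₗ[A] (Fin k → A))
variable (ι₀ : Type) (A' : Type) [CommRing A'] [Algebra A A']
variable (F : MvPolynomial ι₀ A →ₐ[A] B)
variable (v : Pt k ι₀ A') (hs : ∀ x : M, ∑ p, s x p • m p = x)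
variable (h : Conds1 A M m s ι₀ A' v)
variable (hF : Function.Surjective F) (rels : Finset (MvPolynomial ι₀ A))
  (hker : RingHom.ker F = Ideal.span (rels : Set (MvPolynomial ι₀ A)))
  (hB : CondB A M m s ι₀ A' v hs h rels)

/-- underlying `A`-linear algebra map on the tensor product -/
noncomputable def algMap0 : (A' ⊗[A] B) →ₗ[A] (A' ⊗[A] M) :=
  TensorProduct.lift (LinearMap.mk₂ A
    (fun (a' : A') (b : B) => a' • gB A M B m s ι₀ A' F v hs h hF rels hker hB b)
    (fun a a' b => add_smul a a' _)
    (fun c a b => smul_assoc c a _)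
    (fun a b b' => by rw [map_add, smul_add])
    (fun c a b => by rw [map_smul, smul_comm]))

lemma algMap0_tmul (a : A') (b : B) :
    algMap0 A M B m s ι₀ A' F v hs h hF rels hker hB (a ⊗ₜ b)
      = a • gB A M B m s ι₀ A' F v hs h hF rels hker hB b := rfl

lemma algMap0_smul (a : A') (x : A' ⊗[A] B) :
    algMap0 A M B m s ι₀ A' F v hs h hF rels hker hB (a • x)
      = a • algMap0 A M B m s ι₀ A' F v hs h hF rels hker hB x := by
  induction x using TensorProduct.induction_on with
  | zero => simp
  | tmul c b =>
      rw [smul_tmul', smul_eq_mul, algMap0_tmul, algMap0_tmul, mul_smul]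
  | add x y hx hy => rw [smul_add, map_add, map_add, hx, hy, smul_add]

/-- the algebra map, as an `A'`-linear map -/
noncomputable def algMapOf : (A' ⊗[A] B) →ₗ[A'] (A' ⊗[A] M) where
  toFun := algMap0 A M B m s ι₀ A' F v hs h hF rels hker hB
  map_add' := map_add _
  map_smul' := algMap0_smul A M B m s ι₀ A' F v hs h hF rels hker hB

lemma algMapOf_tmul (a : A') (b : B) :
    algMapOf A M B m s ι₀ A' F v hs h hF rels hker hB (a ⊗ₜ b)
      = a • gB A M B m s ι₀ A' F v hs h hF rels hker hB b := rfl

lemma algMapOf_one :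
    algMapOf A M B m s ι₀ A' F v hs h hF rels hker hB 1 = Onev A M m ι₀ A' v := by
  rw [Algebra.TensorProduct.one_def, algMapOf_tmul, one_smul,
    gB_one A M B m s ι₀ A' F v hs h hF rels hker hB]

lemma algMapOf_mul (x y : A' ⊗[A] B) :
    algMapOf A M B m s ι₀ A' F v hs h hF rels hker hB (x * y)
      = Mulv A M m s ι₀ A' v (algMapOf A M B m s ι₀ A' F v hs h hF rels hker hB x)
          (algMapOf A M B m s ι₀ A' F v hs h hF rels hker hB y) := by
  induction x using TensorProduct.induction_on with
  | zero => simp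
  | add x₁ x₂ h1 h2 =>
      simp only [add_mul, map_add, h1, h2, LinearMap.map_add₂, LinearMap.add_apply]
  | tmul a₁ b₁ =>
      induction y using TensorProduct.induction_on with
      | zero => simp
      | add y₁ y₂ h1 h2 => simp only [mul_add, map_add, h1, h2]
      | tmul a₂ b₂ =>
          rw [Algebra.TensorProduct.tmul_mul_tmul, algMapOf_tmul, algMapOf_tmul, algMapOf_tmul,
            gB_mul A M B m s ι₀ A' F v hs h hF rels hker hB, LinearMap.map_smul₂,
            map_smul, smul_smul]

/-- the structure attached to a good point -/
noncomputable def toStructure : BAlgebraStructure A B M A' where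
  mul := Mulv A M m s ι₀ A' v
  one := Onev A M m ι₀ A' v
  mul_comm := mulv_comm hs h
  mul_assoc := mulv_assoc hs h
  one_mul := mulv_one_mul hs h
  algMap := algMapOf A M B m s ι₀ A' F v hs h hF rels hker hB
  algMap_one := algMapOf_one A M B m s ι₀ A' F v hs h hF rels hker hB
  algMap_mul := algMapOf_mul A M B m s ι₀ A' F v hs h hF rels hker hB

end AlgMapSect

section ToPt
variable (A : Type) [CommRing A] (M : Type) [AddCommGroup M] [Module A M]
variable (B : Type) [CommRing B] [Algebra A B]
variable {k : ℕ} (m : Fin k → M) (s : M →ₗ[A] (Fin k → A))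
variable (ι₀ : Type) (A' : Type) [CommRing A'] [Algebra A A']
variable (F : MvPolynomial ι₀ A →ₐ[A] B)
variable (str : BAlgebraStructure A B M A')
variable (hs : ∀ x : M, ∑ p, s x p • m p = x)

/-- the point attached to a structure -/
noncomputable def toPt : Pt k ι₀ A' := fun j =>
  match j with
  | Sum.inl (i, j') => fun p => sig A M s A' p (str.mul (eb A M m A' i) (eb A M m A' j'))
  | Sum.inr (Sum.inl _) => fun p => sig A M s A' p str.one
  | Sum.inr (Sum.inr r) => fun p =>
      sig A M s A' p (str.algMap ((1 : A') ⊗ₜ F (MvPolynomial.X r)))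

include hs

lemma toPt_Cv (i j : Fin k) : Cv A M m ι₀ A' (toPt A M B m s ι₀ A' F str) i j
    = str.mul (eb A M m A' i) (eb A M m A' j) := repr_eq A M m s A' hs _

lemma toPt_One : Onev A M m ι₀ A' (toPt A M B m s ι₀ A' F str) = str.one :=
  repr_eq A M m s A' hs _

lemma toPt_tv (r : ι₀) : tv A M m ι₀ A' (toPt A M B m s ι₀ A' F str) r
    = str.algMap ((1 : A') ⊗ₜ F (MvPolynomial.X r)) := repr_eq A M m s A' hs _

lemma toPt_Mul (x y : A' ⊗[A] M) :
    Mulv A M m s ι₀ A' (toPt A M B m s ι₀ A' F str) x y = str.mul x y := by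
  rw [Mulv_apply]
  conv_rhs => rw [expand_bilinear A M m s A' hs str.mul x y]
  refine Finset.sum_congr rfl fun i _ => Finset.sum_congr rfl fun j _ => ?_
  rw [toPt_Cv A M B m s ι₀ A' F str hs]

lemma toPt_conds1 : Conds1 A M m s ι₀ A' (toPt A M B m s ι₀ A' F str) := by
  constructor
  · rintro (⟨i, j⟩ | (⟨⟩ | r)) p
    · show _ = sig A M s A' p (el A M m A' fun q =>
        sig A M s A' q (str.mul (eb A M m A' i) (eb A M m A' j)))
      rw [repr_eq A M m s A' hs]
      rfl
    · show _ = sig A M s A' p (el A M m A' fun q => sig A M s A' q str.one)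
      rw [repr_eq A M m s A' hs]
      rfl
    · show _ = sig A M s A' p (el A M m A' fun q =>
        sig A M s A' q (str.algMap ((1 : A') ⊗ₜ F (MvPolynomial.X r))))
      rw [repr_eq A M m s A' hs]
      rfl
  · intro i j
    rw [toPt_Mul A M B m s ι₀ A' F str hs, toPt_Mul A M B m s ι₀ A' F str hs, str.mul_comm]
  · intro i j l
    rw [toPt_Mul A M B m s ι₀ A' F str hs, toPt_Mul A M B m s ι₀ A' F str hs,
      toPt_Mul A M B m s ι₀ A' F str hs, toPt_Mul A M B m s ι₀ A' F str hs, str.mul_assoc]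
  · intro j
    rw [toPt_Mul A M B m s ι₀ A' F str hs, toPt_One A M B m s ι₀ A' F str hs, str.one_mul]
  · intro i j
    rw [toPt_Mul A M B m s ι₀ A' F str hs, toPt_Cv A M B m s ι₀ A' F str hs]

/-- the algebra homomorphism `B → A' ⊗ M` induced by a structure, bundled -/
noncomputable def chi :
    letI := ringOf A M m s ι₀ A' (toPt A M B m s ι₀ A' F str) hs
      (toPt_conds1 A M B m s ι₀ A' F str hs)
    letI := algebraOf A M m s ι₀ A' (toPt A M B m s ι₀ A' F str) hs
      (toPt_conds1 A M B m s ι₀ A' F str hs)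
    B →ₐ[A] (A' ⊗[A] M) := by
  letI := ringOf A M m s ι₀ A' (toPt A M B m s ι₀ A' F str) hs
    (toPt_conds1 A M B m s ι₀ A' F str hs)
  letI := algebraOf A M m s ι₀ A' (toPt A M B m s ι₀ A' F str) hs
    (toPt_conds1 A M B m s ι₀ A' F str hs)
  refine AlgHom.mk' (⟨⟨⟨fun b => str.algMap ((1 : A') ⊗ₜ b), ?_⟩, ?_⟩, ?_, ?_⟩ :
    B →+* (A' ⊗[A] M)) ?_
  · -- map_one
    show str.algMap ((1 : A') ⊗ₜ (1 : B)) = (1 : A' ⊗[A] M)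
    rw [← Algebra.TensorProduct.one_def, str.algMap_one]
    exact (toPt_One A M B m s ι₀ A' F str hs).symm
  · -- map_mul
    intro b₁ b₂
    show str.algMap ((1 : A') ⊗ₜ (b₁ * b₂)) = _
    have : ((1 : A') ⊗ₜ (b₁ * b₂) : A' ⊗[A] B) = ((1:A') ⊗ₜ b₁) * ((1:A') ⊗ₜ b₂) := by
      rw [Algebra.TensorProduct.tmul_mul_tmul, one_mul]
    rw [this, str.algMap_mul]
    show _ = Mulv A M m s ι₀ A' (toPt A M B m s ι₀ A' F str) _ _
    rw [toPt_Mul A M B m s ι₀ A' F str hs]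
  · -- map_zero
    show str.algMap ((1 : A') ⊗ₜ (0 : B)) = 0
    rw [TensorProduct.tmul_zero, map_zero]
  · -- map_add
    intro b₁ b₂
    show str.algMap ((1 : A') ⊗ₜ (b₁ + b₂)) = _
    rw [TensorProduct.tmul_add, map_add]
  · -- A-linear (smul)
    intro a b
    show str.algMap ((1 : A') ⊗ₜ (a • b)) = a • str.algMap ((1 : A') ⊗ₜ b)
    rw [TensorProduct.tmul_smul, LinearMap.map_smul_of_tower]

lemma chi_apply (b : B) : chi A M B m s ι₀ A' F str hs b = str.algMap ((1 : A') ⊗ₜ b) := rfl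

lemma toPt_aevalT (x : MvPolynomial ι₀ A) :
    aevalT A M m s ι₀ A' (toPt A M B m s ι₀ A' F str) hs
      (toPt_conds1 A M B m s ι₀ A' F str hs) x
    = str.algMap ((1 : A') ⊗ₜ F x) := by
  letI := ringOf A M m s ι₀ A' (toPt A M B m s ι₀ A' F str) hs
    (toPt_conds1 A M B m s ι₀ A' F str hs)
  letI := algebraOf A M m s ι₀ A' (toPt A M B m s ι₀ A' F str) hs
    (toPt_conds1 A M B m s ι₀ A' F str hs)
  have key : ((chi A M B m s ι₀ A' F str hs).comp F)
      = MvPolynomial.aeval (tv A M m ι₀ A' (toPt A M B m s ι₀ A' F str)) := by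
    apply MvPolynomial.algHom_ext
    intro r
    rw [AlgHom.comp_apply, chi_apply, MvPolynomial.aeval_X,
      toPt_tv A M B m s ι₀ A' F str hs r]
  show MvPolynomial.aeval (tv A M m ι₀ A' (toPt A M B m s ι₀ A' F str)) x = _
  rw [← key, AlgHom.comp_apply, chi_apply]

lemma toPt_condB (rels : Finset (MvPolynomial ι₀ A))
    (hker : RingHom.ker F = Ideal.span (rels : Set (MvPolynomial ι₀ A))) :
    CondB A M m s ι₀ A' (toPt A M B m s ι₀ A' F str) hs
      (toPt_conds1 A M B m s ι₀ A' F str hs) rels := by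
  intro g hg
  rw [toPt_aevalT A M B m s ι₀ A' F str hs g]
  have : F g = 0 := by
    have : g ∈ RingHom.ker F := by
      rw [hker]
      exact Ideal.subset_span hg
    exact RingHom.mem_ker.mp this
  rw [this, TensorProduct.tmul_zero, map_zero]

end ToPt

section RoundTrips
variable (A : Type) [CommRing A] (M : Type) [AddCommGroup M] [Module A M]
variable (B : Type) [CommRing B] [Algebra A B]
variable {k : ℕ} (m : Fin k → M) (s : M →ₗ[A] (Fin k → A))
variable (ι₀ : Type) (A' : Type) [CommRing A'] [Algebra A A']
variable (F : MvPolynomial ι₀ A →ₐ[A] B)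
variable (hs : ∀ x : M, ∑ p, s x p • m p = x)
variable (hF : Function.Surjective F) (rels : Finset (MvPolynomial ι₀ A))
  (hker : RingHom.ker F = Ideal.span (rels : Set (MvPolynomial ι₀ A)))

lemma BAS_ext (s₁ s₂ : BAlgebraStructure A B M A') (h1 : s₁.mul = s₂.mul)
    (h2 : s₁.one = s₂.one) (h3 : s₁.algMap = s₂.algMap) : s₁ = s₂ := by
  cases s₁; cases s₂
  simp only at h1 h2 h3
  subst h1; subst h2; subst h3
  rfl

include hs

lemma roundtrip1 (v : Pt k ι₀ A') (h : Conds1 A M m s ι₀ A' v)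
    (hB : CondB A M m s ι₀ A' v hs h rels) :
    toPt A M B m s ι₀ A' F (toStructure A M B m s ι₀ A' F v hs h hF rels hker hB) = v := by
  funext j p
  rcases j with ⟨i, j'⟩ | (⟨⟩ | r)
  · show sig A M s A' p (Mulv A M m s ι₀ A' v (eb A M m A' i) (eb A M m A' j')) = _
    rw [h.hC4 i j']
    exact (h.hN (Sum.inl (i, j')) p).symm
  · show sig A M s A' p (Onev A M m ι₀ A' v) = _
    exact (h.hN (Sum.inr (Sum.inl ())) p).symm
  · show sig A M s A' p
      ((algMapOf A M B m s ι₀ A' F v hs h hF rels hker hB) ((1:A') ⊗ₜ F (MvPolynomial.X r))) = _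
    rw [algMapOf_tmul, one_smul, gB_FX A M B m s ι₀ A' F v hs h hF rels hker hB r]
    exact (h.hN (Sum.inr (Sum.inr r)) p).symm

lemma gB_toPt_eq_chi (str : BAlgebraStructure A B M A') (b : B) :
    gB A M B m s ι₀ A' F (toPt A M B m s ι₀ A' F str) hs
      (toPt_conds1 A M B m s ι₀ A' F str hs) hF rels hker
      (toPt_condB A M B m s ι₀ A' F str hs rels hker) b
    = str.algMap ((1 : A') ⊗ₜ b) := by
  obtain ⟨x, rfl⟩ := hF b
  rw [gB_F, toPt_aevalT A M B m s ι₀ A' F str hs x]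

lemma roundtrip2 (str : BAlgebraStructure A B M A') :
    toStructure A M B m s ι₀ A' F (toPt A M B m s ι₀ A' F str) hs
      (toPt_conds1 A M B m s ι₀ A' F str hs) hF rels hker
      (toPt_condB A M B m s ι₀ A' F str hs rels hker) = str := by
  apply BAS_ext
  · -- mul
    refine LinearMap.ext fun x => LinearMap.ext fun y => ?_
    show Mulv A M m s ι₀ A' (toPt A M B m s ι₀ A' F str) x y = _
    rw [toPt_Mul A M B m s ι₀ A' F str hs]
  · exact toPt_One A M B m s ι₀ A' F str hs
  · -- algMap
    apply LinearMap.restrictScalars_injective A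
    apply TensorProduct.ext'
    intro a b
    show (algMapOf A M B m s ι₀ A' F _ hs _ hF rels hker _) (a ⊗ₜ b) = str.algMap (a ⊗ₜ b)
    rw [algMapOf_tmul, gB_toPt_eq_chi A M B m s ι₀ A' F hs hF rels hker str b]
    have : (a ⊗ₜ b : A' ⊗[A] B) = a • ((1:A') ⊗ₜ b) := by
      rw [smul_tmul', smul_eq_mul, mul_one]
    rw [this, map_smul]

end RoundTrips

section NatRing
variable (A : Type) [CommRing A] (M : Type) [AddCommGroup M] [Module A M]
variable (B : Type) [CommRing B] [Algebra A B]
variable {k : ℕ} (m : Fin k → M) (s : M →ₗ[A] (Fin k → A))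
variable (ι₀ : Type)
variable {A' A'' : Type} [CommRing A'] [Algebra A A'] [CommRing A''] [Algebra A A'']
variable (φ : A' →ₐ[A] A'')
variable (F : MvPolynomial ι₀ A →ₐ[A] B)
variable (v : Pt k ι₀ A') (hs : ∀ x : M, ∑ p, s x p • m p = x)
variable (h : Conds1 A M m s ι₀ A' v)

include hs

lemma nat_aevalT (x : MvPolynomial ι₀ A) :
    baseChangeM A M φ (aevalT A M m s ι₀ A' v hs h x)
      = aevalT A M m s ι₀ A'' (pushPt A ι₀ φ v) hs
          (nat_conds1 A M m s ι₀ φ v h) x := by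
  letI := ringOf A M m s ι₀ A' v hs h
  letI := algebraOf A M m s ι₀ A' v hs h
  letI := ringOf A M m s ι₀ A'' (pushPt A ι₀ φ v) hs (nat_conds1 A M m s ι₀ φ v h)
  letI := algebraOf A M m s ι₀ A'' (pushPt A ι₀ φ v) hs (nat_conds1 A M m s ι₀ φ v h)
  have hone : baseChangeM A M φ (1 : A' ⊗[A] M) = 1 :=
    nat_One A M m ι₀ φ v
  let Ψ : (A' ⊗[A] M) →ₐ[A] (A'' ⊗[A] M) := by
    refine AlgHom.mk (⟨⟨⟨baseChangeM A M φ, hone⟩, fun x y => ?_⟩, map_zero _, map_add _⟩ :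
      (A' ⊗[A] M) →+* (A'' ⊗[A] M)) (fun a => ?_)
    · exact nat_Mul A M m s ι₀ φ v x y
    · show baseChangeM A M φ (algebraMap A _ a) = algebraMap A _ a
      rw [Algebra.algebraMap_eq_smul_one, Algebra.algebraMap_eq_smul_one, map_smul]
      exact congrArg (a • ·) hone
  have key : (Ψ.comp (MvPolynomial.aeval (tv A M m ι₀ A' v)))
      = MvPolynomial.aeval (tv A M m ι₀ A'' (pushPt A ι₀ φ v)) := by
    apply MvPolynomial.algHom_ext
    intro r
    rw [AlgHom.comp_apply, MvPolynomial.aeval_X, MvPolynomial.aeval_X]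
    exact nat_tv A M m ι₀ φ v r
  show baseChangeM A M φ (MvPolynomial.aeval (tv A M m ι₀ A' v) x) = _
  have := AlgHom.congr_fun key x
  rw [AlgHom.comp_apply] at this
  rw [show (baseChangeM A M φ) (MvPolynomial.aeval (tv A M m ι₀ A' v) x)
      = Ψ (MvPolynomial.aeval (tv A M m ι₀ A' v) x) from rfl, this]
  rfl

variable (hF : Function.Surjective F) (rels : Finset (MvPolynomial ι₀ A))
  (hker : RingHom.ker F = Ideal.span (rels : Set (MvPolynomial ι₀ A)))
  (hB : CondB A M m s ι₀ A' v hs h rels)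

include hB in
lemma nat_condB :
    CondB A M m s ι₀ A'' (pushPt A ι₀ φ v) hs (nat_conds1 A M m s ι₀ φ v h) rels := by
  intro g hg
  rw [← nat_aevalT A M m s ι₀ φ v hs h g, hB g hg, map_zero]

lemma nat_gB (b : B) :
    gB A M B m s ι₀ A'' F (pushPt A ι₀ φ v) hs (nat_conds1 A M m s ι₀ φ v h) hF rels hker
        (nat_condB A M m s ι₀ φ v hs h rels hB) b
      = baseChangeM A M φ (gB A M B m s ι₀ A' F v hs h hF rels hker hB b) := by
  obtain ⟨x, rfl⟩ := hF b
  rw [gB_F, gB_F, nat_aevalT A M m s ι₀ φ v hs h x]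

lemma nat_algMapOf (b : A' ⊗[A] B) :
    algMapOf A M B m s ι₀ A'' F (pushPt A ι₀ φ v) hs (nat_conds1 A M m s ι₀ φ v h) hF rels hker
        (nat_condB A M m s ι₀ φ v hs h rels hB) (baseChangeB A B φ b)
      = baseChangeM A M φ (algMapOf A M B m s ι₀ A' F v hs h hF rels hker hB b) := by
  induction b using TensorProduct.induction_on with
  | zero => simp
  | add x y hx hy => simp only [map_add, hx, hy]
  | tmul a β =>
      rw [show baseChangeB A B φ (a ⊗ₜ β) = φ a ⊗ₜ β from by
        simp [baseChangeB]]
      rw [algMapOf_tmul, algMapOf_tmul, nat_smul A M φ,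
        nat_gB A M B m s ι₀ φ F v hs h hF rels hker hB β]

end NatRing

section Universal
variable (A : Type) [CommRing A] (M : Type) [AddCommGroup M] [Module A M]
variable (B : Type) [CommRing B] [Algebra A B]
variable {k : ℕ} (m : Fin k → M) (s : M →ₗ[A] (Fin k → A))
variable (ι₀ : Type)

/-- index type for the first batch of relations -/
abbrev Idx (k : ℕ) (ι₀ : Type) : Type :=
  (Jdx k ι₀ × Fin k) ⊕ (((Fin k × Fin k) × Fin k) ⊕
    ((((Fin k × Fin k) × Fin k) × Fin k) ⊕ ((Fin k ⊕ (Fin k × Fin k)) × Fin k)))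

variable (A' : Type) [CommRing A'] [Algebra A A']

/-- the "defects" of a point: the point satisfies the first batch of conditions iff
all defects vanish -/
noncomputable def defect (v : Pt k ι₀ A') : Idx k ι₀ → A'
  | .inl (j, p) => v j p - sig A M s A' p (el A M m A' (v j))
  | .inr (.inl ((i, j), p)) =>
      sig A M s A' p (Mulv A M m s ι₀ A' v (eb A M m A' i) (eb A M m A' j)
        - Mulv A M m s ι₀ A' v (eb A M m A' j) (eb A M m A' i))
  | .inr (.inr (.inl (((i, j), l), p))) =>
      sig A M s A' p
        (Mulv A M m s ι₀ A' v (Mulv A M m s ι₀ A' v (eb A M m A' i) (eb A M m A' j))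
            (eb A M m A' l)
          - Mulv A M m s ι₀ A' v (eb A M m A' i)
              (Mulv A M m s ι₀ A' v (eb A M m A' j) (eb A M m A' l)))
  | .inr (.inr (.inr (.inl j, p))) =>
      sig A M s A' p (Mulv A M m s ι₀ A' v (Onev A M m ι₀ A' v) (eb A M m A' j)
        - eb A M m A' j)
  | .inr (.inr (.inr (.inr (i, j), p))) =>
      sig A M s A' p (Mulv A M m s ι₀ A' v (eb A M m A' i) (eb A M m A' j)
        - Cv A M m ι₀ A' v i j)

variable {A'' : Type} [CommRing A''] [Algebra A A'']

lemma defect_natural (φ : A' →ₐ[A] A'') (v : Pt k ι₀ A') (idx : Idx k ι₀) :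
    φ (defect A M m s ι₀ A' v idx) = defect A M m s ι₀ A'' (pushPt A ι₀ φ v) idx := by
  rcases idx with ⟨j, p⟩ | (⟨⟨i, j⟩, p⟩ | (⟨⟨⟨i, j⟩, l⟩, p⟩ | (⟨j | ⟨i, j⟩, p⟩)))
  · show φ (v j p - _) = _
    rw [map_sub, ← nat_sig A M s φ, nat_el A M m φ]
    rfl
  · show φ (sig A M s A' p _) = _
    rw [← nat_sig A M s φ, map_sub, nat_Mul A M m s ι₀ φ, nat_Mul A M m s ι₀ φ,
      nat_eb A M m φ, nat_eb A M m φ]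
    rfl
  · show φ (sig A M s A' p _) = _
    rw [← nat_sig A M s φ, map_sub, nat_Mul A M m s ι₀ φ, nat_Mul A M m s ι₀ φ,
      nat_Mul A M m s ι₀ φ, nat_Mul A M m s ι₀ φ, nat_eb A M m φ, nat_eb A M m φ,
      nat_eb A M m φ]
    rfl
  · show φ (sig A M s A' p _) = _
    rw [← nat_sig A M s φ, map_sub, nat_Mul A M m s ι₀ φ, nat_One A M m ι₀ φ,
      nat_eb A M m φ]
    rfl
  · show φ (sig A M s A' p _) = _
    rw [← nat_sig A M s φ, map_sub, nat_Mul A M m s ι₀ φ, nat_eb A M m φ, nat_eb A M m φ,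
      show (baseChangeM A M φ) (Cv A M m ι₀ A' v i j)
        = Cv A M m ι₀ A'' (pushPt A ι₀ φ v) i j from nat_el A M m φ _]
    rfl

variable (hs : ∀ x : M, ∑ p, s x p • m p = x)
include hs

lemma sig_zero_iff (x : A' ⊗[A] M) : (∀ p, sig A M s A' p x = 0) ↔ x = 0 := by
  constructor
  · intro hx
    refine el_eq_el A M m s A' hs x 0 fun p => ?_
    rw [hx p, map_zero]
  · rintro rfl p
    rw [map_zero]

lemma conds1_iff_defect (v : Pt k ι₀ A') :
    Conds1 A M m s ι₀ A' v ↔ ∀ idx, defect A M m s ι₀ A' v idx = 0 := by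
  constructor
  · intro h idx
    rcases idx with ⟨j, p⟩ | (⟨⟨i, j⟩, p⟩ | (⟨⟨⟨i, j⟩, l⟩, p⟩ | (⟨j | ⟨i, j⟩, p⟩)))
    · exact sub_eq_zero.mpr (h.hN j p)
    · show sig A M s A' p _ = 0
      rw [sub_eq_zero.mpr (h.hC1 i j), map_zero]
    · show sig A M s A' p _ = 0
      rw [sub_eq_zero.mpr (h.hC2 i j l), map_zero]
    · show sig A M s A' p _ = 0
      rw [sub_eq_zero.mpr (h.hC3 j), map_zero]
    · show sig A M s A' p _ = 0
      rw [sub_eq_zero.mpr (h.hC4 i j), map_zero]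
  · intro hd
    constructor
    · intro j p
      exact sub_eq_zero.mp (hd (.inl (j, p)))
    · intro i j
      refine sub_eq_zero.mp ((sig_zero_iff A M m s A' hs _).mp fun p => ?_)
      exact hd (.inr (.inl ((i, j), p)))
    · intro i j l
      refine sub_eq_zero.mp ((sig_zero_iff A M m s A' hs _).mp fun p => ?_)
      exact hd (.inr (.inr (.inl (((i, j), l), p))))
    · intro j
      refine sub_eq_zero.mp ((sig_zero_iff A M m s A' hs _).mp fun p => ?_)
      exact hd (.inr (.inr (.inr (.inl j, p))))
    · intro i j
      refine sub_eq_zero.mp ((sig_zero_iff A M m s A' hs _).mp fun p => ?_)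
      exact hd (.inr (.inr (.inr (.inr (i, j), p))))

variable (rels : Finset (MvPolynomial ι₀ A))

/-- defects for the second batch -/
noncomputable def defect2 (v : Pt k ι₀ A') (h : Conds1 A M m s ι₀ A' v) :
    (↥rels × Fin k) → A' :=
  fun gp => sig A M s A' gp.2 (aevalT A M m s ι₀ A' v hs h (gp.1 : MvPolynomial ι₀ A))

lemma defect2_natural (φ : A' →ₐ[A] A'') (v : Pt k ι₀ A') (h : Conds1 A M m s ι₀ A' v)
    (idx : ↥rels × Fin k) :
    φ (defect2 A M m s ι₀ A' hs rels v h idx)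
      = defect2 A M m s ι₀ A'' hs rels (pushPt A ι₀ φ v)
          (nat_conds1 A M m s ι₀ φ v h) idx := by
  show φ (sig A M s A' idx.2 _) = sig A M s A'' idx.2 _
  rw [← nat_sig A M s φ, nat_aevalT A M m s ι₀ φ v hs h]

lemma condB_iff_defect2 (v : Pt k ι₀ A') (h : Conds1 A M m s ι₀ A' v) :
    CondB A M m s ι₀ A' v hs h rels
      ↔ ∀ idx, defect2 A M m s ι₀ A' hs rels v h idx = 0 := by
  constructor
  · rintro hB ⟨g, p⟩
    show sig A M s A' p _ = 0
    rw [hB g.1 g.2, map_zero]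
  · intro hd g hg
    refine (sig_zero_iff A M m s A' hs _).mp fun p => ?_
    exact hd (⟨g, hg⟩, p)

end Universal

section Qconstruction
variable (A : Type) [CommRing A] (M : Type) [AddCommGroup M] [Module A M]
variable (B : Type) [CommRing B] [Algebra A B]
variable {k : ℕ} (m : Fin k → M) (s : M →ₗ[A] (Fin k → A))
variable (ι₀ : Type)

/-- the base polynomial ring -/
abbrev RR (k : ℕ) (ι₀ : Type) : Type := MvPolynomial (Jdx k ι₀ × Fin k) A

/-- the universal point -/
noncomputable def uPt (k : ℕ) : Pt k ι₀ (RR A k ι₀) := fun j p => MvPolynomial.X (j, p)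

/-- first ideal of relations -/
noncomputable def I1 : Ideal (RR A k ι₀) :=
  Ideal.span (Set.range (defect A M m s ι₀ (RR A k ι₀) (uPt A ι₀ k)))

/-- first-stage quotient -/
abbrev Q1 : Type := RR A k ι₀ ⧸ I1 A M m s ι₀ (k := k)

/-- first projection -/
noncomputable def pi1 : RR A k ι₀ →ₐ[A] Q1 A M m s ι₀ :=
  Ideal.Quotient.mkₐ A _

/-- the first-stage canonical point -/
noncomputable def v1 : Pt k ι₀ (Q1 A M m s ι₀) :=
  pushPt A ι₀ (pi1 A M m s ι₀) (uPt A ι₀ k)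

variable (hs : ∀ x : M, ∑ p, s x p • m p = x)
include hs

lemma conds1_v1 : Conds1 A M m s ι₀ (Q1 A M m s ι₀) (v1 A M m s ι₀) := by
  rw [conds1_iff_defect A M m s ι₀ _ hs]
  intro idx
  rw [v1, ← defect_natural A M m s ι₀ (RR A k ι₀) (pi1 A M m s ι₀) (uPt A ι₀ k) idx]
  show Ideal.Quotient.mkₐ A _ _ = 0
  rw [Ideal.Quotient.mkₐ_eq_mk, Ideal.Quotient.eq_zero_iff_mem]
  exact Ideal.subset_span (Set.mem_range_self idx)

variable (rels : Finset (MvPolynomial ι₀ A))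

/-- second ideal of relations -/
noncomputable def I2 : Ideal (Q1 A M m s ι₀) :=
  Ideal.span (Set.range (defect2 A M m s ι₀ (Q1 A M m s ι₀) hs rels (v1 A M m s ι₀)
    (conds1_v1 A M m s ι₀ hs)))

/-- the representing algebra -/
abbrev QQ : Type := Q1 A M m s ι₀ ⧸ I2 A M m s ι₀ hs rels

/-- second projection -/
noncomputable def pi2 : Q1 A M m s ι₀ →ₐ[A] QQ A M m s ι₀ hs rels :=
  Ideal.Quotient.mkₐ A _

end Qconstruction

section MainEquiv
variable (A : Type) [CommRing A] (M : Type) [AddCommGroup M] [Module A M]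
variable (B : Type) [CommRing B] [Algebra A B]
variable {k : ℕ} (m : Fin k → M) (s : M →ₗ[A] (Fin k → A))
variable (ι₀ : Type)
variable (F : MvPolynomial ι₀ A →ₐ[A] B)
variable (hs : ∀ x : M, ∑ p, s x p • m p = x)
variable (hF : Function.Surjective F) (rels : Finset (MvPolynomial ι₀ A))
  (hker : RingHom.ker F = Ideal.span (rels : Set (MvPolynomial ι₀ A)))
variable (A' : Type) [CommRing A'] [Algebra A A']

/-- point attached to an algebra homomorphism from `Q` -/
noncomputable def homPt (h : QQ A M m s ι₀ hs rels →ₐ[A] A') : Pt k ι₀ A' :=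
  pushPt A ι₀ ((h.comp (pi2 A M m s ι₀ hs rels)).comp (pi1 A M m s ι₀)) (uPt A ι₀ k)

lemma homPt_conds1 (h : QQ A M m s ι₀ hs rels →ₐ[A] A') :
    Conds1 A M m s ι₀ A' (homPt A M m s ι₀ hs rels A' h) := by
  rw [conds1_iff_defect A M m s ι₀ A' hs]
  intro idx
  rw [homPt, ← defect_natural]
  show h (pi2 A M m s ι₀ hs rels (pi1 A M m s ι₀ (defect A M m s ι₀ _ (uPt A ι₀ k) idx))) = 0
  have h1 : pi1 A M m s ι₀ (defect A M m s ι₀ _ (uPt A ι₀ k) idx) = 0 := by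
    rw [pi1, Ideal.Quotient.mkₐ_eq_mk, Ideal.Quotient.eq_zero_iff_mem]
    exact Ideal.subset_span (Set.mem_range_self idx)
  rw [h1, map_zero, map_zero]

lemma homPt_condB (h : QQ A M m s ι₀ hs rels →ₐ[A] A') :
    CondB A M m s ι₀ A' (homPt A M m s ι₀ hs rels A' h) hs
      (homPt_conds1 A M m s ι₀ hs rels A' h) rels := by
  rw [condB_iff_defect2 A M m s ι₀ A' hs rels]
  intro idx
  have key : defect2 A M m s ι₀ A' hs rels (homPt A M m s ι₀ hs rels A' h)
        (homPt_conds1 A M m s ι₀ hs rels A' h) idx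
      = (h.comp (pi2 A M m s ι₀ hs rels))
          (defect2 A M m s ι₀ (Q1 A M m s ι₀) hs rels (v1 A M m s ι₀)
            (conds1_v1 A M m s ι₀ hs) idx) := by
    rw [defect2_natural A M m s ι₀ _ hs rels (h.comp (pi2 A M m s ι₀ hs rels))
      (v1 A M m s ι₀) (conds1_v1 A M m s ι₀ hs) idx]
    rfl
  rw [key]
  show h ((pi2 A M m s ι₀ hs rels) _) = 0
  have h2 : pi2 A M m s ι₀ hs rels (defect2 A M m s ι₀ _ hs rels (v1 A M m s ι₀)
      (conds1_v1 A M m s ι₀ hs) idx) = 0 := by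
    rw [pi2, Ideal.Quotient.mkₐ_eq_mk, Ideal.Quotient.eq_zero_iff_mem]
    exact Ideal.subset_span (Set.mem_range_self idx)
  rw [h2, map_zero]

/-- first stage of the homomorphism attached to a good point -/
noncomputable def toHom1 (v : Pt k ι₀ A') (h1 : Conds1 A M m s ι₀ A' v) :
    Q1 A M m s ι₀ →ₐ[A] A' :=
  Ideal.Quotient.liftₐ _ (MvPolynomial.aeval (fun jp : Jdx k ι₀ × Fin k => v jp.1 jp.2))
    (by
      intro a ha
      set h0 : RR A k ι₀ →ₐ[A] A' :=
        MvPolynomial.aeval (fun jp : Jdx k ι₀ × Fin k => v jp.1 jp.2) with hh0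
      have hpush0 : pushPt A ι₀ h0 (uPt A ι₀ k) = v := by
        funext j p
        exact MvPolynomial.aeval_X _ (j, p)
      have hle : I1 A M m s ι₀ (k := k) ≤ RingHom.ker h0 := by
        rw [I1, Ideal.span_le]
        rintro _ ⟨idx, rfl⟩
        refine RingHom.mem_ker.mpr ?_
        rw [defect_natural A M m s ι₀ _ h0 (uPt A ι₀ k) idx, hpush0]
        exact (conds1_iff_defect A M m s ι₀ A' hs v).mp h1 idx
      exact RingHom.mem_ker.mp (hle ha))

lemma toHom1_mk (v : Pt k ι₀ A') (h1 : Conds1 A M m s ι₀ A' v) (x : RR A k ι₀) :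
    toHom1 A M m s ι₀ hs A' v h1 (pi1 A M m s ι₀ x)
      = MvPolynomial.aeval (fun jp : Jdx k ι₀ × Fin k => v jp.1 jp.2) x := by
  unfold toHom1
  rw [show pi1 A M m s ι₀ x = Ideal.Quotient.mk (I1 A M m s ι₀ (k := k)) x from rfl,
    Ideal.Quotient.liftₐ_apply]
  rfl

lemma toHom1_push (v : Pt k ι₀ A') (h1 : Conds1 A M m s ι₀ A' v) :
    pushPt A ι₀ (toHom1 A M m s ι₀ hs A' v h1) (v1 A M m s ι₀) = v := by
  funext j p
  show toHom1 A M m s ι₀ hs A' v h1 (pi1 A M m s ι₀ (MvPolynomial.X (j, p))) = v j p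
  rw [toHom1_mk]
  exact MvPolynomial.aeval_X _ (j, p)

/-- homomorphism attached to a good point -/
noncomputable def toHom (v : Pt k ι₀ A') (h1 : Conds1 A M m s ι₀ A' v)
    (hB : CondB A M m s ι₀ A' v hs h1 rels) : QQ A M m s ι₀ hs rels →ₐ[A] A' :=
  Ideal.Quotient.liftₐ _ (toHom1 A M m s ι₀ hs A' v h1)
    (by
      intro a ha
      have key : ∀ (w : Pt k ι₀ A') (hw : Conds1 A M m s ι₀ A' w) (idx), w = v →
          defect2 A M m s ι₀ A' hs rels w hw idx = 0 := by
        rintro w hw idx rfl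
        exact (condB_iff_defect2 A M m s ι₀ A' hs rels w hw).mp hB idx
      have hle : I2 A M m s ι₀ hs rels (k := k)
          ≤ RingHom.ker (toHom1 A M m s ι₀ hs A' v h1) := by
        rw [I2, Ideal.span_le]
        rintro _ ⟨idx, rfl⟩
        refine RingHom.mem_ker.mpr ?_
        rw [defect2_natural A M m s ι₀ _ hs rels (toHom1 A M m s ι₀ hs A' v h1)
          (v1 A M m s ι₀) (conds1_v1 A M m s ι₀ hs) idx]
        exact key _ _ idx (toHom1_push A M m s ι₀ hs A' v h1)
      exact RingHom.mem_ker.mp (hle ha))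

lemma toHom_pi (v : Pt k ι₀ A') (h1 : Conds1 A M m s ι₀ A' v)
    (hB : CondB A M m s ι₀ A' v hs h1 rels) (x : RR A k ι₀) :
    toHom A M m s ι₀ hs rels A' v h1 hB
        (pi2 A M m s ι₀ hs rels (pi1 A M m s ι₀ x))
      = MvPolynomial.aeval (fun jp : Jdx k ι₀ × Fin k => v jp.1 jp.2) x := by
  unfold toHom
  rw [show pi2 A M m s ι₀ hs rels (pi1 A M m s ι₀ x)
      = Ideal.Quotient.mk (I2 A M m s ι₀ hs rels (k := k)) (pi1 A M m s ι₀ x) from rfl,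
    Ideal.Quotient.liftₐ_apply]
  exact toHom1_mk A M m s ι₀ hs A' v h1 x

lemma homPt_toHom (v : Pt k ι₀ A') (h1 : Conds1 A M m s ι₀ A' v)
    (hB : CondB A M m s ι₀ A' v hs h1 rels) :
    homPt A M m s ι₀ hs rels A' (toHom A M m s ι₀ hs rels A' v h1 hB) = v := by
  funext j p
  show toHom A M m s ι₀ hs rels A' v h1 hB
    (pi2 A M m s ι₀ hs rels (pi1 A M m s ι₀ (MvPolynomial.X (j, p)))) = v j p
  rw [toHom_pi]
  exact MvPolynomial.aeval_X _ (j, p)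

lemma toHom_homPt (h : QQ A M m s ι₀ hs rels →ₐ[A] A')
    (h1 : Conds1 A M m s ι₀ A' (homPt A M m s ι₀ hs rels A' h))
    (hB : CondB A M m s ι₀ A' (homPt A M m s ι₀ hs rels A' h) hs h1 rels) :
    toHom A M m s ι₀ hs rels A' (homPt A M m s ι₀ hs rels A' h) h1 hB = h := by
  apply AlgHom.ext
  intro q
  obtain ⟨y, rfl⟩ := Ideal.Quotient.mkₐ_surjective A _ q
  obtain ⟨x, rfl⟩ := Ideal.Quotient.mkₐ_surjective A _ y
  show toHom A M m s ι₀ hs rels A' _ h1 hB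
    (pi2 A M m s ι₀ hs rels (pi1 A M m s ι₀ x)) = _
  rw [toHom_pi]
  have : (h.comp ((pi2 A M m s ι₀ hs rels).comp (pi1 A M m s ι₀)))
      = MvPolynomial.aeval (fun jp : Jdx k ι₀ × Fin k =>
          homPt A M m s ι₀ hs rels A' h jp.1 jp.2) := by
    apply MvPolynomial.algHom_ext
    intro jp
    rw [MvPolynomial.aeval_X]
    rfl
  exact (AlgHom.congr_fun this x).symm

lemma toHom_congr (v v' : Pt k ι₀ A') (hv : v = v') (h1 : Conds1 A M m s ι₀ A' v)
    (hB : CondB A M m s ι₀ A' v hs h1 rels) (h1' : Conds1 A M m s ι₀ A' v')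
    (hB' : CondB A M m s ι₀ A' v' hs h1' rels) :
    toHom A M m s ι₀ hs rels A' v h1 hB = toHom A M m s ι₀ hs rels A' v' h1' hB' := by
  subst hv
  rfl

end MainEquiv

section Assemble
variable (A : Type) [CommRing A] (M : Type) [AddCommGroup M] [Module A M]
variable (B : Type) [CommRing B] [Algebra A B]
variable {k : ℕ} (m : Fin k → M) (s : M →ₗ[A] (Fin k → A))
variable (ι₀ : Type)
variable (F : MvPolynomial ι₀ A →ₐ[A] B)
variable (hs : ∀ x : M, ∑ p, s x p • m p = x)
variable (hF : Function.Surjective F) (rels : Finset (MvPolynomial ι₀ A))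
  (hker : RingHom.ker F = Ideal.span (rels : Set (MvPolynomial ι₀ A)))

lemma toStructure_congr (A' : Type) [CommRing A'] [Algebra A A'] (v v' : Pt k ι₀ A')
    (hv : v = v') (h1 : Conds1 A M m s ι₀ A' v) (hB : CondB A M m s ι₀ A' v hs h1 rels)
    (h1' : Conds1 A M m s ι₀ A' v') (hB' : CondB A M m s ι₀ A' v' hs h1' rels) :
    toStructure A M B m s ι₀ A' F v hs h1 hF rels hker hB
      = toStructure A M B m s ι₀ A' F v' hs h1' hF rels hker hB' := by
  subst hv
  rfl

/-- the natural bijection -/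
noncomputable def repEquiv (A' : Type) [CommRing A'] [Algebra A A'] :
    (QQ A M m s ι₀ hs rels →ₐ[A] A') ≃ BAlgebraStructure A B M A' where
  toFun h := toStructure A M B m s ι₀ A' F (homPt A M m s ι₀ hs rels A' h) hs
    (homPt_conds1 A M m s ι₀ hs rels A' h) hF rels hker (homPt_condB A M m s ι₀ hs rels A' h)
  invFun str := toHom A M m s ι₀ hs rels A' (toPt A M B m s ι₀ A' F str)
    (toPt_conds1 A M B m s ι₀ A' F str hs) (toPt_condB A M B m s ι₀ A' F str hs rels hker)
  left_inv h := by
    dsimp only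
    rw [toHom_congr A M m s ι₀ hs rels A' _ _
      (roundtrip1 A M B m s ι₀ A' F hs hF rels hker _ _ _)
      _ _ (homPt_conds1 A M m s ι₀ hs rels A' h) (homPt_condB A M m s ι₀ hs rels A' h)]
    exact toHom_homPt A M m s ι₀ hs rels A' h _ _
  right_inv str := by
    dsimp only
    rw [toStructure_congr A M B m s ι₀ F hs hF rels hker A' _ _
      (homPt_toHom A M m s ι₀ hs rels A' _ _ _)
      _ _ (toPt_conds1 A M B m s ι₀ A' F str hs)
      (toPt_condB A M B m s ι₀ A' F str hs rels hker)]
    exact roundtrip2 A M B m s ι₀ A' F hs hF rels hker str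

end Assemble

section Final
variable (A : Type) [CommRing A] (M : Type) [AddCommGroup M] [Module A M]
variable (B : Type) [CommRing B] [Algebra A B]
variable {k : ℕ} (m : Fin k → M) (s : M →ₗ[A] (Fin k → A))
variable (ι₀ : Type) [Fintype ι₀]
variable (F : MvPolynomial ι₀ A →ₐ[A] B)
variable (hs : ∀ x : M, ∑ p, s x p • m p = x)
variable (hF : Function.Surjective F) (rels : Finset (MvPolynomial ι₀ A))
  (hker : RingHom.ker F = Ideal.span (rels : Set (MvPolynomial ι₀ A)))

lemma fp_QQ : Algebra.FinitePresentation A (QQ A M m s ι₀ hs rels) := by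
  haveI h0 : Algebra.FinitePresentation A (RR A k ι₀) :=
    Algebra.FinitePresentation.mvPolynomial A A _
  haveI h1 : Algebra.FinitePresentation A (Q1 A M m s ι₀) :=
    Algebra.FinitePresentation.quotient (Submodule.fg_span (Set.finite_range _))
  exact Algebra.FinitePresentation.quotient (Submodule.fg_span (Set.finite_range _))

set_option maxHeartbeats 1000000 in
/-- the full representation -/
noncomputable def theRep : AlgebraStructureRepresentation A B M where
  Q := QQ A M m s ι₀ hs rels
  equiv A' _ _ := repEquiv A M B m s ι₀ F hs hF rels hker A'
  naturality_one A' A'' _ _ _ _ f h :=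
    (nat_One A M m ι₀ f (homPt A M m s ι₀ hs rels A' h)).symm
  naturality_mul A' A'' _ _ _ _ f h x y :=
    (nat_Mul A M m s ι₀ f (homPt A M m s ι₀ hs rels A' h) x y).symm
  naturality_algMap A' A'' _ _ _ _ f h b := by
    have hv : homPt A M m s ι₀ hs rels A'' (f.comp h)
        = pushPt A ι₀ f (homPt A M m s ι₀ hs rels A' h) := rfl
    show (toStructure A M B m s ι₀ A'' F (homPt A M m s ι₀ hs rels A'' (f.comp h)) hs
      (homPt_conds1 A M m s ι₀ hs rels A'' (f.comp h)) hF rels hker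
      (homPt_condB A M m s ι₀ hs rels A'' (f.comp h))).algMap (baseChangeB A B f b) = _
    rw [toStructure_congr A M B m s ι₀ F hs hF rels hker A'' _ _ hv _ _
      (nat_conds1 A M m s ι₀ f _ (homPt_conds1 A M m s ι₀ hs rels A' h))
      (nat_condB A M m s ι₀ f _ hs _ rels (homPt_condB A M m s ι₀ hs rels A' h))]
    exact nat_algMapOf A M B m s ι₀ f F (homPt A M m s ι₀ hs rels A' h) hs
      (homPt_conds1 A M m s ι₀ hs rels A' h) hF rels hker
      (homPt_condB A M m s ι₀ hs rels A' h) b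

end Final


/-- **Lemma (finite presentation case).**
Let `A` be a commutative ring, `B` a commutative `A`-algebra of finite presentation, and `M` a
finite locally free (finitely generated projective) `A`-module.  Then there is a commutative
`A`-algebra `Q` of finite presentation over `A` together with bijections, natural in the
commutative `A`-algebra `A'`, between `A`-algebra homomorphisms `Q → A'` and
`(B ⊗[A] A')`-algebra structures on the `A'`-module `M ⊗[A] A'`. -/
theorem exists_algebra_structure_representation_finitePresentation
    (A : Type) [CommRing A] (B : Type) [CommRing B] [Algebra A B]
    (M : Type) [AddCommGroup M] [Module A M]
    [Module.Finite A M] [Module.Projective A M] (hB : Algebra.FinitePresentation A B) :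
    ∃ r : AlgebraStructureRepresentation A B M, Algebra.FinitePresentation A r.Q := by
  obtain ⟨k, m, hspan⟩ := Module.Finite.exists_fin (R := A) (M := M)
  set π : (Fin k → A) →ₗ[A] M := Fintype.linearCombination A m with hπdef
  have hπ : Function.Surjective π := by
    intro x
    have hx : x ∈ Submodule.span A (Set.range m) := by rw [hspan]; trivial
    obtain ⟨c, hc⟩ := (Submodule.mem_span_range_iff_exists_fun A).mp hx
    exact ⟨c, by rw [hπdef, Fintype.linearCombination_apply]; exact hc⟩
  obtain ⟨s, hs0⟩ := Module.projective_lifting_property π LinearMap.id hπ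
  have hs : ∀ x : M, ∑ p, s x p • m p = x := by
    intro x
    have h1 : π (s x) = x := LinearMap.congr_fun hs0 x
    rw [hπdef, Fintype.linearCombination_apply] at h1
    exact h1
  obtain ⟨ι₀, hfin, F, hF, hfg⟩ := Algebra.FinitePresentation.iff_quotient_mvPolynomial'.mp hB
  haveI := hfin
  obtain ⟨rels, hrels⟩ := hfg
  have hker : RingHom.ker F = Ideal.span (rels : Set (MvPolynomial ι₀ A)) := hrels.symm
  exact ⟨theRep A M B m s ι₀ F hs hF rels hker, fp_QQ A M m s ι₀ hs rels⟩
end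

section
/- Let A be a commutative ring, A₀ a commutative A-algebra that is finite locally free of rank d as an A-module (finitely generated projective of constant rank d), and B a commutative A₀-algebra. Then there exists a commutative A-algebra Q together with bijections Hom_{A-alg}(Q, A') ≅ Hom_{A₀-alg}(B, A₀ ⊗_A A'), natural in the commutative A-algebra A'. In other words, the Weil restriction of the affine scheme Spec B along the finite flat morphism Spec A₀ → Spec A is representable by the affine scheme Spec Q. -/
open TensorProduct

/-- An `A`-module `M` is finite locally free of rank `d` if it is finitely generated,
projective (equivalently, locally free), and has constant rank `d` at all primes of `A`. -/
def IsFiniteLocallyFreeOfRank (A : Type) [CommRing A]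
    (M : Type) [AddCommGroup M] [Module A M] (d : ℕ) : Prop :=
  Module.Finite A M ∧ Module.Projective A M ∧
    ∀ p : PrimeSpectrum A, Module.rankAtStalk M p = d

/-- The homomorphism `A₀ ⊗[A] A' → A₀ ⊗[A] A''` of `A₀`-algebras induced by a homomorphism
of `A`-algebras `A' → A''`; postcomposition with it makes
`A' ↦ Hom_{A₀-alg}(B, A₀ ⊗[A] A')` (the affine Weil restriction functor) a functor. -/
noncomputable def weilBaseChange (A A₀ : Type) [CommRing A] [CommRing A₀] [Algebra A A₀]
    {A' A'' : Type} [CommRing A'] [Algebra A A'] [CommRing A''] [Algebra A A'']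
    (f : A' →ₐ[A] A'') : A₀ ⊗[A] A' →ₐ[A₀] A₀ ⊗[A] A'' :=
  Algebra.TensorProduct.map (AlgHom.id A₀ A₀) f

/-- The data of a commutative `A`-algebra `Q` corepresenting the affine Weil restriction
functor of `B` along `A → A₀`: bijections `Hom_{A-alg}(Q, A') ≃ Hom_{A₀-alg}(B, A₀ ⊗[A] A')`,
natural in the commutative `A`-algebra `A'`. -/
structure WeilRestrictionRepresentation (A : Type) [CommRing A] (A₀ : Type) [CommRing A₀]
    [Algebra A A₀] (B : Type) [CommRing B] [Algebra A₀ B] where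
  Q : Type
  [commRingQ : CommRing Q]
  [algebraQ : Algebra A Q]
  equiv : ∀ (A' : Type) [CommRing A'] [Algebra A A'],
    (Q →ₐ[A] A') ≃ (B →ₐ[A₀] A₀ ⊗[A] A')
  naturality : ∀ (A' A'' : Type) [CommRing A'] [Algebra A A'] [CommRing A''] [Algebra A A'']
    (f : A' →ₐ[A] A'') (h : Q →ₐ[A] A'),
    equiv A'' (f.comp h) = (weilBaseChange A A₀ f).comp (equiv A' h)

namespace WeilAux

open MvPolynomial

variable (A : Type) [CommRing A] (A₀ : Type) [CommRing A₀] [Algebra A A₀]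
  (B : Type) [CommRing B] [Algebra A₀ B]
  (n : ℕ) (e : Fin n → A₀) (lam : Fin n → A₀ →ₗ[A] A)

/-- the ambient polynomial ring -/
abbrev R := MvPolynomial (B × (A₀ →ₗ[A] A)) A

def relSet : Set (R A A₀ B) :=
  fun p => (∃ b l m, p = X (b, l + m) - X (b, l) - X (b, m)) ∨
        (∃ b, ∃ a : A, ∃ l, p = X (b, a • l) - C a * X (b, l)) ∨
        (∃ b₁ b₂ l, p = X (b₁ + b₂, l) - X (b₁, l) - X (b₂, l)) ∨
        (∃ b₁, ∃ b₂, ∃ l : A₀ →ₗ[A] A, p = X (b₁ * b₂, l) -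
          ∑ i, ∑ j, C (l (e i * e j)) * (X (b₁, lam i) * X (b₂, lam j))) ∨
        (∃ a₀ : A₀, ∃ l, p = X (algebraMap A₀ B a₀, l) - C (l a₀))

noncomputable def J : Ideal (R A A₀ B) := Ideal.span (relSet A A₀ B n e lam)

abbrev Q := R A A₀ B ⧸ J A A₀ B n e lam

noncomputable def mkQ : R A A₀ B →ₐ[A] Q A A₀ B n e lam :=
  Ideal.Quotient.mkₐ A (J A A₀ B n e lam)

noncomputable def gen (b : B) (l : A₀ →ₗ[A] A) : Q A A₀ B n e lam :=
  mkQ A A₀ B n e lam (X (b, l))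

variable {A A₀ B}

lemma mkQ_rel {p : R A A₀ B} (hp : p ∈ relSet A A₀ B n e lam) :
    mkQ A A₀ B n e lam p = 0 := by
  simp only [mkQ, Ideal.Quotient.mkₐ_eq_mk, Ideal.Quotient.eq_zero_iff_mem]
  exact Ideal.subset_span hp

lemma gen_add_right (b : B) (l m : A₀ →ₗ[A] A) :
    gen A A₀ B n e lam b (l + m) = gen A A₀ B n e lam b l + gen A A₀ B n e lam b m := by
  have h := mkQ_rel n e lam (Or.inl ⟨b, l, m, rfl⟩)
  rw [map_sub, map_sub, sub_sub, sub_eq_zero] at h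
  simpa only [gen] using h

lemma gen_smul_right (b : B) (a : A) (l : A₀ →ₗ[A] A) :
    gen A A₀ B n e lam b (a • l) = a • gen A A₀ B n e lam b l := by
  have h := mkQ_rel n e lam (Or.inr (Or.inl ⟨b, a, l, rfl⟩))
  rw [map_sub, sub_eq_zero, map_mul, ← MvPolynomial.algebraMap_eq, AlgHom.commutes] at h
  rw [Algebra.smul_def a (gen A A₀ B n e lam b l)]
  simpa only [gen] using h

lemma gen_add_left (b₁ b₂ : B) (l : A₀ →ₗ[A] A) :
    gen A A₀ B n e lam (b₁ + b₂) l = gen A A₀ B n e lam b₁ l + gen A A₀ B n e lam b₂ l := by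
  have h := mkQ_rel n e lam (Or.inr (Or.inr (Or.inl ⟨b₁, b₂, l, rfl⟩)))
  rw [map_sub, map_sub, sub_sub, sub_eq_zero] at h
  simpa only [gen] using h

lemma gen_mul (b₁ b₂ : B) (l : A₀ →ₗ[A] A) :
    gen A A₀ B n e lam (b₁ * b₂) l =
      ∑ i, ∑ j, l (e i * e j) •
        (gen A A₀ B n e lam b₁ (lam i) * gen A A₀ B n e lam b₂ (lam j)) := by
  have h := mkQ_rel n e lam (Or.inr (Or.inr (Or.inr (Or.inl ⟨b₁, b₂, l, rfl⟩))))
  rw [map_sub, sub_eq_zero] at h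
  rw [gen, h, map_sum]
  refine Finset.sum_congr rfl fun i _ => ?_
  rw [map_sum]
  refine Finset.sum_congr rfl fun j _ => ?_
  rw [map_mul (mkQ A A₀ B n e lam), map_mul (mkQ A A₀ B n e lam),
    ← MvPolynomial.algebraMap_eq, AlgHom.commutes]
  exact (Algebra.smul_def (l (e i * e j))
    (gen A A₀ B n e lam b₁ (lam i) * gen A A₀ B n e lam b₂ (lam j))).symm

lemma gen_algebraMap (a₀ : A₀) (l : A₀ →ₗ[A] A) :
    gen A A₀ B n e lam (algebraMap A₀ B a₀) l =
      algebraMap A (Q A A₀ B n e lam) (l a₀) := by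
  have h := mkQ_rel (p := X (algebraMap A₀ B a₀, l) - C (l a₀)) n e lam
    (Or.inr (Or.inr (Or.inr (Or.inr ⟨a₀, l, rfl⟩))))
  rw [map_sub, sub_eq_zero, ← MvPolynomial.algebraMap_eq, AlgHom.commutes] at h
  exact h

/-- `l ↦ gen b l` as a linear map. -/
noncomputable def genLin (b : B) : (A₀ →ₗ[A] A) →ₗ[A] Q A A₀ B n e lam where
  toFun l := gen A A₀ B n e lam b l
  map_add' l m := gen_add_right n e lam b l m
  map_smul' a l := gen_smul_right n e lam b a l

variable (hdb : ∀ x : A₀, ∑ i, lam i x • e i = x)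

include hdb in
lemma lam_expand (l : A₀ →ₗ[A] A) : l = ∑ i, l (e i) • lam i := by
  ext x
  simp only [LinearMap.coe_sum, Finset.sum_apply, LinearMap.smul_apply, smul_eq_mul]
  have := congrArg l (hdb x)
  rw [map_sum] at this
  simp only [map_smul, smul_eq_mul] at this
  rw [← this]
  exact Finset.sum_congr rfl fun i _ => mul_comm _ _

include hdb in
lemma gen_expand (b : B) (l : A₀ →ₗ[A] A) :
    gen A A₀ B n e lam b l = ∑ i, l (e i) • gen A A₀ B n e lam b (lam i) := by
  conv_lhs => rw [show gen A A₀ B n e lam b l = genLin n e lam b l from rfl,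
    lam_expand n e lam hdb l]
  rw [map_sum]
  simp [genLin]



section Maps

variable (A A₀ B)

variable (A' : Type) [CommRing A'] [Algebra A A']

/-- contraction of the left tensor factor against a functional -/
noncomputable def contr (l : A₀ →ₗ[A] A) : A₀ ⊗[A] A' →ₗ[A] A' :=
  (TensorProduct.lid A A').toLinearMap ∘ₗ LinearMap.rTensor A' l

lemma contr_tmul (l : A₀ →ₗ[A] A) (x : A₀) (a' : A') :
    contr A A₀ A' l (x ⊗ₜ[A] a') = l x • a' := by
  simp [contr]

lemma contr_add_left (l m : A₀ →ₗ[A] A) (z : A₀ ⊗[A] A') :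
    contr A A₀ A' (l + m) z = contr A A₀ A' l z + contr A A₀ A' m z := by
  induction z using TensorProduct.induction_on with
  | zero => simp
  | tmul x a' => simp [contr_tmul, add_smul]
  | add z w hz hw => simp only [map_add, hz, hw]; abel

lemma contr_smul_left (a : A) (l : A₀ →ₗ[A] A) (z : A₀ ⊗[A] A') :
    contr A A₀ A' (a • l) z = a • contr A A₀ A' l z := by
  induction z using TensorProduct.induction_on with
  | zero => simp
  | tmul x a' => simp [contr_tmul, mul_smul]
  | add z w hz hw => simp only [map_add, hz, hw, smul_add]

include hdb in
lemma contr_mul (l : A₀ →ₗ[A] A) (z w : A₀ ⊗[A] A') :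
    contr A A₀ A' l (z * w) =
      ∑ i, ∑ j, l (e i * e j) • (contr A A₀ A' (lam i) z * contr A A₀ A' (lam j) w) := by
  induction z using TensorProduct.induction_on with
  | zero => simp
  | add z₁ z₂ h₁ h₂ =>
    simp only [add_mul, map_add, h₁, h₂, add_mul, smul_add, Finset.sum_add_distrib]
  | tmul x a' =>
    induction w using TensorProduct.induction_on with
    | zero => simp
    | add w₁ w₂ h₁ h₂ =>
      simp only [mul_add, map_add, h₁, h₂, mul_add, smul_add, Finset.sum_add_distrib]
    | tmul y b' =>
      rw [Algebra.TensorProduct.tmul_mul_tmul, contr_tmul]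
      have key : l (x * y) = ∑ i, ∑ j, l (e i * e j) * (lam i x * lam j y) := by
        conv_lhs => rw [← hdb x, ← hdb y, Finset.sum_mul_sum]
        rw [map_sum]
        refine Finset.sum_congr rfl fun i _ => ?_
        rw [map_sum]
        refine Finset.sum_congr rfl fun j _ => ?_
        rw [smul_mul_smul_comm]
        rw [map_smul, smul_eq_mul]
        ring
      rw [key, Finset.sum_smul]
      refine Finset.sum_congr rfl fun i _ => ?_
      rw [Finset.sum_smul]
      refine Finset.sum_congr rfl fun j _ => ?_
      rw [contr_tmul, contr_tmul, mul_smul, smul_mul_smul_comm]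

include hdb in
lemma sum_tmul_contr (z : A₀ ⊗[A] A') :
    ∑ i, e i ⊗ₜ[A] contr A A₀ A' (lam i) z = z := by
  induction z using TensorProduct.induction_on with
  | zero => simp
  | add z w hz hw => simp only [map_add, tmul_add, Finset.sum_add_distrib, hz, hw]
  | tmul x a' =>
    calc ∑ i, e i ⊗ₜ[A] contr A A₀ A' (lam i) (x ⊗ₜ[A] a')
        = ∑ i, (lam i x • e i) ⊗ₜ[A] a' := by
          refine Finset.sum_congr rfl fun i _ => ?_
          rw [contr_tmul, tmul_smul, smul_tmul']
      _ = x ⊗ₜ[A] a' := by rw [← TensorProduct.sum_tmul, hdb]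

/-- the underlying function of the forward map -/
noncomputable def fwdFun (ψ : Q A A₀ B n e lam →ₐ[A] A') : B → A₀ ⊗[A] A' :=
  fun b => ∑ i, e i ⊗ₜ[A] ψ (gen A A₀ B n e lam b (lam i))

include hdb in
lemma fwdFun_algebraMap (ψ : Q A A₀ B n e lam →ₐ[A] A') (a₀ : A₀) :
    fwdFun A A₀ B n e lam A' ψ (algebraMap A₀ B a₀) = a₀ ⊗ₜ[A] 1 := by
  unfold fwdFun
  calc ∑ i, e i ⊗ₜ[A] ψ (gen A A₀ B n e lam (algebraMap A₀ B a₀) (lam i))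
      = ∑ i, (lam i a₀ • e i) ⊗ₜ[A] (1 : A') := by
        refine Finset.sum_congr rfl fun i _ => ?_
        rw [gen_algebraMap, AlgHom.commutes, Algebra.algebraMap_eq_smul_one,
          tmul_smul, smul_tmul']
    _ = a₀ ⊗ₜ[A] 1 := by rw [← TensorProduct.sum_tmul, hdb]

lemma fwdFun_add (ψ : Q A A₀ B n e lam →ₐ[A] A') (b₁ b₂ : B) :
    fwdFun A A₀ B n e lam A' ψ (b₁ + b₂) = fwdFun A A₀ B n e lam A' ψ b₁ + fwdFun A A₀ B n e lam A' ψ b₂ := by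
  unfold fwdFun
  rw [← Finset.sum_add_distrib]
  refine Finset.sum_congr rfl fun i _ => ?_
  rw [gen_add_left, map_add, tmul_add]

include hdb in
lemma fwdFun_mul (ψ : Q A A₀ B n e lam →ₐ[A] A') (b₁ b₂ : B) :
    fwdFun A A₀ B n e lam A' ψ (b₁ * b₂) = fwdFun A A₀ B n e lam A' ψ b₁ * fwdFun A A₀ B n e lam A' ψ b₂ := by
  unfold fwdFun
  rw [Finset.sum_mul_sum]
  simp only [Algebra.TensorProduct.tmul_mul_tmul]
  have rhs : ∀ i j, (e i * e j) ⊗ₜ[A]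
      (ψ (gen A A₀ B n e lam b₁ (lam i)) * ψ (gen A A₀ B n e lam b₂ (lam j))) =
      ∑ k, (lam k (e i * e j) • e k) ⊗ₜ[A]
        (ψ (gen A A₀ B n e lam b₁ (lam i)) * ψ (gen A A₀ B n e lam b₂ (lam j))) := by
    intro i j
    rw [← TensorProduct.sum_tmul, hdb]
  calc ∑ k, e k ⊗ₜ[A] ψ (gen A A₀ B n e lam (b₁ * b₂) (lam k))
      = ∑ k, ∑ i, ∑ j, (lam k (e i * e j) • e k) ⊗ₜ[A]
          (ψ (gen A A₀ B n e lam b₁ (lam i)) * ψ (gen A A₀ B n e lam b₂ (lam j))) := by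
        refine Finset.sum_congr rfl fun k _ => ?_
        rw [gen_mul, map_sum, tmul_sum]
        refine Finset.sum_congr rfl fun i _ => ?_
        rw [map_sum, tmul_sum]
        refine Finset.sum_congr rfl fun j _ => ?_
        rw [map_smul, map_mul ψ, tmul_smul, smul_tmul']
    _ = ∑ i, ∑ j, ∑ k, (lam k (e i * e j) • e k) ⊗ₜ[A]
          (ψ (gen A A₀ B n e lam b₁ (lam i)) * ψ (gen A A₀ B n e lam b₂ (lam j))) := by
        rw [Finset.sum_comm]
        refine Finset.sum_congr rfl fun i _ => ?_
        rw [Finset.sum_comm]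
    _ = ∑ i, ∑ j, (e i * e j) ⊗ₜ[A]
          (ψ (gen A A₀ B n e lam b₁ (lam i)) * ψ (gen A A₀ B n e lam b₂ (lam j))) := by
        refine Finset.sum_congr rfl fun i _ => Finset.sum_congr rfl fun j _ => ?_
        rw [← rhs]

include hdb in
/-- the forward map: an algebra map out of `Q` gives a `B`-point of `A₀ ⊗ A'` -/
noncomputable def fwd (ψ : Q A A₀ B n e lam →ₐ[A] A') : B →ₐ[A₀] A₀ ⊗[A] A' where
  toFun := fwdFun A A₀ B n e lam A' ψ
  map_one' := by
    show fwdFun A A₀ B n e lam A' ψ 1 = 1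
    rw [show (1 : B) = algebraMap A₀ B 1 from (map_one _).symm,
      fwdFun_algebraMap A A₀ B n e lam hdb A' ψ]
    rfl
  map_mul' := fwdFun_mul A A₀ B n e lam hdb A' ψ
  map_zero' := by
    show fwdFun A A₀ B n e lam A' ψ 0 = 0
    rw [show (0 : B) = algebraMap A₀ B 0 from (map_zero _).symm,
      fwdFun_algebraMap A A₀ B n e lam hdb A' ψ, TensorProduct.zero_tmul]
  map_add' := fwdFun_add A A₀ B n e lam A' ψ
  commutes' := fun a₀ => by
    show fwdFun A A₀ B n e lam A' ψ (algebraMap A₀ B a₀) = algebraMap A₀ (A₀ ⊗[A] A') a₀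
    rw [fwdFun_algebraMap A A₀ B n e lam hdb A' ψ, Algebra.TensorProduct.algebraMap_apply,
      Algebra.algebraMap_self_apply]

/-- evaluation of polynomials against a `B`-point -/
noncomputable def evalHom (φ : B →ₐ[A₀] A₀ ⊗[A] A') : R A A₀ B →ₐ[A] A' :=
  aeval fun p => contr A A₀ A' p.2 (φ p.1)

lemma evalHom_X (φ : B →ₐ[A₀] A₀ ⊗[A] A') (b : B) (l : A₀ →ₗ[A] A) :
    evalHom A A₀ B A' φ (X (b, l)) = contr A A₀ A' l (φ b) := by
  simp [evalHom]

include hdb in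
lemma evalHom_vanish (φ : B →ₐ[A₀] A₀ ⊗[A] A') :
    ∀ r ∈ J A A₀ B n e lam, evalHom A A₀ B A' φ r = 0 := by
  intro r hr
  rw [← RingHom.mem_ker]
  revert r hr
  rw [← SetLike.le_def, J]
  rw [Ideal.span_le]
  rintro r (⟨b, l, m, rfl⟩ | ⟨b, a, l, rfl⟩ | ⟨b₁, b₂, l, rfl⟩ | ⟨b₁, b₂, l, rfl⟩ | ⟨a₀, l, rfl⟩) <;>
    rw [SetLike.mem_coe, RingHom.mem_ker]
  · rw [map_sub, map_sub, evalHom_X, evalHom_X, evalHom_X, contr_add_left]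
    abel
  · rw [map_sub, map_mul, evalHom_X, evalHom_X, contr_smul_left,
      ← MvPolynomial.algebraMap_eq, AlgHom.commutes, ← Algebra.smul_def, sub_self]
  · rw [map_sub, map_sub, evalHom_X, evalHom_X, evalHom_X, map_add, map_add]
    abel
  · rw [map_sub, evalHom_X, map_mul, contr_mul A A₀ n e lam hdb, map_sum]
    rw [sub_eq_zero]
    refine Finset.sum_congr rfl fun i _ => ?_
    rw [map_sum]
    refine Finset.sum_congr rfl fun j _ => ?_
    rw [map_mul (evalHom A A₀ B A' φ), map_mul (evalHom A A₀ B A' φ), evalHom_X, evalHom_X,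
      ← MvPolynomial.algebraMap_eq, AlgHom.commutes, ← Algebra.smul_def]
  · rw [map_sub, evalHom_X, ← MvPolynomial.algebraMap_eq, AlgHom.commutes, AlgHom.commutes,
      Algebra.TensorProduct.algebraMap_apply, Algebra.algebraMap_self_apply, contr_tmul,
      ← Algebra.algebraMap_eq_smul_one, sub_self]

include hdb in
/-- the backward map -/
noncomputable def bwd (φ : B →ₐ[A₀] A₀ ⊗[A] A') : Q A A₀ B n e lam →ₐ[A] A' :=
  Ideal.Quotient.liftₐ (J A A₀ B n e lam) (evalHom A A₀ B A' φ)
    (evalHom_vanish A A₀ B n e lam hdb A' φ)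

lemma bwd_gen (φ : B →ₐ[A₀] A₀ ⊗[A] A') (b : B) (l : A₀ →ₗ[A] A) :
    bwd A A₀ B n e lam hdb A' φ (gen A A₀ B n e lam b l) = contr A A₀ A' l (φ b) := by
  rw [gen, ← evalHom_X A A₀ B A' φ b l]
  simp [bwd, mkQ, Ideal.Quotient.liftₐ_apply, Ideal.Quotient.mkₐ_eq_mk]
  exact Ideal.Quotient.lift_mk _ _ _

include hdb in
lemma bwd_fwd (ψ : Q A A₀ B n e lam →ₐ[A] A') :
    bwd A A₀ B n e lam hdb A' (fwd A A₀ B n e lam hdb A' ψ) = ψ := by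
  refine Ideal.Quotient.algHom_ext A (MvPolynomial.algHom_ext fun p => ?_)
  obtain ⟨b, l⟩ := p
  show bwd A A₀ B n e lam hdb A' (fwd A A₀ B n e lam hdb A' ψ) (gen A A₀ B n e lam b l)
      = ψ (gen A A₀ B n e lam b l)
  rw [bwd_gen]
  have : (fwd A A₀ B n e lam hdb A' ψ) b = fwdFun A A₀ B n e lam A' ψ b := rfl
  rw [this]
  unfold fwdFun
  rw [map_sum]
  calc ∑ i, contr A A₀ A' l (e i ⊗ₜ[A] ψ (gen A A₀ B n e lam b (lam i)))
      = ∑ i, ψ (l (e i) • gen A A₀ B n e lam b (lam i)) := by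
        refine Finset.sum_congr rfl fun i _ => ?_
        rw [contr_tmul, map_smul]
    _ = ψ (gen A A₀ B n e lam b l) := by rw [← map_sum, ← gen_expand n e lam hdb]

include hdb in
lemma fwd_bwd (φ : B →ₐ[A₀] A₀ ⊗[A] A') :
    fwd A A₀ B n e lam hdb A' (bwd A A₀ B n e lam hdb A' φ) = φ := by
  refine AlgHom.ext fun b => ?_
  show fwdFun A A₀ B n e lam A' (bwd A A₀ B n e lam hdb A' φ) b = φ b
  unfold fwdFun
  calc ∑ i, e i ⊗ₜ[A] (bwd A A₀ B n e lam hdb A' φ) (gen A A₀ B n e lam b (lam i))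
      = ∑ i, e i ⊗ₜ[A] contr A A₀ A' (lam i) (φ b) := by
        refine Finset.sum_congr rfl fun i _ => ?_
        rw [bwd_gen]
    _ = φ b := sum_tmul_contr A A₀ n e lam hdb A' (φ b)

end Maps

end WeilAux


/-- **Affine Weil restriction is representable.**  Let `A` be a commutative ring, `A₀` a
commutative `A`-algebra which is finite locally free of rank `d` as an `A`-module, and `B` a
commutative `A₀`-algebra.  Then there is a commutative `A`-algebra `Q` with bijections
`Hom_{A-alg}(Q, A') ≃ Hom_{A₀-alg}(B, A₀ ⊗[A] A')`, natural in the commutative `A`-algebra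
`A'`; i.e. the Weil restriction of `Spec B` along the finite flat morphism
`Spec A₀ → Spec A` is representable by the affine scheme `Spec Q`. -/
theorem exists_weilRestrictionRepresentation
    (A : Type) [CommRing A] (A₀ : Type) [CommRing A₀] [Algebra A A₀]
    (B : Type) [CommRing B] [Algebra A₀ B] (d : ℕ)
    (hA₀ : IsFiniteLocallyFreeOfRank A A₀ d) :
    Nonempty (WeilRestrictionRepresentation A A₀ B) := by
  obtain ⟨hfin, hproj, -⟩ := hA₀
  haveI := hfin
  haveI := hproj
  -- choose a finite "dual basis" for the finite projective module `A₀`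
  have key : ∃ (n : ℕ) (e : Fin n → A₀) (lam : Fin n → A₀ →ₗ[A] A),
      ∀ x : A₀, ∑ i, lam i x • e i = x := by
    obtain ⟨n, f, hf⟩ := Module.Finite.exists_fin' A A₀
    obtain ⟨s, hs⟩ := Module.projective_lifting_property f LinearMap.id hf
    refine ⟨n, fun i => f (Pi.single i 1), fun i => (LinearMap.proj i).comp s, fun x => ?_⟩
    have h1 : ∀ i : Fin n,
        ((LinearMap.proj i).comp s) x • f (Pi.single i 1) = f (Pi.single i (s x i)) := by
      intro i
      rw [← map_smul]
      congr 1
      ext j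
      rcases eq_or_ne j i with rfl | hj
      · simp
      · simp [Pi.single_apply, hj]
    rw [Finset.sum_congr rfl fun i _ => h1 i, ← map_sum, Finset.univ_sum_single]
    have := LinearMap.congr_fun hs x
    simpa using this
  obtain ⟨n, e, lam, hdb⟩ := key
  refine ⟨{ Q := WeilAux.Q A A₀ B n e lam,
            equiv := @fun A' _ _ =>
              { toFun := WeilAux.fwd A A₀ B n e lam hdb A'
                invFun := WeilAux.bwd A A₀ B n e lam hdb A'
                left_inv := WeilAux.bwd_fwd A A₀ B n e lam hdb A'
                right_inv := WeilAux.fwd_bwd A A₀ B n e lam hdb A' }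
            naturality := ?_ }⟩
  intro A' A'' _ _ _ _ f h
  refine AlgHom.ext fun b => ?_
  show WeilAux.fwdFun A A₀ B n e lam A'' (f.comp h) b
      = weilBaseChange A A₀ f (WeilAux.fwdFun A A₀ B n e lam A' h b)
  unfold WeilAux.fwdFun
  rw [map_sum]
  refine Finset.sum_congr rfl fun i _ => ?_
  rw [weilBaseChange, Algebra.TensorProduct.map_tmul]
  rfl
end

section
/- Let A be a commutative ring, A₀ a commutative A-algebra that is finite locally free of rank d as an A-module, and B a commutative A₀-algebra. Suppose Q is a commutative A-algebra corepresenting the affine Weil restriction functor of B, i.e., Q is equipped with bijections Hom_{A-alg}(Q, A') ≅ Hom_{A₀-alg}(B, A₀ ⊗_A A'), natural in the commutative A-algebra A'. If B is formally smooth over A₀, then Q is formally smooth over A. -/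
open TensorProduct

/-- If `Q` corepresents the affine Weil restriction functor of `B` along the finite locally free (of rank `d`) algebra `A → A₀`, and `B` is formally smooth over `A₀`, then `Q` is formally smooth over `A`. -/
theorem weilRestriction_formallySmooth
    (A : Type) [CommRing A] (A₀ : Type) [CommRing A₀] [Algebra A A₀]
    (B : Type) [CommRing B] [Algebra A₀ B] (d : ℕ)
    (hA₀ : IsFiniteLocallyFreeOfRank A A₀ d)
    (Q : Type) [CommRing Q] [Algebra A Q]
    (e : ∀ (A' : Type) [CommRing A'] [Algebra A A'],
      (Q →ₐ[A] A') ≃ (B →ₐ[A₀] A₀ ⊗[A] A'))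
    (he : ∀ (A' A'' : Type) [CommRing A'] [Algebra A A'] [CommRing A''] [Algebra A A'']
      (f : A' →ₐ[A] A'') (h : Q →ₐ[A] A'),
      e A'' (f.comp h) = (weilBaseChange A A₀ f).comp (e A' h))
    (hB : Algebra.FormallySmooth A₀ B) : Algebra.FormallySmooth A Q := by
  refine Algebra.FormallySmooth.of_comp_surjective ?_
  intro C _ _ I hI g
  haveI := hB
  set π : A₀ ⊗[A] C →ₐ[A₀] A₀ ⊗[A] (C ⧸ I) :=
    weilBaseChange A A₀ (Ideal.Quotient.mkₐ A I) with hπdef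
  have hπ : Function.Surjective π := by
    intro x
    induction x using TensorProduct.induction_on with
    | zero => exact ⟨0, map_zero _⟩
    | tmul a c =>
      obtain ⟨c, rfl⟩ := Ideal.Quotient.mk_surjective c
      exact ⟨a ⊗ₜ c, rfl⟩
    | add x y hx hy =>
      obtain ⟨x, rfl⟩ := hx
      obtain ⟨y, rfl⟩ := hy
      exact ⟨x + y, map_add _ _ _⟩
  -- the kernel of π is the ideal generated by I, hence square-zero
  have hker : RingHom.ker π =
      I.map (Algebra.TensorProduct.includeRight : C →ₐ[A] A₀ ⊗[A] C) := by
    have h1 := Algebra.TensorProduct.lTensor_ker (R := A) (A := A₀)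
      (Ideal.Quotient.mkₐ A I) Ideal.Quotient.mk_surjective
    have h2 : ∀ x : A₀ ⊗[A] C, π x =
        Algebra.TensorProduct.map (AlgHom.id A A₀) (Ideal.Quotient.mkₐ A I) x := by
      intro x
      induction x using TensorProduct.induction_on with
      | zero => simp
      | tmul a c => rfl
      | add x y hx hy => simp_all
    have h0 : RingHom.ker (Ideal.Quotient.mkₐ A I) = I := by
      ext x
      simp [RingHom.mem_ker, Ideal.Quotient.eq_zero_iff_mem]
    rw [h0] at h1
    rw [← h1]
    ext x
    simp only [RingHom.mem_ker]
    constructor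
    · intro hx
      rw [← h2 x]
      exact hx
    · intro hx
      rw [h2 x]
      exact hx
  have hK2 : RingHom.ker π ^ 2 = ⊥ := by
    rw [hker, ← Ideal.map_pow, hI, Ideal.map_bot]
  -- transport the problem via the isomorphism (A₀ ⊗ C) ⧸ ker π ≃ A₀ ⊗ (C ⧸ I)
  let iso : ((A₀ ⊗[A] C) ⧸ RingHom.ker π) ≃ₐ[A₀] A₀ ⊗[A] (C ⧸ I) :=
    Ideal.quotientKerAlgEquivOfSurjective hπ
  set ψ : B →ₐ[A₀] A₀ ⊗[A] (C ⧸ I) := e (C ⧸ I) g with hψdef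
  obtain ⟨ψ', hψ'⟩ := Algebra.FormallySmooth.comp_surjective (R := A₀) (A := B)
    (RingHom.ker π) hK2 (iso.symm.toAlgHom.comp ψ)
  have hcomp : π.comp ψ' = ψ := by
    apply AlgHom.ext
    intro b
    have h3 : Ideal.Quotient.mkₐ A₀ (RingHom.ker π) (ψ' b) = iso.symm (ψ b) :=
      AlgHom.congr_fun hψ' b
    have h4 : iso (Ideal.Quotient.mkₐ A₀ (RingHom.ker π) (ψ' b)) = iso (iso.symm (ψ b)) :=
      congrArg iso h3
    rw [AlgEquiv.apply_symm_apply] at h4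
    exact h4
  refine ⟨(e C).symm ψ', (e (C ⧸ I)).injective ?_⟩
  rw [he C (C ⧸ I) (Ideal.Quotient.mkₐ A I) ((e C).symm ψ'), (e C).apply_symm_apply]
  exact hcomp.trans hψdef
end
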